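/- arXiv:0803.4439 — 3 statements merged into one kernel-verified Lean document; each statement's English description precedes it below -/
import Mathlib

section
/- Write k = 2^n(2m+1) with n, m ≥ 0. Then: a_1 = 1^∞ (the constant-1 sequence); if m = 0 and n ≥ 1 then a_k = μ^n(0^∞), where 0^∞ is the constant-0 sequence; and if m ≥ 1 then a_k = μ^n(w^∞), where w^∞ is the (2m+1)-periodic sequence whose period block is a 1 followed by m copies of the block 10. -/
/-- A 0-1 sequence: all values are at most 1. Index `k` corresponds to `ε_{k+1}` in the paper. -/
def isSeq (ε : ℕ → ℕ) : Prop := ∀ k, ε k ≤ 1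

/-- The shift map σ. -/
def shift (ε : ℕ → ℕ) : ℕ → ℕ := fun n => ε (n + 1)

/-- The mirror image ε̄, (ε̄)_n = 1 - ε_n. -/
def mirror (ε : ℕ → ℕ) : ℕ → ℕ := fun n => 1 - ε n

/-- Strict lexicographic order on sequences. -/
def lexLt (a b : ℕ → ℕ) : Prop := ∃ k, (∀ j, j < k → a j = b j) ∧ a k < b k

/-- Non-strict lexicographic order. -/
def lexLe (a b : ℕ → ℕ) : Prop := lexLt a b ∨ a = b

/-- ε is periodic with smallest period n ≥ 1. -/
def periodicSmallest (n : ℕ) (ε : ℕ → ℕ) : Prop :=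
  1 ≤ n ∧ shift^[n] ε = ε ∧ ∀ j, 1 ≤ j → j < n → shift^[j] ε ≠ ε

/-- The set Γ = {ε ∈ Σ : ε̄ ⪯ σ^k(ε) ⪯ ε for all k ≥ 0}. -/
def Gamma (ε : ℕ → ℕ) : Prop :=
  isSeq ε ∧ ∀ k, lexLe (mirror ε) (shift^[k] ε) ∧ lexLe (shift^[k] ε) ε

/-- The doubling map μ: (μ(ε))_1 = 1, (μ(ε))_{2n} = ε_n, (μ(ε))_{2n+1} = 1 - ε_n
(written with 0-based indexing). -/
def mu (ε : ℕ → ℕ) : ℕ → ℕ :=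
  fun i => if i = 0 then 1 else if i % 2 = 1 then ε ((i - 1) / 2) else 1 - ε (i / 2 - 1)

/-- `a` is the lexicographically least element of Γ among those periodic with
smallest period k. -/
def minGamma (k : ℕ) (a : ℕ → ℕ) : Prop :=
  (Gamma a ∧ periodicSmallest k a) ∧ ∀ b, Gamma b → periodicSmallest k b → lexLe a b

/-- The (2m+1)-periodic sequence (1(10)^m)^∞: a 1 followed by m copies of 10,
repeated. -/
def oneTenBlock (m : ℕ) : ℕ → ℕ := fun i =>
  if i % (2 * m + 1) = 0 then 1 else (i % (2 * m + 1)) % 2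

namespace Stmt15

/-! ### Basic lemmas about lexicographic order -/

theorem lexLt_irrefl (x : ℕ → ℕ) : ¬ lexLt x x := by
  rintro ⟨k, -, hk⟩; omega

theorem lexLt_asymm {x y : ℕ → ℕ} (h : lexLt x y) (h' : lexLt y x) : False := by
  obtain ⟨k, hk, hk2⟩ := h
  obtain ⟨l, hl, hl2⟩ := h'
  rcases lt_trichotomy k l with hc | hc | hc
  · have := hl k hc; omega
  · subst hc; omega
  · have := hk l hc; omega

theorem lexLe_antisymm {x y : ℕ → ℕ} (h : lexLe x y) (h' : lexLe y x) : x = y := by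
  rcases h with h | h
  · rcases h' with h' | h'
    · exact absurd h' (fun hh => lexLt_asymm h hh)
    · exact h'.symm
  · exact h

theorem lexLe_refl (x : ℕ → ℕ) : lexLe x x := Or.inr rfl

/-- Totality of the lexicographic order. -/
theorem lex_total (x y : ℕ → ℕ) : lexLe x y ∨ lexLt y x := by
  by_cases hxy : x = y
  · exact Or.inl (Or.inr hxy)
  · have hne : ∃ k, x k ≠ y k := by
      by_contra hc
      push_neg at hc
      exact hxy (funext hc)
    classical
    set k := Nat.find hne with hk
    have hspec : x k ≠ y k := Nat.find_spec hne
    have hmin : ∀ j, j < k → x j = y j := by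
      intro j hj
      exact not_not.mp (Nat.find_min hne hj)
    rcases lt_or_gt_of_ne hspec with hlt | hgt
    · exact Or.inl (Or.inl ⟨k, hmin, hlt⟩)
    · exact Or.inr ⟨k, fun j hj => (hmin j hj).symm, hgt⟩

theorem lexLt_of_lexLt_of_lexLe {x y z : ℕ → ℕ} (h : lexLt x y) (h' : lexLe y z) :
    lexLt x z := by
  rcases h' with h' | h'
  · obtain ⟨k, hk, hk2⟩ := h
    obtain ⟨l, hl, hl2⟩ := h'
    rcases lt_trichotomy k l with hc | hc | hc
    · exact ⟨k, fun j hj => (hk j hj).trans (hl j (by omega)), by have := hl k hc; omega⟩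
    · subst hc; exact ⟨k, fun j hj => (hk j hj).trans (hl j hj), by omega⟩
    · exact ⟨l, fun j hj => (hk j (by omega)).trans (hl j hj), by have := hk l hc; omega⟩
  · subst h'; exact h

theorem lexLe_trans {x y z : ℕ → ℕ} (h : lexLe x y) (h' : lexLe y z) : lexLe x z := by
  rcases h with h | h
  · exact Or.inl (lexLt_of_lexLt_of_lexLe h h')
  · subst h; exact h'

/-! ### Shift and periodicity -/

theorem shift_iter (x : ℕ → ℕ) (t j : ℕ) : (shift^[t] x) j = x (j + t) := by
  induction t generalizing x j with
  | zero => rfl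
  | succ n ih =>
    rw [Function.iterate_succ_apply, ih]
    simp only [shift]
    norm_num [Nat.add_assoc]

theorem shift_eq_iff {x y : ℕ → ℕ} (t : ℕ) :
    shift^[t] x = y ↔ ∀ j, x (j + t) = y j := by
  constructor
  · intro h j; rw [← h, shift_iter]
  · intro h; funext j; rw [shift_iter]; exact h j

/-- If x is periodic with period q then values repeat. -/
theorem periodic_add {x : ℕ → ℕ} {q : ℕ} (hq : shift^[q] x = x) (j : ℕ) :
    x (j + q) = x j := by
  conv_rhs => rw [← hq]
  rw [shift_iter]

theorem periodic_add_mul {x : ℕ → ℕ} {q : ℕ} (hq : shift^[q] x = x) (j t : ℕ) :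
    x (j + t * q) = x j := by
  induction t with
  | zero => simp
  | succ s ih =>
    have : j + (s + 1) * q = (j + s * q) + q := by ring
    rw [this, periodic_add hq, ih]

theorem periodic_mod {x : ℕ → ℕ} {q : ℕ} (hq : shift^[q] x = x) (j : ℕ) :
    x j = x (j % q) := by
  conv_lhs => rw [← Nat.mod_add_div' j q]
  rw [periodic_add_mul hq]

/-- A multiple of the smallest period argument : if shift^s x = x then smallest period divides s. -/
theorem smallest_period_dvd {x : ℕ → ℕ} {q s : ℕ} (hps : periodicSmallest q x)
    (hs : shift^[s] x = x) : q ∣ s := by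
  obtain ⟨hq1, hq, hmin⟩ := hps
  -- first: shift^[s % q] x = x
  have key : shift^[s % q] x = x := by
    have h1 : shift^[q * (s / q)] x = x := by
      rw [Function.iterate_mul]
      exact Function.iterate_fixed hq _
    calc shift^[s % q] x = shift^[s % q] (shift^[q * (s / q)] x) := by rw [h1]
      _ = shift^[s % q + q * (s / q)] x := (Function.iterate_add_apply _ _ _ _).symm
      _ = shift^[s] x := by rw [Nat.mod_add_div]
      _ = x := hs
  by_cases h0 : s % q = 0
  · exact Nat.dvd_of_mod_eq_zero h0
  · exact absurd key (hmin _ (by omega) (Nat.mod_lt _ (by omega)))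

end Stmt15
namespace Stmt15

/-! ### Positional lemmas for mu and friends -/

theorem mu_zero (x : ℕ → ℕ) : mu x 0 = 1 := by simp [mu]

theorem mu_odd (x : ℕ → ℕ) (l : ℕ) : mu x (2*l+1) = x l := by
  simp only [mu]
  rw [if_neg (by omega), if_pos (by omega : (2*l+1) % 2 = 1)]
  have e : (2*l+1-1)/2 = l := by omega
  rw [e]

theorem mu_even (x : ℕ → ℕ) (l : ℕ) : mu x (2*l+2) = 1 - x l := by
  simp only [mu]
  rw [if_neg (by omega), if_neg (by omega : ¬ (2*l+2) % 2 = 1)]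
  have e : (2*l+2)/2 - 1 = l := by omega
  rw [e]

/-- The "0-headed mu": used for mirror images and even shifts of mu-sequences. -/
def Fm (x : ℕ → ℕ) : ℕ → ℕ :=
  fun i => if i = 0 then 0 else if i % 2 = 1 then x ((i - 1) / 2) else 1 - x (i / 2 - 1)

theorem Fm_zero (x : ℕ → ℕ) : Fm x 0 = 0 := by simp [Fm]

theorem Fm_odd (x : ℕ → ℕ) (l : ℕ) : Fm x (2*l+1) = x l := by
  simp only [Fm]
  rw [if_neg (by omega), if_pos (by omega : (2*l+1) % 2 = 1)]
  have e : (2*l+1-1)/2 = l := by omega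
  rw [e]

theorem Fm_even (x : ℕ → ℕ) (l : ℕ) : Fm x (2*l+2) = 1 - x l := by
  simp only [Fm]
  rw [if_neg (by omega), if_neg (by omega : ¬ (2*l+2) % 2 = 1)]
  have e : (2*l+2)/2 - 1 = l := by omega
  rw [e]

/-- The interleave map y ↦ y₀ (1-y₀) y₁ (1-y₁) ⋯ : odd shifts of mu-sequences. -/
def Gm (x : ℕ → ℕ) : ℕ → ℕ :=
  fun i => if i % 2 = 0 then x (i / 2) else 1 - x ((i - 1) / 2)

theorem Gm_even (x : ℕ → ℕ) (l : ℕ) : Gm x (2*l) = x l := by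
  simp only [Gm]
  rw [if_pos (by omega : (2*l) % 2 = 0)]
  have e : (2*l)/2 = l := by omega
  rw [e]

theorem Gm_odd (x : ℕ → ℕ) (l : ℕ) : Gm x (2*l+1) = 1 - x l := by
  simp only [Gm]
  rw [if_neg (by omega : ¬ (2*l+1) % 2 = 0)]
  have e : (2*l+1-1)/2 = l := by omega
  rw [e]

/-! ### Monotonicity of mu and Fm -/

theorem mu_mono {x y : ℕ → ℕ} (h : lexLe x y) : lexLe (mu x) (mu y) := by
  rcases h with ⟨l, hl, hl2⟩ | h
  · left
    refine ⟨2*l+1, ?_, ?_⟩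
    · intro j hj
      rcases Nat.eq_zero_or_pos j with h0 | hpos
      · subst h0; rw [mu_zero, mu_zero]
      · rcases Nat.even_or_odd j with he | ho
        · obtain ⟨v, rfl⟩ : ∃ v, j = 2*v+2 := by
            obtain ⟨u, hu⟩ := he; exact ⟨u - 1, by omega⟩
          rw [mu_even, mu_even, hl v (by omega)]
        · obtain ⟨v, rfl⟩ := ho
          rw [mu_odd, mu_odd, hl v (by omega)]
    · rw [mu_odd, mu_odd]; exact hl2
  · right; rw [h]

theorem mu_inj {x y : ℕ → ℕ} (h : mu x = mu y) : x = y := by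
  funext l
  have := congrFun h (2*l+1)
  rwa [mu_odd, mu_odd] at this

theorem mu_reflect {x y : ℕ → ℕ} (h : lexLe (mu x) (mu y)) : lexLe x y := by
  rcases lex_total x y with h' | h'
  · exact h'
  · have h2 := lexLe_antisymm h (mu_mono (Or.inl h'))
    rw [mu_inj h2] at h'
    exact absurd h' (lexLt_irrefl y)

theorem Fm_mono {x y : ℕ → ℕ} (h : lexLe x y) : lexLe (Fm x) (Fm y) := by
  rcases h with ⟨l, hl, hl2⟩ | h
  · left
    refine ⟨2*l+1, ?_, ?_⟩
    · intro j hj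
      rcases Nat.eq_zero_or_pos j with h0 | hpos
      · subst h0; rw [Fm_zero, Fm_zero]
      · rcases Nat.even_or_odd j with he | ho
        · obtain ⟨v, rfl⟩ : ∃ v, j = 2*v+2 := by
            obtain ⟨u, hu⟩ := he; exact ⟨u - 1, by omega⟩
          rw [Fm_even, Fm_even, hl v (by omega)]
        · obtain ⟨v, rfl⟩ := ho
          rw [Fm_odd, Fm_odd, hl v (by omega)]
    · rw [Fm_odd, Fm_odd]; exact hl2
  · right; rw [h]

theorem Fm_inj {x y : ℕ → ℕ} (h : Fm x = Fm y) : x = y := by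
  funext l
  have := congrFun h (2*l+1)
  rwa [Fm_odd, Fm_odd] at this

theorem Fm_reflect {x y : ℕ → ℕ} (h : lexLe (Fm x) (Fm y)) : lexLe x y := by
  rcases lex_total x y with h' | h'
  · exact h'
  · have h2 := lexLe_antisymm h (Fm_mono (Or.inl h'))
    rw [Fm_inj h2] at h'
    exact absurd h' (lexLt_irrefl y)

/-! ### The fundamental comparison lemma: an interleaved complementary-pair stream
starting at an even position is dominated by one starting at an odd position. -/

theorem GF {X W a c : ℕ → ℕ} (ha : isSeq a) (hc : isSeq c)
    (hX0 : ∀ l, X (2*l) = a l) (hX1 : ∀ l, X (2*l+1) = 1 - a l)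
    (hW0 : W 0 = 1) (hW1 : ∀ l, W (2*l+1) = c l) (hW2 : ∀ l, W (2*l+2) = 1 - c l) :
    lexLe X W := by
  have desc : ∀ l, (∀ j, j ≤ 2*l → X j = W j) → a l = 0 → False := by
    intro l
    induction l with
    | zero =>
      intro hties ha0
      have h1 := hties 0 (by omega)
      have hx := hX0 0
      simp only [Nat.mul_zero] at hx
      rw [hx, hW0, ha0] at h1
      omega
    | succ u ih =>
      intro hties h0
      have e1 : X (2*(u+1)) = W (2*(u+1)) := hties _ le_rfl
      have hx := hX0 (u+1)
      have hw : W (2*(u+1)) = 1 - c u := by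
        have := hW2 u; convert this using 2 <;> omega
      rw [hx, hw, h0] at e1
      have hcu : c u = 1 := by have := hc u; omega
      have e2 : X (2*u+1) = W (2*u+1) := hties _ (by omega)
      rw [hX1, hW1, hcu] at e2
      have hau : a u = 0 := by have := ha u; omega
      exact ih (fun j hj => hties j (by omega)) hau
  rcases lex_total X W with h | h
  · exact h
  · exfalso
    obtain ⟨k, hk, hk2⟩ := h
    -- W k < X k with ties below
    rcases Nat.eq_zero_or_pos k with h0 | hpos
    · subst h0
      have := hX0 0
      simp only [Nat.mul_zero] at this
      rw [this, hW0] at hk2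
      have := ha 0; omega
    · rcases Nat.even_or_odd k with he | ho
      · obtain ⟨l, rfl⟩ : ∃ l, k = 2*l+2 := by
          obtain ⟨u, hu⟩ := he; exact ⟨u - 1, by omega⟩
        have hXk := hX0 (l+1)
        have hXk' : X (2*l+2) = a (l+1) := by convert hXk using 2 <;> omega
        have hWk := hW2 l
        rw [hXk', hWk] at hk2
        have hcl : c l = 1 := by have := hc l; have := ha (l+1); omega
        have e2 : W (2*l+1) = X (2*l+1) := hk _ (by omega)
        rw [hX1, hW1, hcl] at e2
        have hal : a l = 0 := by have := ha l; omega
        exact desc l (fun j hj => (hk j (by omega)).symm) hal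
      · obtain ⟨l, rfl⟩ := ho
        have hXk := hX1 l
        have hWk := hW1 l
        rw [hXk, hWk] at hk2
        have hal : a l = 0 := by have := ha l; have := hc l; omega
        exact desc l (fun j hj => (hk j (by omega)).symm) hal

/-- Peeling the first element off a lexicographic comparison. -/
theorem lexLe_peel {X W : ℕ → ℕ} (h0 : X 0 = W 0) (h : lexLe (shift X) (shift W)) :
    lexLe X W := by
  rcases h with ⟨k, hk, hk2⟩ | h
  · left
    refine ⟨k+1, ?_, ?_⟩
    · intro j hj
      rcases Nat.eq_zero_or_pos j with h0' | hpos
      · subst h0'; exact h0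
      · obtain ⟨u, rfl⟩ : ∃ u, j = u+1 := ⟨j - 1, by omega⟩
        exact hk u (by omega)
    · exact hk2
  · right
    funext j
    rcases Nat.eq_zero_or_pos j with h0' | hpos
    · subst h0'; exact h0
    · obtain ⟨u, rfl⟩ : ∃ u, j = u+1 := ⟨j - 1, by omega⟩
      exact congrFun h u

end Stmt15
namespace Stmt15

/-! ### Structure of mu-sequences under shifts and mirror -/

theorem isSeq_mu {x : ℕ → ℕ} (hx : isSeq x) : isSeq (mu x) := by
  intro i
  rcases Nat.eq_zero_or_pos i with h0 | hpos
  · subst h0; rw [mu_zero]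
  · rcases Nat.even_or_odd i with he | ho
    · obtain ⟨v, rfl⟩ : ∃ v, i = 2*v+2 := by
        obtain ⟨u, hu⟩ := he; exact ⟨u - 1, by omega⟩
      rw [mu_even]; omega
    · obtain ⟨v, rfl⟩ := ho
      rw [mu_odd]; exact hx v

theorem mirror_mu {x : ℕ → ℕ} (hx : isSeq x) : mirror (mu x) = Fm (mirror x) := by
  funext i
  rcases Nat.eq_zero_or_pos i with h0 | hpos
  · subst h0
    show 1 - mu x 0 = Fm (mirror x) 0
    rw [mu_zero, Fm_zero]
  · rcases Nat.even_or_odd i with he | ho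
    · obtain ⟨v, rfl⟩ : ∃ v, i = 2*v+2 := by
        obtain ⟨u, hu⟩ := he; exact ⟨u - 1, by omega⟩
      show 1 - mu x (2*v+2) = Fm (mirror x) (2*v+2)
      rw [mu_even, Fm_even]
      simp only [mirror]
    · obtain ⟨v, rfl⟩ := ho
      show 1 - mu x (2*v+1) = Fm (mirror x) (2*v+1)
      rw [mu_odd, Fm_odd]
      rfl

theorem shift_even_mu_0 {x : ℕ → ℕ} {t : ℕ} (ht : 1 ≤ t) (h : x (t-1) = 0) :
    shift^[2*t] (mu x) = mu (shift^[t] x) := by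
  funext j
  rw [shift_iter]
  rcases Nat.eq_zero_or_pos j with h0 | hpos
  · subst h0
    have e : 0 + 2*t = 2*(t-1)+2 := by omega
    rw [e, mu_even, h, mu_zero]
  · rcases Nat.even_or_odd j with he | ho
    · obtain ⟨v, rfl⟩ : ∃ v, j = 2*v+2 := by
        obtain ⟨u, hu⟩ := he; exact ⟨u - 1, by omega⟩
      have e : 2*v+2 + 2*t = 2*(v+t)+2 := by ring
      rw [e, mu_even, mu_even, shift_iter]
    · obtain ⟨v, rfl⟩ := ho
      have e : 2*v+1 + 2*t = 2*(v+t)+1 := by ring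
      rw [e, mu_odd, mu_odd, shift_iter]

theorem shift_even_mu_1 {x : ℕ → ℕ} {t : ℕ} (ht : 1 ≤ t) (h : x (t-1) = 1) :
    shift^[2*t] (mu x) = Fm (shift^[t] x) := by
  funext j
  rw [shift_iter]
  rcases Nat.eq_zero_or_pos j with h0 | hpos
  · subst h0
    have e : 0 + 2*t = 2*(t-1)+2 := by omega
    rw [e, mu_even, h, Fm_zero]
  · rcases Nat.even_or_odd j with he | ho
    · obtain ⟨v, rfl⟩ : ∃ v, j = 2*v+2 := by
        obtain ⟨u, hu⟩ := he; exact ⟨u - 1, by omega⟩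
      have e : 2*v+2 + 2*t = 2*(v+t)+2 := by ring
      rw [e, mu_even, Fm_even, shift_iter]
    · obtain ⟨v, rfl⟩ := ho
      have e : 2*v+1 + 2*t = 2*(v+t)+1 := by ring
      rw [e, mu_odd, Fm_odd, shift_iter]

theorem shift_odd_mu (x : ℕ → ℕ) (t : ℕ) :
    shift^[2*t+1] (mu x) = Gm (shift^[t] x) := by
  funext j
  rw [shift_iter]
  rcases Nat.even_or_odd j with he | ho
  · obtain ⟨v, rfl⟩ : ∃ v, j = 2*v := by
      obtain ⟨u, hu⟩ := he; exact ⟨u, by omega⟩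
    have e : 2*v + (2*t+1) = 2*(v+t)+1 := by ring
    rw [e, mu_odd, Gm_even, shift_iter]
  · obtain ⟨v, rfl⟩ := ho
    have e : 2*v+1 + (2*t+1) = 2*(v+t)+2 := by ring
    rw [e, mu_even, Gm_odd, shift_iter]

/-- mu x is 2k-periodic iff x is k-periodic with x(k-1) = 0. -/
theorem mu_periodic_of {x : ℕ → ℕ} {k : ℕ} (hk : 1 ≤ k) (hp : shift^[k] x = x)
    (hlast : x (k-1) = 0) : shift^[2*k] (mu x) = mu x := by
  rw [shift_even_mu_0 hk hlast, hp]

theorem periodic_of_mu_periodic {x : ℕ → ℕ} {k : ℕ} (hk : 1 ≤ k)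
    (hp : shift^[2*k] (mu x) = mu x) : shift^[k] x = x ∧ x (k-1) = 0 := by
  constructor
  · funext l
    rw [shift_iter]
    have h1 := congrFun hp (2*l+1)
    rw [shift_iter] at h1
    have e : 2*l+1 + 2*k = 2*(l+k)+1 := by ring
    rw [e, mu_odd, mu_odd] at h1
    exact h1
  · have h1 := congrFun hp 0
    rw [shift_iter] at h1
    have e : 0 + 2*k = 2*(k-1)+2 := by omega
    rw [e, mu_even, mu_zero] at h1
    omega

/-- Transfer of smallest periods through mu. -/
theorem mu_periodicSmallest {x : ℕ → ℕ} {k : ℕ} (hx : isSeq x)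
    (h : periodicSmallest k x) (hlast : x (k-1) = 0) :
    periodicSmallest (2*k) (mu x) := by
  obtain ⟨hk1, hp, hmin⟩ := h
  refine ⟨by omega, mu_periodic_of hk1 hp hlast, ?_⟩
  intro j hj1 hjk hper
  rcases Nat.even_or_odd j with he | ho
  · obtain ⟨d, rfl⟩ : ∃ d, j = 2*d := by obtain ⟨u, hu⟩ := he; exact ⟨u, by omega⟩
    have := (periodic_of_mu_periodic (by omega) hper).1
    exact hmin d (by omega) (by omega) this
  · -- odd period forces x constant, then contradiction
    exfalso
    obtain ⟨c, rfl⟩ := ho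
    set b := mu x with hb
    have hoddsum : ∀ u, b (2*u+1) + b (2*u+2) = 1 := by
      intro u
      rw [hb, mu_odd, mu_even]
      have := hx u; omega
    have hsum : ∀ t, 1 ≤ t → b t + b (t+1) = 1 := by
      intro t ht
      rcases Nat.even_or_odd t with he' | ho'
      · obtain ⟨u, hu⟩ : ∃ u, t + (2*c+1) = 2*u+1 := by
          obtain ⟨v, hv⟩ := he'; exact ⟨v + c, by omega⟩
        have e1 : b (t + (2*c+1)) = b t := periodic_add hper t
        have e2 : b (t + 1 + (2*c+1)) = b (t+1) := periodic_add hper (t+1)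
        have e3 : t + 1 + (2*c+1) = 2*u+2 := by omega
        rw [← e1, ← e2, hu, e3]
        exact hoddsum u
      · obtain ⟨l, rfl⟩ := ho'
        exact hoddsum l
    have hstep : ∀ t, 1 ≤ t → b (t+2) = b t := by
      intro t ht
      have h1 := hsum t ht
      have h2 := hsum (t+1) (by omega)
      have e : t + 1 + 1 = t + 2 := by omega
      rw [e] at h2
      omega
    have hconst : ∀ l, b (2*l+1) = b 1 := by
      intro l
      induction l with
      | zero => rfl
      | succ u ih =>
        have := hstep (2*u+1) (by omega)
        have e : 2*(u+1)+1 = 2*u+1+2 := by ring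
        rw [e, this, ih]
    have hx0 : ∀ l, x l = x 0 := by
      intro l
      have h1 : b (2*l+1) = x l := mu_odd x l
      have h2 : b (2*0+1) = x 0 := mu_odd x 0
      rw [← h1, ← h2, hconst l, hconst 0]
    have hxz : ∀ l, x l = 0 := by
      intro l
      rw [hx0 l, ← hx0 (k-1), hlast]
    have hbj : b (0 + (2*c+1)) = b 0 := periodic_add hper 0
    rw [hb] at hbj
    have e : 0 + (2*c+1) = 2*c+1 := by omega
    rw [e, mu_odd, mu_zero, hxz c] at hbj
    exact absurd hbj (by omega)

end Stmt15
namespace Stmt15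

theorem isSeq_shift_iter {x : ℕ → ℕ} (hx : isSeq x) (t : ℕ) : isSeq (shift^[t] x) := by
  intro j; rw [shift_iter]; exact hx _

theorem isSeq_mirror (x : ℕ → ℕ) : isSeq (mirror x) := by
  intro j; simp [mirror]

theorem Gm_even' (x : ℕ → ℕ) (l : ℕ) : Gm x (2*l+2) = x (l+1) := by
  have := Gm_even x (l+1)
  rwa [show 2*(l+1) = 2*l+2 from by ring] at this

theorem Gm_odd' (x : ℕ → ℕ) (l : ℕ) : Gm x (2*l+3) = 1 - x (l+1) := by
  have := Gm_odd x (l+1)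
  rwa [show 2*(l+1)+1 = 2*l+3 from by ring] at this

/-- Extraction of the smallest period through mu. -/
theorem extract_smallest {δ : ℕ → ℕ} {K : ℕ} (hK : 1 ≤ K)
    (hb : periodicSmallest (2*K) (mu δ)) :
    periodicSmallest K δ ∧ δ (K-1) = 0 := by
  have hp := hb.2.1
  have hpK := periodic_of_mu_periodic hK hp
  classical
  have hex : ∃ d, 1 ≤ d ∧ shift^[d] δ = δ := ⟨K, hK, hpK.1⟩
  obtain ⟨hd01, hd0p⟩ := Nat.find_spec hex
  set d0 := Nat.find hex with hd0
  have hd0small : periodicSmallest d0 δ := by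
    refine ⟨hd01, hd0p, fun j hj1 hj2 hper => ?_⟩
    exact absurd (Nat.find_min' hex ⟨hj1, hper⟩) (by omega)
  have hdvd : d0 ∣ K := smallest_period_dvd hd0small hpK.1
  have hd0K : d0 ≤ K := Nat.find_min' hex ⟨hK, hpK.1⟩
  have hlast0 : δ (d0 - 1) = 0 := by
    obtain ⟨e, he⟩ := hdvd
    cases e with
    | zero => rw [Nat.mul_zero] at he; omega
    | succ e' =>
      have hK' : K = d0 * e' + d0 := by rw [he]; ring
      have hmul : δ (d0 - 1 + e' * d0) = δ (d0 - 1) := periodic_add_mul hd0p _ _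
      have e2 : d0 - 1 + e' * d0 = K - 1 := by
        have hcm : e' * d0 = d0 * e' := Nat.mul_comm _ _
        omega
      rw [e2, hpK.2] at hmul
      exact hmul.symm
  have hper2 : shift^[2*d0] (mu δ) = mu δ := mu_periodic_of hd01 hd0p hlast0
  have hdvd2 : 2*K ∣ 2*d0 := smallest_period_dvd hb hper2
  have : 2*K ≤ 2*d0 := Nat.le_of_dvd (by omega) hdvd2
  have hKd0 : d0 = K := by omega
  rw [hKd0] at hd0small hlast0
  exact ⟨hd0small, hlast0⟩

/-! ### The weak shift-comparison property W -/

/-- The weak property extracted from Γ that passes through the mu-decoding. -/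
def Wp (b : ℕ → ℕ) : Prop :=
  isSeq b ∧ ∀ t, 1 ≤ t →
    (b (t-1) = 0 → lexLe (shift^[t] b) b) ∧ (b (t-1) = 1 → lexLe (mirror b) (shift^[t] b))

theorem gamma_Wp {b : ℕ → ℕ} (h : Gamma b) : Wp b :=
  ⟨h.1, fun t _ => ⟨fun _ => (h.2 t).2, fun _ => (h.2 t).1⟩⟩

theorem Wp_zero_all {b : ℕ → ℕ} (h : Wp b) (h0 : b 0 = 0) : b = fun _ => 0 := by
  funext j
  induction j using Nat.strong_induction_on with
  | _ j ih =>
    rcases Nat.eq_zero_or_pos j with hj0 | hj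
    · subst hj0; exact h0
    · have hprev : b (j-1) = 0 := by
        rcases Nat.eq_zero_or_pos (j-1) with h' | h'
        · rw [h']; exact h0
        · exact ih (j-1) (by omega)
      have hle := (h.2 j hj).1 hprev
      rcases hle with ⟨d, hd, hd2⟩ | heq
      · rcases Nat.eq_zero_or_pos d with h' | h'
        · subst h'
          rw [shift_iter] at hd2
          simp only [Nat.zero_add] at hd2
          rw [h0] at hd2
          omega
        · have := hd 0 h'
          rw [shift_iter] at this
          simp only [Nat.zero_add] at this
          rw [h0] at this
          exact this
      · have := congrFun heq 0
        rw [shift_iter] at this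
        simp only [Nat.zero_add] at this
        rw [h0] at this
        exact this

theorem Wp_head {b : ℕ → ℕ} (h : Wp b) (hne : b ≠ fun _ => 0) : b 0 = 1 := by
  have := h.1 0
  rcases Nat.eq_zero_or_pos (b 0) with h0 | h1
  · exact absurd (Wp_zero_all h h0) hne
  · omega

theorem gamma_head {b : ℕ → ℕ} (h : Gamma b) : b 0 = 1 := by
  have hm := (h.2 0).1
  simp only [Function.iterate_zero_apply] at hm
  have hs := h.1 0
  rcases hm with ⟨d, hd, hd2⟩ | heq
  · rcases Nat.eq_zero_or_pos d with h' | h'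
    · subst h'
      simp only [mirror] at hd2
      omega
    · have := hd 0 h'
      simp only [mirror] at this
      omega
  · have := congrFun heq 0
    simp only [mirror] at this
    omega

/-! ### Γ is closed under mu -/

theorem Gamma_mu {δ : ℕ → ℕ} (h : Gamma δ) : Gamma (mu δ) := by
  obtain ⟨hs, hg⟩ := h
  refine ⟨isSeq_mu hs, fun k => ?_⟩
  constructor
  · -- mirror (mu δ) ⪯ shift^[k] (mu δ)
    rw [mirror_mu hs]
    rcases Nat.eq_zero_or_pos k with h0 | hk
    · subst h0
      simp only [Function.iterate_zero_apply]
      exact Or.inl ⟨0, fun j hj => absurd hj (by omega), by rw [Fm_zero, mu_zero]; omega⟩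
    · rcases Nat.even_or_odd k with he | ho
      · obtain ⟨t, rfl⟩ : ∃ t, k = 2*t := by obtain ⟨u, hu⟩ := he; exact ⟨u, by omega⟩
        have ht : 1 ≤ t := by omega
        have hδt := hs (t-1)
        rcases Nat.eq_zero_or_pos (δ (t-1)) with hv | hv
        · rw [shift_even_mu_0 ht hv]
          exact Or.inl ⟨0, fun j hj => absurd hj (by omega), by rw [Fm_zero, mu_zero]; omega⟩
        · have hv1 : δ (t-1) = 1 := by omega
          rw [shift_even_mu_1 ht hv1]
          exact Fm_mono (hg t).1
      · obtain ⟨t, rfl⟩ := ho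
        rw [shift_odd_mu]
        set y := shift^[t] δ with hy
        have hsy : isSeq y := isSeq_shift_iter hs t
        rcases Nat.eq_zero_or_pos (y 0) with hv | hv
        · -- y 0 = 0 : peel and use GF
          apply lexLe_peel
          · rw [Fm_zero]
            have := Gm_even y 0
            simp only [Nat.mul_zero] at this
            rw [this, hv]
          · -- GF : X = shift (Fm (mirror δ)), W = shift (Gm y)
            apply GF (a := mirror δ) (c := fun l => y (l+1)) (isSeq_mirror δ)
              (fun l => hsy (l+1))
            · intro l
              show Fm (mirror δ) (2*l + 1) = mirror δ l
              exact Fm_odd _ l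
            · intro l
              show Fm (mirror δ) (2*l+1 + 1) = 1 - mirror δ l
              rw [show 2*l+1+1 = 2*l+2 from rfl]
              exact Fm_even _ l
            · show Gm y (0+1) = 1
              rw [show (0:ℕ)+1 = 2*0+1 from rfl, Gm_odd]
              omega
            · intro l
              show Gm y (2*l+1+1) = y (l+1)
              rw [show 2*l+1+1 = 2*l+2 from rfl]
              exact Gm_even' y l
            · intro l
              show Gm y (2*l+2+1) = 1 - y (l+1)
              rw [show 2*l+2+1 = 2*l+3 from rfl]
              exact Gm_odd' y l
        · -- y 0 = 1 : strict at position 0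
          have hv1 : y 0 = 1 := by have := hsy 0; omega
          refine Or.inl ⟨0, fun j hj => absurd hj (by omega), ?_⟩
          rw [Fm_zero]
          have := Gm_even y 0
          simp only [Nat.mul_zero] at this
          rw [this, hv1]
          omega
  · -- shift^[k] (mu δ) ⪯ mu δ
    rcases Nat.eq_zero_or_pos k with h0 | hk
    · subst h0
      simp only [Function.iterate_zero_apply]
      exact lexLe_refl _
    · rcases Nat.even_or_odd k with he | ho
      · obtain ⟨t, rfl⟩ : ∃ t, k = 2*t := by obtain ⟨u, hu⟩ := he; exact ⟨u, by omega⟩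
        have ht : 1 ≤ t := by omega
        rcases Nat.eq_zero_or_pos (δ (t-1)) with hv | hv
        · rw [shift_even_mu_0 ht hv]
          exact mu_mono (hg t).2
        · have hv1 : δ (t-1) = 1 := by have := hs (t-1); omega
          rw [shift_even_mu_1 ht hv1]
          refine Or.inl ⟨0, fun j hj => absurd hj (by omega), ?_⟩
          rw [Fm_zero, mu_zero]
          omega
      · obtain ⟨t, rfl⟩ := ho
        rw [shift_odd_mu]
        set y := shift^[t] δ with hy
        have hsy : isSeq y := isSeq_shift_iter hs t
        -- GF directly : X = Gm y, W = mu δ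
        apply GF (a := y) (c := δ) hsy hs
        · intro l; exact Gm_even y l
        · intro l; exact Gm_odd y l
        · exact mu_zero δ
        · intro l; exact mu_odd δ l
        · intro l; exact mu_even δ l

end Stmt15
namespace Stmt15

/-- Convert a strict lex comparison of a shift against the sequence into positional data. -/
theorem lexLt_shift_elim {b : ℕ → ℕ} {s : ℕ} (h : lexLt (shift^[s] b) b) :
    ∃ d, (∀ j, j < d → b (j + s) = b j) ∧ b (d + s) < b d := by
  obtain ⟨d, hd, hd2⟩ := h
  rw [shift_iter] at hd2
  refine ⟨d, fun j hj => ?_, hd2⟩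
  have := hd j hj
  rwa [shift_iter] at this

theorem lexLt_mirror_elim {b : ℕ → ℕ} {r : ℕ} (h : lexLt (mirror b) (shift^[r] b)) :
    ∃ d, (∀ j, j < d → 1 - b j = b (j + r)) ∧ 1 - b d < b (d + r) := by
  obtain ⟨d, hd, hd2⟩ := h
  rw [shift_iter] at hd2
  refine ⟨d, fun j hj => ?_, hd2⟩
  have := hd j hj
  rwa [shift_iter] at this

/-- Bundled hypotheses for the "chase" argument. -/
structure ChaseHyp (b : ℕ → ℕ) (q i : ℕ) : Prop where
  hS : isSeq b
  hW : Wp b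
  hq2 : 2 ≤ q
  hper : shift^[q] b = b
  hmin : ∀ j, 1 ≤ j → j < q → shift^[j] b ≠ b
  hiodd : i % 2 = 1
  hi3 : 3 ≤ i
  hiq : i < q
  hpre : ∀ t, t < i → b t = if t = 0 then 1 else t % 2
  hbi : b i = 0

namespace ChaseHyp

variable {b : ℕ → ℕ} {q i : ℕ} (H : ChaseHyp b q i)

include H

theorem b0 : b 0 = 1 := by
  have := H.hpre 0 (by have := H.hi3; omega); simpa using this

theorem b1 : b 1 = 1 := by
  have := H.hpre 1 (by have := H.hi3; omega); simpa using this

theorem b2 : b 2 = 0 := by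
  have := H.hpre 2 (by have := H.hi3; omega); simpa using this

theorem noDoubLow : ∀ x, 1 ≤ x → x ≤ i - 2 → b x ≠ b (x+1) := by
  intro x hx1 hx2
  have hi3 := H.hi3
  have h1 := H.hpre x (by omega)
  have h2 := H.hpre (x+1) (by omega)
  rw [h1, h2]
  rcases Nat.eq_zero_or_pos (x - 1) with h0 | h0
  · have : x = 1 := by omega
    subst this
    norm_num
  · rw [if_neg (by omega), if_neg (by omega)]
    omega

theorem sp_ne : ∀ s, 1 ≤ s → ¬ (q ∣ s) → shift^[s] b ≠ b := by
  intro s hs1 hnd heq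
  have hq2 := H.hq2
  exact hnd (smallest_period_dvd ⟨by omega, H.hper, H.hmin⟩ heq)

/-- Step from a "11" double: the next double is a "00" double of the same parity. -/
theorem C1 : ∀ s, 2 ≤ s → ¬ q ∣ s → b s = 1 → b (s+1) = 1 → b (s-1) = 0 →
    ∃ z, s < z ∧ z % 2 = s % 2 ∧ b z = 0 ∧ b (z+1) = 0 ∧ b (z-1) = 1 ∧
      ∀ x, s < x → x < z → b x ≠ b (x+1) := by
  intro s hs2 hnd hbs hbs1 hbsm
  have hi3 := H.hi3
  have hiodd := H.hiodd
  have hb0 := H.b0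
  have hb1 := H.b1
  have hle := (H.hW.2 s (by omega)).1 hbsm
  have hne := H.sp_ne s (by omega) hnd
  have hlt : lexLt (shift^[s] b) b := by
    rcases hle with h | h
    · exact h
    · exact absurd h hne
  obtain ⟨d, hd, hd2⟩ := lexLt_shift_elim hlt
  have hbd : b d = 1 ∧ b (d + s) = 0 := by
    have := H.hS d
    omega
  have hd2' : 2 ≤ d := by
    by_contra hc
    push_neg at hc
    interval_cases d
    · rw [Nat.zero_add, hb0] at hd2; omega
    · have e : (1:ℕ) + s = s + 1 := by ring
      rw [e, hbs1, hb1] at hd2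
      omega
  rcases lt_trichotomy d i with hdi | hdi | hdi
  · -- d < i : d is odd, 3 ≤ d
    have hpd := H.hpre d hdi
    rw [if_neg (by omega)] at hpd
    have hdodd : d % 2 = 1 := by omega
    have hd3 : 3 ≤ d := by omega
    refine ⟨s + d - 1, by omega, by omega, ?_, ?_, ?_, ?_⟩
    · have e : s + d - 1 = (d-1) + s := by omega
      rw [e, hd (d-1) (by omega), H.hpre (d-1) (by omega), if_neg (by omega)]
      omega
    · have e : s + d - 1 + 1 = d + s := by omega
      rw [e]
      exact hbd.2
    · have e : s + d - 1 - 1 = (d-2) + s := by omega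
      rw [e, hd (d-2) (by omega), H.hpre (d-2) (by omega), if_neg (by omega)]
      omega
    · intro x hx1 hx2
      obtain ⟨t, rfl⟩ : ∃ t, x = t + s := ⟨x - s, by omega⟩
      have ht1 : 1 ≤ t := by omega
      have ht2 : t ≤ d - 2 := by omega
      rw [hd t (by omega), show t + s + 1 = (t+1) + s from by ring, hd (t+1) (by omega)]
      exact H.noDoubLow t ht1 (by omega)
  · -- d = i : contradiction
    exfalso
    rw [hdi] at hbd
    rw [H.hbi] at hbd
    omega
  · -- d > i
    refine ⟨s + i - 1, by omega, by omega, ?_, ?_, ?_, ?_⟩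
    · have e : s + i - 1 = (i-1) + s := by omega
      rw [e, hd (i-1) (by omega), H.hpre (i-1) (by omega), if_neg (by omega)]
      omega
    · have e : s + i - 1 + 1 = i + s := by omega
      rw [e, hd i (by omega), H.hbi]
    · have e : s + i - 1 - 1 = (i-2) + s := by omega
      rw [e, hd (i-2) (by omega), H.hpre (i-2) (by omega), if_neg (by omega)]
      omega
    · intro x hx1 hx2
      obtain ⟨t, rfl⟩ : ∃ t, x = t + s := ⟨x - s, by omega⟩
      have ht1 : 1 ≤ t := by omega
      have ht2 : t ≤ i - 2 := by omega
      rw [hd t (by omega), show t + s + 1 = (t+1) + s from by ring, hd (t+1) (by omega)]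
      exact H.noDoubLow t ht1 (by omega)

/-- Step from a "00" double (non-degenerate case). -/
theorem C2 : ∀ r, 2 ≤ r → b r = 0 → b (r+1) = 0 → b (r-1) = 1 →
    shift^[r] b ≠ mirror b →
    ∃ z, r < z ∧ z % 2 = r % 2 ∧ b z = 1 ∧ b (z+1) = 1 ∧ b (z-1) = 0 ∧
      ∀ x, r < x → x < z → b x ≠ b (x+1) := by
  intro r hr2 hbr hbr1 hbrm hneq
  have hi3 := H.hi3
  have hiodd := H.hiodd
  have hb0 := H.b0
  have hb1 := H.b1
  have hle := (H.hW.2 r (by omega)).2 hbrm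
  have hlt : lexLt (mirror b) (shift^[r] b) := by
    rcases hle with h | h
    · exact h
    · exact absurd h.symm (by
        intro hc
        exact hneq (by rw [hc]))
  obtain ⟨d, hd, hd2⟩ := lexLt_mirror_elim hlt
  have hbd : b d = 1 ∧ b (d + r) = 1 := by
    have h1 := H.hS d
    have h2 := H.hS (d + r)
    omega
  have hd2' : 2 ≤ d := by
    by_contra hc
    push_neg at hc
    interval_cases d
    · rw [Nat.zero_add, hb0] at hd2
      omega
    · rw [hb1, show (1:ℕ) + r = r + 1 from by ring, hbr1] at hd2
      omega
  rcases lt_trichotomy d i with hdi | hdi | hdi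
  · -- d < i : d odd ≥ 3
    have hpd := H.hpre d hdi
    rw [if_neg (by omega)] at hpd
    have hdodd : d % 2 = 1 := by omega
    have hd3 : 3 ≤ d := by omega
    refine ⟨r + d - 1, by omega, by omega, ?_, ?_, ?_, ?_⟩
    · have e : r + d - 1 = (d-1) + r := by omega
      rw [e, ← hd (d-1) (by omega), H.hpre (d-1) (by omega), if_neg (by omega)]
      omega
    · have e : r + d - 1 + 1 = d + r := by omega
      rw [e]
      exact hbd.2
    · have e : r + d - 1 - 1 = (d-2) + r := by omega
      rw [e, ← hd (d-2) (by omega), H.hpre (d-2) (by omega), if_neg (by omega)]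
      omega
    · intro x hx1 hx2
      obtain ⟨t, rfl⟩ : ∃ t, x = t + r := ⟨x - r, by omega⟩
      have ht1 : 1 ≤ t := by omega
      have ht2 : t ≤ d - 2 := by omega
      rw [← hd t (by omega), show t + r + 1 = (t+1) + r from by ring, ← hd (t+1) (by omega)]
      have hnd := H.noDoubLow t ht1 (by omega)
      have h1 := H.hS t
      have h2 := H.hS (t+1)
      omega
  · exfalso
    rw [hdi, H.hbi] at hbd
    omega
  · refine ⟨r + i - 1, by omega, by omega, ?_, ?_, ?_, ?_⟩
    · have e : r + i - 1 = (i-1) + r := by omega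
      rw [e, ← hd (i-1) (by omega), H.hpre (i-1) (by omega), if_neg (by omega)]
      omega
    · have e : r + i - 1 + 1 = i + r := by omega
      rw [e, ← hd i (by omega), H.hbi]
    · have e : r + i - 1 - 1 = (i-2) + r := by omega
      rw [e, ← hd (i-2) (by omega), H.hpre (i-2) (by omega), if_neg (by omega)]
      omega
    · intro x hx1 hx2
      obtain ⟨t, rfl⟩ : ∃ t, x = t + r := ⟨x - r, by omega⟩
      have ht1 : 1 ≤ t := by omega
      have ht2 : t ≤ i - 2 := by omega
      rw [← hd t (by omega), show t + r + 1 = (t+1) + r from by ring, ← hd (t+1) (by omega)]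
      have hnd := H.noDoubLow t ht1 (by omega)
      have h1 := H.hS t
      have h2 := H.hS (t+1)
      omega

/-- The degenerate "00" case: the shift coincides with the mirror; then q = 2r. -/
theorem EQcase : ∀ r, 1 ≤ r → r < q → shift^[r] b = mirror b → q = 2*r := by
  intro r hr1 hrq heq
  have hcomm : shift^[r] (mirror b) = mirror (shift^[r] b) := by
    funext j
    rw [shift_iter]
    simp only [mirror]
    rw [shift_iter]
  have hmm : mirror (mirror b) = b := by
    funext j
    simp only [mirror]
    have := H.hS j
    omega
  have h2r : shift^[2*r] b = b := by
    have e : shift^[2*r] b = shift^[r] (shift^[r] b) := by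
      rw [← Function.iterate_add_apply]
      congr 1
      omega
    rw [e, heq, hcomm, heq, hmm]
  have hq2 := H.hq2
  have hdvd : q ∣ 2*r := smallest_period_dvd ⟨by omega, H.hper, H.hmin⟩ h2r
  obtain ⟨c, hc⟩ := hdvd
  match c, hc with
  | 0, hc => rw [Nat.mul_zero] at hc; omega
  | 1, hc => rw [Nat.mul_one] at hc; omega
  | (c+2), hc =>
    exfalso
    have h1 : q * 2 ≤ q * (c+2) := Nat.mul_le_mul_left q (by omega)
    have h2 : q * 2 = 2 * q := Nat.mul_comm _ _
    omega

/-- The main parity induction: every double in [2, q] sits at an even position and is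
preceded by the opposite letter. -/
theorem IND : ∀ z, 2 ≤ z → z ≤ q → b z = b (z+1) →
    z % 2 = 0 ∧ b (z-1) = 1 - b z := by
  intro z
  induction z using Nat.strong_induction_on with
  | _ z ih =>
    intro hz2 hzq hD
    have hi3 := H.hi3
    have hiodd := H.hiodd
    have hiq := H.hiq
    have hb1 := H.b1
    have hb2 := H.b2
    rcases Nat.lt_or_ge z (i-1) with hlow | hge
    · exact absurd hD (H.noDoubLow z (by omega) (by omega))
    rcases Nat.eq_or_lt_of_le hge with hbase | hgt
    · -- z = i - 1
      constructor
      · omega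
      · have e1 : z - 1 = i - 2 := by omega
        have e2 : z = i - 1 := by omega
        rw [e1, e2, H.hpre (i-2) (by omega), H.hpre (i-1) (by omega),
          if_neg (by omega), if_neg (by omega)]
        omega
    · -- z ≥ i : find the previous double
      classical
      set P := fun y => i - 1 ≤ y ∧ b y = b (y+1) with hP
      have hPi : P (i-1) := by
        constructor
        · omega
        · rw [H.hpre (i-1) (by omega), if_neg (by omega)]
          have e : i - 1 + 1 = i := by omega
          rw [e, H.hbi]
          omega
      have hile : i - 1 ≤ z - 1 := by omega
      set y := Nat.findGreatest P (z-1) with hy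
      have hPy : P y := Nat.findGreatest_spec hile hPi
      have hyle : y ≤ z - 1 := Nat.findGreatest_le (z-1)
      have hylow : i - 1 ≤ y := hPy.1
      have hDy : b y = b (y+1) := hPy.2
      have hgap : ∀ x, y < x → x < z → b x ≠ b (x+1) := by
        intro x hx1 hx2 hc
        rcases Nat.lt_or_ge x (i-1) with h' | h'
        · exact (H.noDoubLow x (by omega) (by omega)) hc
        · exact (Nat.findGreatest_is_greatest hx1 (by omega)) ⟨h', hc⟩
      have ihy := ih y (by omega) (by omega) (by omega) hDy
      have hyq : y < q := by omega
      rcases Nat.eq_zero_or_pos (b y) with hby | hby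
      · -- b y = 0 : a 00 double
        have hby1 : b (y+1) = 0 := by omega
        have hbym : b (y-1) = 1 := by omega
        by_cases heq : shift^[y] b = mirror b
        · -- degenerate case : antiperiod
          have hq2y : q = 2*y := H.EQcase y (by omega) hyq heq
          have hanti : ∀ t, b (t + y) = 1 - b t := by
            intro t
            have := congrFun heq t
            rw [shift_iter] at this
            simp only [mirror] at this
            exact this
          have hzy : y < z := by omega
          set z' := z - y with hz'
          have hDz' : b z' = b (z'+1) := by
            have e2 : z + 1 = (z'+1) + y := by omega
            have e1 : z = z' + y := by omega
            rw [e2, e1, hanti z', hanti (z'+1)] at hD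
            have h1 := H.hS z'
            have h2 := H.hS (z'+1)
            omega
          rcases Nat.lt_or_ge z' 2 with hz'2 | hz'2
          · exfalso
            have hz'1 : z' = 1 := by omega
            rw [hz'1] at hDz'
            rw [hb1, hb2] at hDz'
            omega
          · have ihz' := ih z' (by omega) hz'2 (by omega) hDz'
            constructor
            · omega
            · have e1 : z - 1 = (z'-1) + y := by omega
              have e2 : z = z' + y := by omega
              rw [e1, hanti (z'-1), e2, hanti z']
              have h1 := H.hS (z'-1)
              have h2 := H.hS z'
              omega
        · -- generic case : apply C2
          obtain ⟨w, hw1, hw2, hw3, hw4, hw5, hw6⟩ :=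
            H.C2 y (by omega) (by omega) hby1 hbym heq
          have hwz : w = z := by
            rcases lt_trichotomy w z with h' | h' | h'
            · exfalso
              exact (hgap w hw1 h') (by rw [hw3, hw4])
            · exact h'
            · exact absurd hD (hw6 z (by omega) h')
          subst hwz
          exact ⟨by omega, by omega⟩
      · -- b y = 1 : a 11 double
        have hby' : b y = 1 := by have := H.hS y; omega
        have hby1 : b (y+1) = 1 := by omega
        have hbym : b (y-1) = 0 := by omega
        have hnd : ¬ q ∣ y := by
          intro hc
          have := Nat.le_of_dvd (by omega) hc
          omega
        obtain ⟨w, hw1, hw2, hw3, hw4, hw5, hw6⟩ :=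
          H.C1 y (by omega) hnd hby' hby1 hbym
        have hwz : w = z := by
          rcases lt_trichotomy w z with h' | h' | h'
          · exfalso
            exact (hgap w hw1 h') (by rw [hw3, hw4])
          · exact h'
          · exact absurd hD (hw6 z (by omega) h')
        subst hwz
        exact ⟨by omega, by omega⟩

/-- Conclusion of the chase for odd q : impossible. -/
theorem odd_q_false (hqodd : q % 2 = 1) : False := by
  have hb0 := H.b0
  have hb1 := H.b1
  have hDq : b q = b (q+1) := by
    have h1 : b (0 + q) = b 0 := periodic_add H.hper 0
    have h2 : b (1 + q) = b 1 := periodic_add H.hper 1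
    rw [Nat.zero_add] at h1
    rw [show (1:ℕ) + q = q + 1 from by ring] at h2
    rw [h1, h2, hb0, hb1]
  have := H.IND q H.hq2 le_rfl hDq
  omega

/-- Conclusion of the chase for even q : all pairs are complementary. -/
theorem pairs_compl (hqeven : q % 2 = 0) : ∀ j, b (2*j+1) ≠ b (2*j+2) := by
  intro j hc
  have hb1 := H.b1
  have hb2 := H.b2
  have hq2 := H.hq2
  set x := 2*j+1 with hx
  set x' := x % q with hx'
  obtain ⟨c, hcq⟩ : ∃ c, x = x' + c * q := ⟨x / q, by rw [hx']; exact (Nat.mod_add_div' x q).symm⟩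
  have hbx : b x = b x' := by rw [hcq]; exact periodic_add_mul H.hper _ _
  have hbx1 : b (x+1) = b (x'+1) := by
    rw [hcq, show x' + c * q + 1 = (x'+1) + c * q from by ring]
    exact periodic_add_mul H.hper _ _
  obtain ⟨w, hw⟩ : ∃ w, c * q = 2 * w := by
    obtain ⟨u, hu⟩ : ∃ u, q = 2 * u := ⟨q / 2, by omega⟩
    exact ⟨c * u, by rw [hu]; ring⟩
  have hx'odd : x' % 2 = 1 := by omega
  have hx'q : x' < q := by rw [hx']; exact Nat.mod_lt _ (by omega)
  have hDx' : b x' = b (x'+1) := by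
    rw [← hbx, ← hbx1]
    rw [hx]
    rw [show 2*j+1+1 = 2*j+2 from rfl]
    exact hc
  rcases Nat.lt_or_ge x' 2 with h2 | h2
  · have : x' = 1 := by omega
    rw [this, hb1, hb2] at hDx'
    omega
  · have := H.IND x' h2 (by omega) hDx'
    omega

end ChaseHyp

end Stmt15
namespace Stmt15

theorem lexLe_one {x : ℕ → ℕ} (hx : isSeq x) : lexLe x (fun _ => 1) := by
  rcases lex_total x (fun _ => 1) with h | h
  · exact h
  · exfalso
    obtain ⟨k, hk, hk2⟩ := h
    have := hx k
    simp only at hk2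
    omega

theorem shift_mod_period {c : ℕ → ℕ} {L : ℕ} (hper : shift^[L] c = c) (k : ℕ) :
    shift^[k] c = shift^[k % L] c := by
  funext j
  rw [shift_iter, shift_iter]
  have h1 : k % L + L * (k / L) = k := Nat.mod_add_div k L
  have h2 : L * (k / L) = (k / L) * L := Nat.mul_comm _ _
  have e : j + k = (j + k % L) + (k / L) * L := by omega
  rw [e]
  exact periodic_add_mul hper _ _

/-! ### The constant-1 sequence -/

theorem Gamma_one : Gamma (fun _ => 1) := by
  refine ⟨fun k => le_rfl, fun k => ⟨?_, ?_⟩⟩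
  · left
    refine ⟨0, fun j hj => absurd hj (by omega), ?_⟩
    rw [shift_iter]
    simp [mirror]
  · right
    funext j
    rw [shift_iter]

theorem ps_one : periodicSmallest 1 (fun _ => 1) := by
  refine ⟨le_rfl, ?_, fun j hj1 hj2 => absurd hj2 (by omega)⟩
  funext j
  rw [shift_iter]

/-! ### The sequence (10)^∞ = mu(0^∞) -/

theorem t10_val (t : ℕ) : mu (fun _ => 0) t = 1 - t % 2 := by
  rcases Nat.eq_zero_or_pos t with h0 | hpos
  · subst h0; rw [mu_zero]
  · rcases Nat.even_or_odd t with he | ho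
    · obtain ⟨v, rfl⟩ : ∃ v, t = 2*v+2 := by
        obtain ⟨u, hu⟩ := he; exact ⟨u - 1, by omega⟩
      rw [mu_even]
      omega
    · obtain ⟨v, rfl⟩ := ho
      rw [mu_odd]
      omega

theorem t10_per : shift^[2] (mu (fun _ => 0)) = mu (fun _ => 0) := by
  funext j
  rw [shift_iter, t10_val, t10_val]
  omega

theorem Gamma_t10 : Gamma (mu (fun _ => 0)) := by
  constructor
  · intro k; rw [t10_val]; omega
  · intro k
    rw [shift_mod_period t10_per k]
    have hk2 : k % 2 = 0 ∨ k % 2 = 1 := by omega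
    rcases hk2 with h | h <;> rw [h]
    · constructor
      · left
        refine ⟨0, fun j hj => absurd hj (by omega), ?_⟩
        simp only [Function.iterate_zero_apply, mirror]
        rw [t10_val]
        omega
      · simp only [Function.iterate_zero_apply]
        exact lexLe_refl _
    · constructor
      · right
        funext j
        simp only [mirror]
        rw [shift_iter, t10_val, t10_val]
        omega
      · left
        refine ⟨0, fun j hj => absurd hj (by omega), ?_⟩
        rw [shift_iter, t10_val, t10_val]
        omega

theorem ps_t10 : periodicSmallest 2 (mu (fun _ => 0)) := by
  refine ⟨by omega, t10_per, ?_⟩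
  intro j hj1 hj2 heq
  have : j = 1 := by omega
  subst this
  have := congrFun heq 0
  rw [shift_iter, t10_val, t10_val] at this
  omega

/-! ### The odd base sequences 1(10)^m -/

section Otb

variable {m : ℕ}

theorem otb_zero : oneTenBlock m 0 = 1 := by
  simp [oneTenBlock]

theorem otb_low (t : ℕ) (ht : t ≤ 2*m) : oneTenBlock m t = if t = 0 then 1 else t % 2 := by
  simp only [oneTenBlock]
  rw [Nat.mod_eq_of_lt (by omega)]

theorem otb_per : shift^[2*m+1] (oneTenBlock m) = oneTenBlock m := by
  funext j
  rw [shift_iter]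
  simp only [oneTenBlock]
  rw [Nat.add_mod_right]

theorem otb_isSeq : isSeq (oneTenBlock m) := by
  intro t
  simp only [oneTenBlock]
  split
  · exact le_rfl
  · omega

theorem otb_one (hm : 1 ≤ m) : oneTenBlock m 1 = 1 := by
  simp only [oneTenBlock]
  rw [Nat.mod_eq_of_lt (by omega)]
  norm_num

theorem otb_mid (hm : 1 ≤ m) (r : ℕ) (h1 : 1 ≤ r) (h2 : r < 2*m+1) :
    oneTenBlock m r = r % 2 := by
  simp only [oneTenBlock]
  rw [Nat.mod_eq_of_lt h2, if_neg (by omega)]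

theorem otb_L : oneTenBlock m (2*m+1) = 1 := by
  simp [oneTenBlock]

theorem Gamma_otb (hm : 1 ≤ m) : Gamma (oneTenBlock m) := by
  refine ⟨otb_isSeq, fun k => ?_⟩
  rw [shift_mod_period otb_per k]
  have hrL : k % (2*m+1) < 2*m+1 := Nat.mod_lt _ (by omega)
  rcases Nat.eq_zero_or_pos (k % (2*m+1)) with h0 | h1
  · rw [h0]
    simp only [Function.iterate_zero_apply]
    constructor
    · left
      refine ⟨0, fun j hj => absurd hj (by omega), ?_⟩
      simp only [mirror]
      rw [otb_zero]
      omega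
    · exact lexLe_refl _
  · set r := k % (2*m+1) with hr
    have hcrv : oneTenBlock m r = r % 2 := otb_mid hm r (by omega) hrL
    rcases Nat.lt_or_ge (r % 2) 1 with he | ho
    · -- r even, so value 0
      have hcr0 : oneTenBlock m r = 0 := by omega
      constructor
      · left
        refine ⟨1, ?_, ?_⟩
        · intro j hj
          have : j = 0 := by omega
          subst this
          rw [shift_iter]
          simp only [mirror, Nat.zero_add]
          rw [otb_zero, hcr0]
        · rw [shift_iter]
          simp only [mirror]
          rw [otb_one hm]
          have hval : oneTenBlock m (1 + r) = 1 := by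
            rcases Nat.lt_or_ge (r+1) (2*m+1) with h' | h'
            · rw [show 1 + r = r + 1 from by ring, otb_mid hm (r+1) (by omega) h']
              omega
            · have : 1 + r = 2*m+1 := by omega
              rw [this, otb_L]
          rw [hval]
          omega
      · left
        refine ⟨0, fun j hj => absurd hj (by omega), ?_⟩
        rw [shift_iter]
        simp only [Nat.zero_add]
        rw [hcr0, otb_zero]
        omega
    · -- r odd, value 1
      have hcr1 : oneTenBlock m r = 1 := by omega
      constructor
      · left
        refine ⟨0, fun j hj => absurd hj (by omega), ?_⟩
        rw [shift_iter]
        simp only [mirror, Nat.zero_add]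
        rw [otb_zero, hcr1]
        omega
      · left
        refine ⟨1, ?_, ?_⟩
        · intro j hj
          have : j = 0 := by omega
          subst this
          rw [shift_iter]
          simp only [Nat.zero_add]
          rw [hcr1, otb_zero]
        · rw [shift_iter]
          have hr1L : r + 1 < 2*m+1 := by omega
          rw [show 1 + r = r + 1 from by ring, otb_mid hm (r+1) (by omega) hr1L, otb_one hm]
          omega

theorem ps_otb (hm : 1 ≤ m) : periodicSmallest (2*m+1) (oneTenBlock m) := by
  refine ⟨by omega, otb_per, ?_⟩
  intro j hj1 hj2 heq
  have h0 : oneTenBlock m (0 + j) = oneTenBlock m 0 := by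
    have := congrFun heq 0
    rwa [shift_iter] at this
  have h1 : oneTenBlock m (1 + j) = oneTenBlock m 1 := by
    have := congrFun heq 1
    rwa [shift_iter] at this
  rw [Nat.zero_add, otb_zero] at h0
  rw [otb_one hm] at h1
  have hcj : oneTenBlock m j = j % 2 := otb_mid hm j (by omega) (by omega)
  have hjodd : j % 2 = 1 := by omega
  rcases Nat.lt_or_ge (j+1) (2*m+1) with h' | h'
  · have hv : oneTenBlock m (j+1) = (j+1) % 2 := otb_mid hm (j+1) (by omega) h'
    rw [show 1 + j = j + 1 from by ring] at h1
    omega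
  · have : j = 2*m := by omega
    omega

theorem otb_last (hm : 1 ≤ m) : oneTenBlock m (2*m) = 0 := by
  rw [otb_low (2*m) le_rfl, if_neg (by omega)]
  omega

end Otb

end Stmt15
namespace Stmt15

/-- The candidate minimal sequence for period 2^n(2m+1). -/
def cnd (n m : ℕ) : ℕ → ℕ :=
  if n = 0 ∧ m = 0 then (fun _ => 1)
  else mu^[n] (if m = 0 then (fun _ => 0) else oneTenBlock m)

theorem isSeq_mu_iter {x : ℕ → ℕ} (hx : isSeq x) (n : ℕ) : isSeq (mu^[n] x) := by
  induction n with
  | zero => exact hx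
  | succ n ih =>
    rw [Function.iterate_succ_apply']
    exact isSeq_mu ih

theorem mu_one_val (t : ℕ) : mu (fun _ => 1) t = if t = 0 then 1 else t % 2 := by
  rcases Nat.eq_zero_or_pos t with h0 | hpos
  · subst h0; rw [mu_zero]; norm_num
  · rcases Nat.even_or_odd t with he | ho
    · obtain ⟨v, rfl⟩ : ∃ v, t = 2*v+2 := by
        obtain ⟨u, hu⟩ := he; exact ⟨u - 1, by omega⟩
      rw [mu_even, if_neg (by omega)]
      omega
    · obtain ⟨v, rfl⟩ := ho
      rw [mu_odd, if_neg (by omega)]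
      omega

theorem ps_unique {x : ℕ → ℕ} {p q : ℕ} (h1 : periodicSmallest p x)
    (h2 : periodicSmallest q x) : p = q :=
  Nat.dvd_antisymm (smallest_period_dvd h1 h2.2.1) (smallest_period_dvd h2 h1.2.1)

theorem eq_one_of_one_lexLe {δ : ℕ → ℕ} (hδ : isSeq δ) (h : lexLe (fun _ => 1) δ) :
    δ = fun _ => 1 := by
  rcases h with ⟨k, hk, hk2⟩ | h
  · exfalso
    have := hδ k
    simp only at hk2
    omega
  · exact h.symm

/-- A Wp-sequence starting 1 0 has no equal adjacent letters at all. -/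
theorem Wp_nodouble {b : ℕ → ℕ} (hW : Wp b) (h0 : b 0 = 1) (h1 : b 1 = 0) :
    ∀ u, b u ≠ b (u+1) := by
  intro u
  induction u using Nat.strong_induction_on with
  | _ u ih =>
    intro hD
    rcases Nat.eq_zero_or_pos u with hu0 | hu1
    · subst hu0; rw [h0, h1] at hD; omega
    rcases Nat.eq_zero_or_pos (b u) with he | he
    · -- a 00 double
      have hbu1 : b (u+1) = 0 := by omega
      rcases Nat.eq_zero_or_pos (b (u-1)) with hp | hp
      · -- previous also 0 : recurse
        rcases Nat.eq_zero_or_pos (u-1) with h' | h'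
        · have : u = 1 := by omega
          subst this
          rw [h0] at hp
          omega
        · exact ih (u-1) (by omega) (by
            have e : u - 1 + 1 = u := by omega
            rw [e]
            omega)
      · -- previous is 1 : mirror comparison kills it
        have hp1 : b (u-1) = 1 := by have := hW.1 (u-1); omega
        have hle := (hW.2 u (by omega)).2 hp1
        rcases hle with hlt | heq
        · obtain ⟨d, hd, hd2⟩ := lexLt_mirror_elim hlt
          rcases Nat.lt_or_ge d 2 with hd' | hd'
          · interval_cases d
            · rw [Nat.zero_add, h0, he] at hd2; omega
            · rw [h1, show (1:ℕ) + u = u + 1 from by ring, hbu1] at hd2; omega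
          · have := hd 1 (by omega)
            rw [h1, show (1:ℕ) + u = u + 1 from by ring, hbu1] at this
            omega
        · have := congrFun heq 1
          rw [shift_iter] at this
          simp only [mirror] at this
          rw [h1, show (1:ℕ) + u = u + 1 from by ring, hbu1] at this
          omega
    · -- a 11 double
      have hbu : b u = 1 := by have := hW.1 u; omega
      have hbu1 : b (u+1) = 1 := by omega
      rcases Nat.eq_zero_or_pos (b (u-1)) with hp | hp
      · -- previous is 0 : shift comparison kills it
        have hle := (hW.2 u (by omega)).1 hp
        rcases hle with hlt | heq
        · obtain ⟨d, hd, hd2⟩ := lexLt_shift_elim hlt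
          rcases Nat.lt_or_ge d 2 with hd' | hd'
          · interval_cases d
            · rw [Nat.zero_add, h0, hbu] at hd2; omega
            · rw [h1, show (1:ℕ) + u = u + 1 from by ring, hbu1] at hd2; omega
          · have := hd 1 (by omega)
            rw [h1, show (1:ℕ) + u = u + 1 from by ring, hbu1] at this
            omega
        · have := congrFun heq 1
          rw [shift_iter] at this
          rw [h1, show (1:ℕ) + u = u + 1 from by ring, hbu1] at this
          omega
      · -- previous is 1 : recurse
        rcases Nat.eq_zero_or_pos (u-1) with h' | h'
        · have : u = 1 := by omega
          subst this
          rw [h1] at hbu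
          omega
        · have hp1 : b (u-1) = 1 := by have := hW.1 (u-1); omega
          exact ih (u-1) (by omega) (by
            have e : u - 1 + 1 = u := by omega
            rw [e]
            omega)

/-- Specification of the candidates. -/
theorem cnd_spec (n m : ℕ) :
    Gamma (cnd n m) ∧ periodicSmallest (2^n * (2*m+1)) (cnd n m) ∧
      (2 ≤ 2^n * (2*m+1) → cnd n m (2^n * (2*m+1) - 1) = 0) := by
  induction n with
  | zero =>
    rcases Nat.eq_zero_or_pos m with hm | hm
    · subst hm
      have hc : cnd 0 0 = fun _ => 1 := by simp [cnd]
      have e : 2^0 * (2*0+1) = 1 := by norm_num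
      rw [hc, e]
      exact ⟨Gamma_one, ps_one, by omega⟩
    · have hc : cnd 0 m = oneTenBlock m := by
        unfold cnd
        split_ifs with h1 h2
        · exact absurd h1.2 (by omega)
        · exact absurd h2 (by omega)
        · rfl
      have e : 2^0 * (2*m+1) = 2*m+1 := by norm_num
      rw [hc, e]
      refine ⟨Gamma_otb hm, ps_otb hm, fun _ => ?_⟩
      rw [show 2*m+1-1 = 2*m from by omega]
      exact otb_last hm
  | succ n ih =>
    by_cases h00 : n = 0 ∧ m = 0
    · obtain ⟨rfl, rfl⟩ := h00
      have hc : cnd 1 0 = mu (fun _ => 0) := by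
        unfold cnd
        rw [if_neg (by omega : ¬((1:ℕ) = 0 ∧ (0:ℕ) = 0)), if_pos rfl]
        rfl
      have e : 2^1 * (2*0+1) = 2 := by norm_num
      rw [hc, e]
      refine ⟨Gamma_t10, ps_t10, fun _ => ?_⟩
      rw [show (2:ℕ)-1 = 2*0+1 from rfl, mu_odd]
    · have hX : cnd (n+1) m = mu (cnd n m) := by
        have h1 : ¬((n+1) = 0 ∧ m = 0) := by omega
        simp only [cnd, if_neg h00, if_neg h1]
        rw [Function.iterate_succ_apply']
      obtain ⟨ihG, ihP, ihL⟩ := ih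
      have hp1 : 1 ≤ 2^n := Nat.one_le_two_pow
      have hK2 : 2 ≤ 2^n * (2*m+1) := by
        rcases not_and_or.mp h00 with h | h
        · have hn1 : 1 ≤ n := by omega
          have h2 : 2 ≤ 2^n := by
            calc (2:ℕ) = 2^1 := by norm_num
            _ ≤ 2^n := Nat.pow_le_pow_right (by norm_num) hn1
          have hmul : 2^n * 1 ≤ 2^n * (2*m+1) := Nat.mul_le_mul_left _ (by omega)
          rw [Nat.mul_one] at hmul
          omega
        · have hm1 : 1 ≤ m := by omega
          have hmul : 2^n * 3 ≤ 2^n * (2*m+1) := Nat.mul_le_mul_left _ (by omega)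
          have h3 : 2^n * 3 = 2^n + 2^n + 2^n := by ring
          omega
      have hlast := ihL hK2
      have e : 2^(n+1) * (2*m+1) = 2 * (2^n * (2*m+1)) := by rw [pow_succ]; ring
      rw [hX, e]
      refine ⟨Gamma_mu ihG, mu_periodicSmallest ihG.1 ihP hlast, fun _ => ?_⟩
      rw [show 2 * (2^n * (2*m+1)) - 1 = 2*((2^n * (2*m+1)) - 1)+1 from by omega, mu_odd,
        hlast]

end Stmt15
namespace Stmt15

theorem cnd_zero_zero : cnd 0 0 = fun _ => 1 := by simp [cnd]

theorem cnd_one_zero : cnd 1 0 = mu (fun _ => 0) := by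
  unfold cnd
  split_ifs
  all_goals first
    | rfl
    | (exact (‹False ∧ (0:ℕ) = 0›).1.elim)
    | (exact absurd rfl ‹¬(0:ℕ) = 0›)

theorem cnd_zero_odd {m : ℕ} (hm : 1 ≤ m) : cnd 0 m = oneTenBlock m := by
  unfold cnd
  split_ifs with h1 h2
  · exact absurd h1.2 (by omega)
  · exact absurd h2 (by omega)
  · rfl

theorem cnd_succ {n m : ℕ} (h00 : ¬(n = 0 ∧ m = 0)) : cnd (n+1) m = mu (cnd n m) := by
  have h1 : ¬((n+1) = 0 ∧ m = 0) := by omega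
  simp only [cnd, if_neg h00, if_neg h1]
  rw [Function.iterate_succ_apply']

theorem cnd_succ_eq (n m : ℕ) : ∃ Y, isSeq Y ∧ cnd (n+1) m = mu Y := by
  by_cases h00 : n = 0 ∧ m = 0
  · obtain ⟨rfl, rfl⟩ := h00
    exact ⟨(fun _ => 0), fun k => by simp, cnd_one_zero⟩
  · exact ⟨cnd n m, (cnd_spec n m).1.1, cnd_succ h00⟩

theorem two_le_pow {n : ℕ} (hn : 1 ≤ n) : 2 ≤ 2^n := by
  calc (2:ℕ) = 2^1 := by norm_num
  _ ≤ 2^n := Nat.pow_le_pow_right (by norm_num) hn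

/-- The master lower-bound lemma. -/
theorem master : ∀ n m (b : ℕ → ℕ), Wp b → periodicSmallest (2^n * (2*m+1)) b →
    lexLe (cnd n m) b ∨ b = (fun _ => 0) := by
  intro n
  induction n with
  | zero =>
    intro m b hW hP
    by_cases hb0 : b = (fun _ => 0)
    · exact Or.inr hb0
    left
    have hbh : b 0 = 1 := Wp_head hW hb0
    have hS := hW.1
    rcases Nat.eq_zero_or_pos m with hm | hm
    · -- period 1 : b is constant 1
      subst hm
      have hq : 2^0 * (2*0+1) = 1 := by norm_num
      rw [hq] at hP
      have hconst : ∀ j, b j = 1 := by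
        intro j
        induction j with
        | zero => exact hbh
        | succ u ihu =>
          have h1 : b (u + 1) = b u := periodic_add hP.2.1 u
          rw [h1, ihu]
      rw [cnd_zero_zero]
      right
      funext j
      exact (hconst j).symm
    · -- odd case
      have hq : 2^0 * (2*m+1) = 2*m+1 := by norm_num
      rw [hq] at hP
      obtain ⟨hq1, hper, hmin⟩ := hP
      rw [cnd_zero_odd hm]
      rcases lex_total (oneTenBlock m) b with h | h
      · exact h
      exfalso
      obtain ⟨i, hti, hlt⟩ := h
      have hiq : i < 2*m+1 := by
        by_contra hc
        push_neg at hc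
        have h1 : b i = b (i % (2*m+1)) := periodic_mod hper i
        have h2 : oneTenBlock m i = oneTenBlock m (i % (2*m+1)) := periodic_mod otb_per i
        have h3 : i % (2*m+1) < 2*m+1 := Nat.mod_lt _ (by omega)
        have h4 := hti (i % (2*m+1)) (by omega)
        omega
      have hoti : oneTenBlock m i = 1 ∧ b i = 0 := by
        have h1 := otb_isSeq (m := m) i
        have h2 := hS i
        omega
      have hi0 : i ≠ 0 := by
        intro h0
        rw [h0, hbh, otb_zero] at hlt
        omega
      have hiodd : i % 2 = 1 := by
        have := otb_mid hm i (by omega) hiq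
        omega
      rcases Nat.lt_or_ge i 3 with hi | hi
      · -- i = 1 : b starts 1 0, hence has no doubles, so period ≤ 2
        have hi1 : i = 1 := by omega
        have hb1 : b 1 = 0 := by rw [← hi1]; exact hoti.2
        have hnd := Wp_nodouble hW hbh hb1
        have hsh2 : shift^[2] b = b := by
          funext j
          rw [shift_iter]
          have h1 := hnd j
          have h2 := hnd (j+1)
          have e : j + 1 + 1 = j + 2 := by omega
          rw [e] at h2
          have h3 := hS j
          have h4 := hS (j+1)
          have h5 := hS (j+2)
          omega
        exact hmin 2 (by omega) (by omega) hsh2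
      · -- i ≥ 3 : the chase gives a contradiction with q odd
        have HC : ChaseHyp b (2*m+1) i :=
          { hS := hS, hW := hW, hq2 := by omega, hper := hper, hmin := hmin,
            hiodd := hiodd, hi3 := hi, hiq := hiq,
            hpre := by
              intro t ht
              rw [hti t ht]
              exact otb_low t (by omega),
            hbi := hoti.2 }
        exact HC.odd_q_false (by omega)
  | succ n ih =>
    intro m b hW hP
    by_cases hb0 : b = (fun _ => 0)
    · exact Or.inr hb0
    left
    rcases lex_total (cnd (n+1) m) b with hfine | h
    · exact hfine
    exfalso
    have hbh : b 0 = 1 := Wp_head hW hb0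
    have hS := hW.1
    set K := 2^n * (2*m+1) with hK
    have hK1 : 0 < K := by rw [hK]; positivity
    have hqK : 2^(n+1) * (2*m+1) = 2*K := by rw [hK, pow_succ]; ring
    rw [hqK] at hP
    obtain ⟨hq1, hper, hmin⟩ := hP
    -- First : all pairs are complementary
    have hcompl : ∀ j, b (2*j+1) ≠ b (2*j+2) := by
      rcases Nat.eq_zero_or_pos (b 1) with hb1 | hb1
      · have hnd := Wp_nodouble hW hbh hb1
        intro j hc
        exact (hnd (2*j+1)) (by rw [show 2*j+1+1 = 2*j+2 from rfl]; exact hc)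
      · have hb1' : b 1 = 1 := by have := hS 1; omega
        obtain ⟨Y, hYS, hYeq⟩ := cnd_succ_eq n m
        have hle_p : lexLe (cnd (n+1) m) (mu (fun _ => 1)) := by
          rw [hYeq]
          exact mu_mono (lexLe_one hYS)
        have hbP : lexLt b (mu (fun _ => 1)) := lexLt_of_lexLt_of_lexLe h hle_p
        obtain ⟨i, hti, hlt⟩ := hbP
        have hPseq : ∀ t, mu (fun _ => 1) t ≤ 1 := by
          intro t
          rw [mu_one_val]
          split <;> omega
        have hiq : i < 2*K := by
          by_contra hc
          push_neg at hc
          rcases Nat.eq_or_lt_of_le hc with hc' | hc'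
          · -- i = 2K : b i < P i with P (2K) = 0
            have h1 : b (0 + 2*K) = b 0 := periodic_add hper 0
            rw [Nat.zero_add] at h1
            rw [← hc'] at hlt
            have h2 : mu (fun _ => 1) (2*K) = 0 := by
              rw [mu_one_val, if_neg (by omega)]
              omega
            omega
          · -- i > 2K : tie at 2K is contradictory
            have h1 : b (0 + 2*K) = b 0 := periodic_add hper 0
            rw [Nat.zero_add] at h1
            have h2 := hti (2*K) hc'
            rw [mu_one_val, if_neg (by omega)] at h2
            omega
        have hbi0 : b i = 0 ∧ mu (fun _ => 1) i = 1 := by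
          have h1 := hPseq i
          have h2 := hS i
          omega
        have hi0 : i ≠ 0 := by
          intro h0
          rw [h0, hbh, mu_zero] at hlt
          omega
        have hi1 : i ≠ 1 := by
          intro h1
          rw [h1, hb1'] at hlt
          rw [h1] at hbi0
          omega
        have hiodd : i % 2 = 1 := by
          have := hbi0.2
          rw [mu_one_val, if_neg hi0] at this
          omega
        have HC : ChaseHyp b (2*K) i :=
          { hS := hS, hW := hW, hq2 := by omega, hper := hper, hmin := hmin,
            hiodd := hiodd, hi3 := by omega, hiq := hiq,
            hpre := by
              intro t ht
              rw [hti t ht]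
              exact mu_one_val t,
            hbi := hbi0.1 }
        exact HC.pairs_compl (by omega)
    -- Extract the decoded sequence δ
    obtain ⟨δ, hδdef⟩ : ∃ δ : ℕ → ℕ, ∀ j, δ j = b (2*j+1) := ⟨_, fun j => rfl⟩
    have hδS : isSeq δ := fun j => by rw [hδdef]; exact hS _
    have hbmu : b = mu δ := by
      funext t
      rcases Nat.eq_zero_or_pos t with h0 | hpos
      · subst h0; rw [mu_zero]; exact hbh
      · rcases Nat.even_or_odd t with he | ho
        · obtain ⟨v, rfl⟩ : ∃ v, t = 2*v+2 := by
            obtain ⟨u, hu⟩ := he; exact ⟨u - 1, by omega⟩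
          rw [mu_even, hδdef]
          have h1 := hcompl v
          have h2 := hS (2*v+1)
          have h3 := hS (2*v+2)
          omega
        · obtain ⟨v, rfl⟩ := ho
          rw [mu_odd, hδdef]
    have hWδ : Wp δ := by
      refine ⟨hδS, fun t ht => ⟨?_, ?_⟩⟩
      · intro h0
        have hb2t : b (2*t - 1) = 0 := by
          have e : 2*t-1 = 2*(t-1)+1 := by omega
          rw [e, ← hδdef (t-1)]
          exact h0
        have hle := (hW.2 (2*t) (by omega)).1 (by
          rw [show 2*t - 1 = 2*t - 1 from rfl] at hb2t
          exact hb2t)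
        rw [hbmu, shift_even_mu_0 ht h0] at hle
        exact mu_reflect hle
      · intro h1
        have hb2t : b (2*t - 1) = 1 := by
          have e : 2*t-1 = 2*(t-1)+1 := by omega
          rw [e, ← hδdef (t-1)]
          exact h1
        have hle := (hW.2 (2*t) (by omega)).2 hb2t
        rw [hbmu, mirror_mu hδS, shift_even_mu_1 ht h1] at hle
        exact Fm_reflect hle
    have hPmu : periodicSmallest (2*K) (mu δ) := by
      rw [← hbmu]
      exact ⟨hq1, hper, hmin⟩
    obtain ⟨hpsδ, hlastδ⟩ := extract_smallest hK1 hPmu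
    rcases ih m δ hWδ hpsδ with hIH | hIH
    · by_cases h00 : n = 0 ∧ m = 0
      · obtain ⟨rfl, rfl⟩ := h00
        have hδ1 : δ = fun _ => 1 := by
          apply eq_one_of_one_lexLe hδS
          rw [← cnd_zero_zero]
          exact hIH
        have hKval : K = 1 := by rw [hK]; norm_num
        have h2 := congrFun hper 0
        rw [shift_iter, hbmu, hδ1, hKval] at h2
        rw [mu_one_val, mu_one_val] at h2
        norm_num at h2
      · have hc : cnd (n+1) m = mu (cnd n m) := cnd_succ h00
        have hle2 : lexLe (cnd (n+1) m) b := by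
          rw [hc, hbmu]
          exact mu_mono hIH
        exact lexLt_irrefl b (lexLt_of_lexLt_of_lexLe h hle2)
    · -- δ = 0 : b = (10)^∞
      have hbeq : b = mu (fun _ => 0) := by rw [hbmu, hIH]
      have hps2 : periodicSmallest 2 b := by rw [hbeq]; exact ps_t10
      have h2K : 2*K = 2 := ps_unique ⟨hq1, hper, hmin⟩ hps2
      have hKval : K = 1 := by omega
      have hp1 : 1 ≤ 2^n := Nat.one_le_two_pow
      have hn0 : n = 0 ∧ m = 0 := by
        constructor
        · by_contra hc
          have hn1 : 1 ≤ n := by omega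
          have h2 : 2 ≤ 2^n := two_le_pow hn1
          have hmul : 2^n * 1 ≤ 2^n * (2*m+1) := Nat.mul_le_mul_left _ (by omega)
          rw [Nat.mul_one] at hmul
          omega
        · by_contra hc
          have hm1 : 1 ≤ m := by omega
          have hmul : 1 * (2*m+1) ≤ 2^n * (2*m+1) := Nat.mul_le_mul_right _ hp1
          rw [Nat.one_mul] at hmul
          omega
      obtain ⟨rfl, rfl⟩ := hn0
      rw [cnd_one_zero, ← hbeq] at h
      exact lexLt_irrefl b h

end Stmt15
/-- Construction of a_k, where k = 2^n(2m+1): a_1 = 1^∞; a_{2^n} = μ^n(0^∞) for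
n ≥ 1; and a_k = μ^n((1(10)^m)^∞) for m ≥ 1. -/
theorem stmt15 (n m : ℕ) (a : ℕ → ℕ) (ha : minGamma (2 ^ n * (2 * m + 1)) a) :
    (n = 0 ∧ m = 0 → a = fun _ => 1) ∧
    (m = 0 → 1 ≤ n → a = mu^[n] (fun _ => 0)) ∧
    (1 ≤ m → a = mu^[n] (oneTenBlock m)) := by
  obtain ⟨⟨hGa, hPa⟩, hmin⟩ := ha
  have key : a = Stmt15.cnd n m := by
    have h1 : lexLe a (Stmt15.cnd n m) :=
      hmin (Stmt15.cnd n m) (Stmt15.cnd_spec n m).1 (Stmt15.cnd_spec n m).2.1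
    have h2 : lexLe (Stmt15.cnd n m) a ∨ a = (fun _ => 0) :=
      Stmt15.master n m a (Stmt15.gamma_Wp hGa) hPa
    rcases h2 with h2 | h2
    · exact Stmt15.lexLe_antisymm h1 h2
    · exfalso
      have hh := Stmt15.gamma_head hGa
      rw [h2] at hh
      simp at hh
  refine ⟨?_, ?_, ?_⟩
  · rintro ⟨rfl, rfl⟩
    rw [key, Stmt15.cnd_zero_zero]
  · rintro rfl hn
    rw [key]
    unfold Stmt15.cnd
    rw [if_neg (by omega : ¬(n = 0 ∧ (0:ℕ) = 0)), if_pos rfl]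
  · intro hm
    rw [key]
    unfold Stmt15.cnd
    rw [if_neg (by omega : ¬(n = 0 ∧ m = 0)), if_neg (by omega : ¬ m = 0)]
end

section
/- Write k = 2^n(2m+1) with n, m ≥ 0. Then: a_1 = 1^∞ = 𝔪_1^∞; if m = 0 and n ≥ 1 then a_k is the periodic sequence whose period block (of length 2^n) is 𝔪_1 𝔪_2 … 𝔪_{2^n−1} (1 − 𝔪_{2^n}); and if m ≥ 1 then a_k is the periodic sequence whose period block (of length 2^n(2m+1)) is 𝔪_1 𝔪_2 … 𝔪_{3·2^n} followed by m − 1 copies of the block 𝔪_1 𝔪_2 … 𝔪_{2^{n+1}−1} (1 − 𝔪_{2^{n+1}}). -/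
/-- The Thue–Morse sequence: 𝔪_k = (sum of binary digits of k) mod 2. -/
def thueMorse (k : ℕ) : ℕ := (Nat.digits 2 k).sum % 2

/-- The shifted Thue–Morse sequence L = (𝔪_1, 𝔪_2, …). -/
def L : ℕ → ℕ := fun n => thueMorse (n + 1)

/-- The periodic sequence with block 𝔪_1 𝔪_2 … 𝔪_{2^n-1} (1-𝔪_{2^n}) of
length 2^n. -/
def tmBlockPow (n : ℕ) : ℕ → ℕ := fun i =>
  if i % 2 ^ n = 2 ^ n - 1 then 1 - thueMorse (2 ^ n) else thueMorse (i % 2 ^ n + 1)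

/-- The periodic sequence with block 𝔪_1 … 𝔪_{3·2^n} followed by m-1 copies of
𝔪_1 … 𝔪_{2^{n+1}-1} (1-𝔪_{2^{n+1}}), of total length 2^n(2m+1). -/
def tmBlockOdd (n m : ℕ) : ℕ → ℕ := fun i =>
  let r := i % (2 ^ n * (2 * m + 1))
  if r < 3 * 2 ^ n then thueMorse (r + 1)
  else
    let s := (r - 3 * 2 ^ n) % 2 ^ (n + 1)
    if s = 2 ^ (n + 1) - 1 then 1 - thueMorse (2 ^ (n + 1)) else thueMorse (s + 1)

-- ===== infrastructure =====

lemma shiftIter (a : ℕ → ℕ) (p : ℕ) : shift^[p] a = fun n => a (n + p) := by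
  induction p with
  | zero => rfl
  | succ p ih =>
    rw [Function.iterate_succ_apply', ih]
    funext n
    show a (n + 1 + p) = a (n + (p+1))
    congr 1; omega

lemma shiftIter_apply (a : ℕ → ℕ) (p n : ℕ) : shift^[p] a n = a (n + p) := by
  rw [shiftIter]

lemma lexLe_refl (a : ℕ → ℕ) : lexLe a a := Or.inr rfl

lemma lexLt_of_agree {a b : ℕ → ℕ} (k : ℕ) (h : ∀ j, j < k → a j = b j) (hk : a k < b k) :
    lexLt a b := ⟨k, h, hk⟩

lemma le_of_lexLe_agree {a b : ℕ → ℕ} (h : lexLe a b) (j : ℕ) (hag : ∀ t, t < j → a t = b t) :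
    a j ≤ b j := by
  rcases h with ⟨k, hk, hlt⟩ | rfl
  · rcases lt_trichotomy k j with h1 | rfl | h1
    · exact absurd (hag k h1) (Nat.ne_of_lt hlt)
    · exact le_of_lt hlt
    · exact le_of_eq (hk j h1)
  · exact le_rfl

lemma lexLe_antisymm {a b : ℕ → ℕ} (h1 : lexLe a b) (h2 : lexLe b a) : a = b := by
  rcases h1 with ⟨k, hk, hlt⟩ | rfl
  · have := le_of_lexLe_agree h2 k (fun t ht => (hk t ht).symm)
    omega
  · rfl

lemma lexLe_tail {x y : ℕ → ℕ} (h : lexLe x y) (h0 : x 0 = y 0) :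
    lexLe (shift x) (shift y) := by
  rcases h with ⟨k, hk, hlt⟩ | rfl
  · cases k with
    | zero => omega
    | succ j =>
      exact Or.inl ⟨j, fun t ht => hk (t+1) (by omega), hlt⟩
  · exact lexLe_refl _

lemma parity_cases (n : ℕ) : n = 0 ∨ (∃ i, n = 2*i+1) ∨ (∃ i, n = 2*i+2) := by
  rcases Nat.even_or_odd n with ⟨i, hi⟩ | ⟨i, hi⟩
  · rcases Nat.eq_zero_or_pos i with h | h
    · left; omega
    · right; right; exact ⟨i - 1, by omega⟩
  · right; left; exact ⟨i, by omega⟩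

-- ===== periods =====

def isPeriod (p : ℕ) (a : ℕ → ℕ) : Prop := ∀ n, a (n + p) = a n

lemma isPeriod_iff {p : ℕ} {a : ℕ → ℕ} : shift^[p] a = a ↔ isPeriod p a := by
  rw [shiftIter]
  constructor
  · intro h n; exact congrFun h n
  · intro h; funext n; exact h n

lemma isPeriod.mod_eq {p : ℕ} {a : ℕ → ℕ} (h : isPeriod p a) (hp : 0 < p) (n : ℕ) :
    a n = a (n % p) := by
  induction n using Nat.strong_induction_on with
  | _ n ih =>
    rcases Nat.lt_or_ge n p with h1 | h1
    · rw [Nat.mod_eq_of_lt h1]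
    · have e1 : a n = a (n - p) := by
        have := h (n - p); rw [show n - p + p = n by omega] at this; exact this
      rw [e1, ih (n - p) (by omega), Nat.mod_eq_sub_mod h1]

lemma isPeriod_sub {p q : ℕ} {a : ℕ → ℕ} (hp : isPeriod p a) (hq : isPeriod q a) (h : q ≤ p) :
    isPeriod (p - q) a := by
  intro n
  have := hp n
  rw [show n + p = (n + (p - q)) + q by omega] at this
  rw [← this, hq]

lemma isPeriod_mod {p q : ℕ} {a : ℕ → ℕ} (hp : isPeriod p a) (hq : isPeriod q a) (h : 0 < q) :
    isPeriod (p % q) a := by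
  induction p using Nat.strong_induction_on with
  | _ p ih =>
    rcases Nat.lt_or_ge p q with h1 | h1
    · rwa [Nat.mod_eq_of_lt h1]
    · have := ih (p - q) (by omega) (isPeriod_sub hp hq h1)
      rwa [Nat.mod_eq_sub_mod h1]

-- ===== theta and Phi =====

def theta (e : ℕ → ℕ) : ℕ → ℕ := fun n => if n % 2 = 0 then e (n / 2) else 1 - e (n / 2)
def Phi (e : ℕ → ℕ) : ℕ → ℕ := fun n => if n = 0 then 1 else theta e (n - 1)

lemma theta_even (e : ℕ → ℕ) (i : ℕ) : theta e (2*i) = e i := by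
  have h1 : (2*i) % 2 = 0 := by omega
  have h2 : (2*i) / 2 = i := by omega
  simp [theta, h1, h2]

lemma theta_odd (e : ℕ → ℕ) (i : ℕ) : theta e (2*i+1) = 1 - e i := by
  have h1 : (2*i+1) % 2 = 1 := by omega
  have h2 : (2*i+1) / 2 = i := by omega
  simp [theta, h1, h2]

lemma Phi_zero (e : ℕ → ℕ) : Phi e 0 = 1 := rfl

lemma Phi_odd (e : ℕ → ℕ) (i : ℕ) : Phi e (2*i+1) = e i := by
  show (if 2*i+1 = 0 then 1 else theta e (2*i+1-1)) = e i
  rw [if_neg (by omega), show 2*i+1-1 = 2*i by omega, theta_even]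

lemma Phi_even (e : ℕ → ℕ) (i : ℕ) : Phi e (2*i+2) = 1 - e i := by
  show (if 2*i+2 = 0 then 1 else theta e (2*i+2-1)) = 1 - e i
  rw [if_neg (by omega), show 2*i+2-1 = 2*i+1 by omega, theta_odd]

lemma isSeq_Phi {e : ℕ → ℕ} (h : isSeq e) : isSeq (Phi e) := by
  intro n
  rcases parity_cases n with rfl | ⟨i, rfl⟩ | ⟨i, rfl⟩
  · exact le_refl 1
  · rw [Phi_odd]; exact h i
  · rw [Phi_even]; omega

lemma theta_mono {x y : ℕ → ℕ} (h : lexLe x y) : lexLe (theta x) (theta y) := by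
  rcases h with ⟨k, hk, hlt⟩ | rfl
  · refine Or.inl ⟨2*k, ?_, ?_⟩
    · intro j hj
      rcases parity_cases j with rfl | ⟨i, rfl⟩ | ⟨i, rfl⟩
      · rw [show (0:ℕ) = 2*0 by rfl, theta_even, theta_even, hk 0 (by omega)]
      · rw [theta_odd, theta_odd, hk i (by omega)]
      · rw [show 2*i+2 = 2*(i+1) by omega, theta_even, theta_even, hk (i+1) (by omega)]
    · rw [theta_even, theta_even]; exact hlt
  · exact lexLe_refl _

lemma theta_reflect {x y : ℕ → ℕ} (h : lexLe (theta x) (theta y)) : lexLe x y := by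
  rcases h with ⟨k, hk, hlt⟩ | heq
  · rcases parity_cases k with rfl | ⟨i, rfl⟩ | ⟨i, rfl⟩
    · refine Or.inl ⟨0, by omega, ?_⟩
      rw [show (0:ℕ) = 2*0 by rfl, ← theta_even x, ← theta_even y]; exact hlt
    · exfalso
      have h1 := hk (2*i) (by omega)
      rw [theta_even, theta_even] at h1
      rw [theta_odd, theta_odd, h1] at hlt
      omega
    · refine Or.inl ⟨i+1, ?_, ?_⟩
      · intro j hj
        have h1 := hk (2*j) (by omega)
        rwa [theta_even, theta_even] at h1
      · have := hlt
        rw [show 2*i+2 = 2*(i+1) by omega, theta_even, theta_even] at this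
        exact this
  · right; funext i
    have := congrFun heq (2*i)
    rwa [theta_even, theta_even] at this

lemma Phi_mono {x y : ℕ → ℕ} (h : lexLe x y) : lexLe (Phi x) (Phi y) := by
  rcases h with ⟨k, hk, hlt⟩ | rfl
  · refine Or.inl ⟨2*k+1, ?_, ?_⟩
    · intro j hj
      rcases parity_cases j with rfl | ⟨i, rfl⟩ | ⟨i, rfl⟩
      · rfl
      · rw [Phi_odd, Phi_odd, hk i (by omega)]
      · rw [Phi_even, Phi_even, hk i (by omega)]
    · rw [Phi_odd, Phi_odd]; exact hlt
  · exact lexLe_refl _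

-- cons
def cons (x : ℕ) (s : ℕ → ℕ) : ℕ → ℕ := fun n => match n with | 0 => x | (n+1) => s n

lemma cons_zero (x : ℕ) (s : ℕ → ℕ) : cons x s 0 = x := rfl
lemma cons_succ (x : ℕ) (s : ℕ → ℕ) (n : ℕ) : cons x s (n+1) = s n := rfl

lemma lexLe_cons {s t : ℕ → ℕ} (x : ℕ) (h : lexLe s t) : lexLe (cons x s) (cons x t) := by
  rcases h with ⟨k, hk, hlt⟩ | rfl
  · refine Or.inl ⟨k+1, ?_, hlt⟩
    intro j hj
    cases j with
    | zero => rfl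
    | succ i => exact hk i (by omega)
  · exact lexLe_refl _

lemma lexLt_cons_lt {x y : ℕ} (s t : ℕ → ℕ) (h : x < y) : lexLt (cons x s) (cons y t) :=
  ⟨0, by omega, h⟩

-- ===== GammaW =====

def GammaW (a : ℕ → ℕ) : Prop :=
  isSeq a ∧ a 0 = 1 ∧
    ∀ q, (a q = 0 → lexLe (shift^[q+1] a) a) ∧ (a q = 1 → lexLe (mirror a) (shift^[q+1] a))

lemma Gamma_zero {a : ℕ → ℕ} (h : Gamma a) : a 0 = 1 := by
  have h1 := (h.2 0).1
  have h2 := le_of_lexLe_agree h1 0 (by omega)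
  have h3 := h.1 0
  simp only [Function.iterate_zero, id_eq, mirror] at h2
  omega

lemma Gamma.toW {a : ℕ → ℕ} (h : Gamma a) : GammaW a :=
  ⟨h.1, Gamma_zero h, fun q => ⟨fun _ => (h.2 (q+1)).2, fun _ => (h.2 (q+1)).1⟩⟩

lemma zero_or_one {a : ℕ → ℕ} (h : isSeq a) (i : ℕ) : a i = 0 ∨ a i = 1 := by
  have := h i; omega

/-- workhorse: contradiction from the ⪯-condition -/
lemma up_contra {a : ℕ → ℕ} (hW : GammaW a) {q j : ℕ} (hq : a q = 0)
    (hag : ∀ t, t < j → a (q+1+t) = a t) (hgt : a j < a (q+1+j)) : False := by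
  have h := (hW.2.2 q).1 hq
  have h2 := le_of_lexLe_agree h j
    (fun t ht => by rw [shiftIter_apply, show t + (q+1) = q+1+t by omega]; exact hag t ht)
  rw [shiftIter_apply, show j + (q+1) = q+1+j by omega] at h2
  omega

/-- workhorse: contradiction from the mirror-condition -/
lemma lo_contra {a : ℕ → ℕ} (hW : GammaW a) {q j : ℕ} (hq : a q = 1)
    (hag : ∀ t, t < j → a (q+1+t) = 1 - a t) (hgt : a (q+1+j) < 1 - a j) : False := by
  have h := (hW.2.2 q).2 hq
  have h2 := le_of_lexLe_agree h j
    (fun t ht => by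
      rw [shiftIter_apply, show t + (q+1) = q+1+t by omega]
      show 1 - a t = a (q+1+t)
      rw [hag t ht])
  rw [shiftIter_apply, show j + (q+1) = q+1+j by omega] at h2
  simp only [mirror] at h2
  omega

-- ===== the sequence (10)^infty and its rigidity =====

def ten : ℕ → ℕ := fun n => if n % 2 = 0 then 1 else 0

lemma ten_char {a : ℕ → ℕ} (hW : GammaW a) (h1 : a 1 = 0) : a = ten := by
  have key : ∀ n, a n = ten n := by
    intro n
    induction n using Nat.strong_induction_on with
    | _ n ih =>
      rcases Nat.lt_or_ge n 2 with hn | hn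
      · interval_cases n
        · show a 0 = ten 0; rw [hW.2.1]; rfl
        · show a 1 = ten 1; rw [h1]; rfl
      · by_cases hpar : n % 2 = 0
        · -- show a n = 1
          have hten : ten n = 1 := by simp [ten, hpar]
          rcases zero_or_one hW.1 n with h0 | h0
          · exfalso
            have hq : a (n-2) = 1 := by
              have := ih (n-2) (by omega)
              have : ten (n-2) = 1 := by simp [ten]; omega
              omega
            refine lo_contra hW (q := n-2) (j := 1) hq ?_ ?_
            · intro t ht
              have ht0 : t = 0 := by omega
              subst ht0
              have e1 : a (n-1) = 0 := by
                have := ih (n-1) (by omega)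
                have : ten (n-1) = 0 := by simp [ten]; omega
                omega
              rw [show n-2+1+0 = n-1 by omega, e1, hW.2.1]
            · rw [show n-2+1+1 = n by omega, h0, h1]
              omega
          · rw [h0, hten]
        · -- n odd: show a n = 0
          have hten : ten n = 0 := by simp [ten, hpar]
          rcases zero_or_one hW.1 n with h0 | h0
          · rw [h0, hten]
          · exfalso
            have hq : a (n-2) = 0 := by
              have := ih (n-2) (by omega)
              have : ten (n-2) = 0 := by simp [ten]; omega
              omega
            refine up_contra hW (q := n-2) (j := 1) hq ?_ ?_
            · intro t ht
              have ht0 : t = 0 := by omega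
              subst ht0
              have e1 : a (n-1) = 1 := by
                have := ih (n-1) (by omega)
                have : ten (n-1) = 1 := by simp [ten]; omega
                omega
              rw [show n-2+1+0 = n-1 by omega, e1, hW.2.1]
            · rw [show n-2+1+1 = n by omega, h0, h1]
              omega
  funext n; exact key n

-- ===== Phi has no odd period =====

lemma Phi_no_odd_period {e : ℕ → ℕ} (hs : isSeq e) (r : ℕ) : ¬ isPeriod (2*r+1) (Phi e) := by
  intro h
  rcases Nat.eq_zero_or_pos r with rfl | hr
  · have h1 := h 0
    have h2 := h 1
    rw [show 0 + (2*0+1) = 2*0+1 by ring] at h1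
    rw [Phi_odd, Phi_zero] at h1
    rw [show 1 + (2*0+1) = 2*0+2 by ring] at h2
    rw [Phi_even, show (1:ℕ) = 2*0+1 by ring, Phi_odd] at h2
    omega
  · have hA : ∀ i, e (i + r) = 1 - e i := by
      intro i
      have h1 := h (2*i+1)
      rw [show 2*i+1 + (2*r+1) = 2*(i+r)+2 by ring, Phi_even, Phi_odd] at h1
      have := hs i; have := hs (i+r); omega
    have hB : ∀ i, e (i + r + 1) = 1 - e i := by
      intro i
      have h1 := h (2*i+2)
      rw [show 2*i+2 + (2*r+1) = 2*(i+r+1)+1 by ring, Phi_odd, Phi_even] at h1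
      exact h1
    have hC : ∀ i, e (i + r + 1) = e (i + r) := by
      intro i; rw [hB i, hA i]
    have hD : ∀ t, e (r + t) = e r := by
      intro t
      induction t with
      | zero => rfl
      | succ t ih =>
        have := hC t
        rw [show r + (t+1) = t + r + 1 by ring, this, show t + r = r + t by ring, ih]
    have h1 := hA r
    have h2 := hD r
    rw [show r + r = r + r by rfl] at h2
    have := hs r
    omega

-- ===== MASTER part 1: the first pair violation cannot be (0,0) =====

lemma master_W2 {a : ℕ → ℕ} (hW : GammaW a) (ha1 : a 1 = 1) {i0 : ℕ} (hi0 : 1 ≤ i0)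
    (halt : ∀ s, s < i0 → a (2*s+1) + a (2*s+2) = 1)
    (hv1 : a (2*i0+1) = 0) (hv2 : a (2*i0+2) = 0) : False := by
  have ha2 : a 2 = 0 := by
    have := halt 0 (by omega)
    simp only [Nat.mul_zero, Nat.zero_add] at this
    omega
  rcases zero_or_one hW.1 (2*(i0-1)+1) with hlast | hlast
  · -- Case B : a (2(i0-1)+1) = 0
    have hi2 : 2 ≤ i0 := by
      by_contra hcon
      have h1 : i0 = 1 := by omega
      rw [show 2*(i0-1)+1 = 1 by omega] at hlast
      omega
    set T := Nat.findGreatest (fun u => a (2*u+1) = 1) (i0 - 1) with hTdef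
    have hT1 : a (2*T+1) = 1 := by
      rw [hTdef]
      exact Nat.findGreatest_spec (P := fun u => a (2*u+1) = 1) (m := 0) (by omega)
        (by simpa using ha1)
    have hTb : T ≤ i0 - 1 := Nat.findGreatest_le _
    have hTne : T ≠ i0 - 1 := by
      intro hcon
      rw [hcon] at hT1; omega
    have hzero : ∀ u, T < u → u ≤ i0 - 1 → a (2*u+1) = 0 ∧ a (2*u+2) = 1 := by
      intro u h1 h2
      have h1' : Nat.findGreatest (fun u => a (2*u+1) = 1) (i0-1) < u := hTdef ▸ h1
      have hne : ¬ (a (2*u+1) = 1) :=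
        Nat.findGreatest_is_greatest (P := fun u => a (2*u+1) = 1) h1' h2
      have := halt u (by omega)
      have := hW.1 (2*u+1)
      omega
    set r := i0 - 1 - T with hrdef
    have hr1 : 1 ≤ r := by omega
    have haT2 : a (2*T+2) = 0 := by
      have := halt T (by omega); omega
    have claim : ∀ v, v < r → a (2*v+1) = 1 ∧ a (2*v+2) = 0 := by
      intro v
      induction v using Nat.strong_induction_on with
      | _ v ih =>
        intro hv
        have hfirst : a (2*v+1) = 1 := by
          rcases zero_or_one hW.1 (2*v+1) with h0 | h0
          · exfalso
            refine lo_contra hW (q := 2*T+1) (j := 2*v+1) hT1 ?_ ?_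
            · intro t ht
              rcases parity_cases t with rfl | ⟨w, rfl⟩ | ⟨w, rfl⟩
              · rw [show 2*T+1+1+0 = 2*T+2 by ring, haT2, hW.2.1]
              · rw [show 2*T+1+1+(2*w+1) = 2*(T+w+1)+1 by ring,
                    (hzero (T+w+1) (by omega) (by omega)).1, (ih w (by omega) (by omega)).1]
              · rw [show 2*T+1+1+(2*w+2) = 2*(T+w+1)+2 by ring,
                    (hzero (T+w+1) (by omega) (by omega)).2, (ih w (by omega) (by omega)).2]
            · rw [show 2*T+1+1+(2*v+1) = 2*(T+v+1)+1 by ring,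
                  (hzero (T+v+1) (by omega) (by omega)).1, h0]
              omega
          · exact h0
        have := halt v (by omega)
        exact ⟨hfirst, by omega⟩
    rcases zero_or_one hW.1 (2*r+1) with hr0 | hr0
    · refine lo_contra hW (q := 2*T+1) (j := 2*r+1) hT1 ?_ ?_
      · intro t ht
        rcases parity_cases t with rfl | ⟨w, rfl⟩ | ⟨w, rfl⟩
        · rw [show 2*T+1+1+0 = 2*T+2 by ring, haT2, hW.2.1]
        · rw [show 2*T+1+1+(2*w+1) = 2*(T+w+1)+1 by ring,
              (hzero (T+w+1) (by omega) (by omega)).1, (claim w (by omega)).1]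
        · rw [show 2*T+1+1+(2*w+2) = 2*(T+w+1)+2 by ring,
              (hzero (T+w+1) (by omega) (by omega)).2, (claim w (by omega)).2]
      · rw [show 2*T+1+1+(2*r+1) = 2*(T+r+1)+1 by ring, show T+r+1 = i0 by omega, hv1, hr0]
        omega
    · have hr2 : a (2*r+2) = 0 := by
        have := halt r (by omega); omega
      refine lo_contra hW (q := 2*T+1) (j := 2*r+2) hT1 ?_ ?_
      · intro t ht
        rcases parity_cases t with rfl | ⟨w, rfl⟩ | ⟨w, rfl⟩
        · rw [show 2*T+1+1+0 = 2*T+2 by ring, haT2, hW.2.1]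
        · rcases Nat.lt_or_ge w r with hw | hw
          · rw [show 2*T+1+1+(2*w+1) = 2*(T+w+1)+1 by ring,
                (hzero (T+w+1) (by omega) (by omega)).1, (claim w (by omega)).1]
          · have hwr : w = r := by omega
            rw [hwr, show 2*T+1+1+(2*r+1) = 2*(T+r+1)+1 by ring, show T+r+1 = i0 by omega,
              hv1, hr0]
        · rw [show 2*T+1+1+(2*w+2) = 2*(T+w+1)+2 by ring,
              (hzero (T+w+1) (by omega) (by omega)).2, (claim w (by omega)).2]
      · rw [show 2*T+1+1+(2*r+2) = 2*(T+r+1)+2 by ring, show T+r+1 = i0 by omega, hv2, hr2]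
        omega
  · -- Case A : a (2(i0-1)+1) = 1
    have hA2 : a (2*i0) = 0 := by
      have := halt (i0-1) (by omega)
      rw [show 2*(i0-1)+2 = 2*i0 by omega] at this
      omega
    refine lo_contra hW (q := 2*i0-1) (j := 2) ?_ ?_ ?_
    · rw [show 2*i0-1 = 2*(i0-1)+1 by omega]; exact hlast
    · intro t ht
      interval_cases t
      · rw [show 2*i0-1+1+0 = 2*i0 by omega, hA2, hW.2.1]
      · rw [show 2*i0-1+1+1 = 2*i0+1 by omega, hv1, ha1]
    · rw [show 2*i0-1+1+2 = 2*i0+2 by omega, hv2, ha2]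
      omega

-- ===== MASTER part 2: before a (1,1) violation all pairs are (1,0) =====

lemma master_W3 {a : ℕ → ℕ} (hW : GammaW a) {i0 : ℕ}
    (halt : ∀ s, s < i0 → a (2*s+1) + a (2*s+2) = 1)
    (hv1 : a (2*i0+1) = 1) (hv2 : a (2*i0+2) = 1) :
    ∀ s, s < i0 → a (2*s+1) = 1 ∧ a (2*s+2) = 0 := by
  have key : ∀ d s, s < i0 → i0 - 1 - s = d → a (2*s+1) = 1 := by
    intro d
    induction d using Nat.strong_induction_on with
    | _ d ih =>
      intro s hs hd
      have forced : ∀ s', s < s' → s' < i0 → a (2*s'+1) = 1 ∧ a (2*s'+2) = 0 := by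
        intro s' h1 h2
        have e1 : a (2*s'+1) = 1 := ih (i0 - 1 - s') (by omega) s' h2 rfl
        have e2 := halt s' h2
        exact ⟨e1, by omega⟩
      have hup1 : ∀ w, s + w + 1 ≤ i0 → a (2*(s+w+1)+1) = 1 := by
        intro w hw
        rcases Nat.lt_or_ge (s+w+1) i0 with h | h
        · exact (forced _ (by omega) h).1
        · rw [show s+w+1 = i0 by omega]; exact hv1
      have hup2 : ∀ w, s + w + 1 ≤ i0 - 1 → a (2*(s+w+1)+2) = 0 :=
        fun w hw => (forced _ (by omega) (by omega)).2
      rcases zero_or_one hW.1 (2*s+1) with hs0 | hs0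
      · exfalso
        have hs2 : a (2*s+2) = 1 := by have := halt s hs; omega
        set dd := i0 - 1 - s with hdd
        by_cases hex : ∃ w, a (2*w+1) = 0 ∧ w ≤ dd
        · set w0 := Nat.find hex with hw0def
          have hw0 := Nat.find_spec hex
          have hmin : ∀ w, w < w0 → a (2*w+1) = 1 ∧ a (2*w+2) = 0 := by
            intro w hww
            have hnot := Nat.find_min hex hww
            have h1 : a (2*w+1) = 1 := by
              rcases zero_or_one hW.1 (2*w+1) with h | h
              · exact absurd ⟨h, by omega⟩ hnot
              · exact h
            have := halt w (by omega)
            exact ⟨h1, by omega⟩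
          refine up_contra hW (q := 2*s+1) (j := 2*w0+1) hs0 ?_ ?_
          · intro t ht
            rcases parity_cases t with rfl | ⟨w, rfl⟩ | ⟨w, rfl⟩
            · rw [show 2*s+1+1+0 = 2*s+2 by ring, hs2, hW.2.1]
            · rw [show 2*s+1+1+(2*w+1) = 2*(s+w+1)+1 by ring,
                  hup1 w (by omega), (hmin w (by omega)).1]
            · rw [show 2*s+1+1+(2*w+2) = 2*(s+w+1)+2 by ring,
                  hup2 w (by omega), (hmin w (by omega)).2]
          · rw [show 2*s+1+1+(2*w0+1) = 2*(s+w0+1)+1 by ring, hup1 w0 (by omega), hw0.1]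
            omega
        · push_neg at hex
          have hall : ∀ w, w ≤ dd → a (2*w+1) = 1 ∧ a (2*w+2) = 0 := by
            intro w hw
            have h1 : a (2*w+1) = 1 := by
              rcases zero_or_one hW.1 (2*w+1) with h | h
              · exact absurd hw (by simpa [h] using hex w)
              · exact h
            have := halt w (by omega)
            exact ⟨h1, by omega⟩
          refine up_contra hW (q := 2*s+1) (j := 2*dd+2) hs0 ?_ ?_
          · intro t ht
            rcases parity_cases t with rfl | ⟨w, rfl⟩ | ⟨w, rfl⟩
            · rw [show 2*s+1+1+0 = 2*s+2 by ring, hs2, hW.2.1]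
            · rw [show 2*s+1+1+(2*w+1) = 2*(s+w+1)+1 by ring,
                  hup1 w (by omega), (hall w (by omega)).1]
            · rw [show 2*s+1+1+(2*w+2) = 2*(s+w+1)+2 by ring,
                  hup2 w (by omega), (hall w (by omega)).2]
          · rw [show 2*s+1+1+(2*dd+2) = 2*(s+dd+1)+2 by ring, show s+dd+1 = i0 by omega, hv2,
                (hall dd (by omega)).2]
            omega
      · exact hs0
  intro s hs
  have h1 := key (i0 - 1 - s) s hs rfl
  have := halt s hs
  exact ⟨h1, by omega⟩

-- ===== desubstitution =====

lemma desub {a : ℕ → ℕ} (hW : GammaW a) (ha1 : a 1 = 1)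
    (halt : ∀ s, a (2*s+1) + a (2*s+2) = 1) :
    a = Phi (fun i => a (2*i+1)) ∧ GammaW (fun i => a (2*i+1)) := by
  set E := fun i => a (2*i+1) with hE
  have hseq := hW.1
  have hsum : ∀ i, a (2*i+2) = 1 - E i := by
    intro i
    have := halt i
    have := hseq (2*i+1)
    simp only [hE]
    omega
  have haPhi : a = Phi E := by
    funext n
    rcases parity_cases n with rfl | ⟨i, rfl⟩ | ⟨i, rfl⟩
    · rw [hW.2.1, Phi_zero]
    · rw [Phi_odd]
    · rw [Phi_even, hsum]
  have shift_a : shift a = theta E := by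
    funext n
    rcases parity_cases n with rfl | ⟨i, rfl⟩ | ⟨i, rfl⟩
    · show a 1 = theta E 0
      rw [show (0:ℕ) = 2*0 from rfl, theta_even]
    · show a (2*i+1+1) = theta E (2*i+1)
      rw [theta_odd, show 2*i+1+1 = 2*i+2 by ring, hsum]
    · show a (2*i+2+1) = theta E (2*i+2)
      rw [show 2*i+2 = 2*(i+1) by ring, theta_even]
  have shift_big : ∀ q, shift^[2*q+3] a = theta (shift^[q+1] E) := by
    intro q
    funext n
    rw [shiftIter_apply]
    rcases parity_cases n with rfl | ⟨i, rfl⟩ | ⟨i, rfl⟩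
    · rw [show 0 + (2*q+3) = 2*(q+1)+1 by ring, show (0:ℕ) = 2*0 from rfl, theta_even,
        shiftIter_apply, show 0 + (q+1) = q+1 by ring]
    · rw [show 2*i+1 + (2*q+3) = 2*(i+q+1)+2 by ring, theta_odd, shiftIter_apply, hsum (i+q+1),
        show i + (q+1) = i+q+1 by ring]
    · rw [show 2*i+2 + (2*q+3) = 2*(i+q+2)+1 by ring, show 2*i+2 = 2*(i+1) by ring, theta_even,
        shiftIter_apply, show i+1 + (q+1) = i+q+2 by ring]
  have shift_mirror : shift (mirror a) = theta (mirror E) := by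
    funext n
    rcases parity_cases n with rfl | ⟨i, rfl⟩ | ⟨i, rfl⟩
    · show mirror a 1 = theta (mirror E) 0
      rw [show (0:ℕ) = 2*0 from rfl, theta_even]
      rfl
    · show mirror a (2*i+1+1) = theta (mirror E) (2*i+1)
      rw [theta_odd]
      show 1 - a (2*i+2) = 1 - mirror E i
      rw [hsum]
      show 1 - (1 - E i) = 1 - (1 - E i)
      rfl
    · show mirror a (2*i+2+1) = theta (mirror E) (2*i+2)
      rw [show 2*i+2 = 2*(i+1) by ring, theta_even]
      show 1 - a (2*(i+1)+1) = mirror E (i+1)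
      rfl
  refine ⟨haPhi, ⟨fun i => hseq (2*i+1), ha1, ?_⟩⟩
  intro q
  constructor
  · intro hq
    have h := (hW.2.2 (2*q+1)).1 hq
    rw [show 2*q+1+1 = 2*q+2 by ring] at h
    have hhead : shift^[2*q+2] a 0 = a 0 := by
      rw [shiftIter_apply, show 0 + (2*q+2) = 2*q+2 by ring, hsum, hW.2.1]
      simp only [hE] at hq ⊢
      omega
    have h2 := lexLe_tail h hhead
    have h3 : shift (shift^[2*q+2] a) = theta (shift^[q+1] E) := by
      rw [← Function.iterate_succ_apply' shift (2*q+2) a]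
      show shift^[2*q+2+1] a = _
      rw [show 2*q+2+1 = 2*q+3 by ring]
      exact shift_big q
    rw [h3, shift_a] at h2
    exact theta_reflect h2
  · intro hq
    have h := (hW.2.2 (2*q+1)).2 hq
    rw [show 2*q+1+1 = 2*q+2 by ring] at h
    have hhead : mirror a 0 = shift^[2*q+2] a 0 := by
      rw [shiftIter_apply, show 0 + (2*q+2) = 2*q+2 by ring, hsum]
      show 1 - a 0 = 1 - E q
      rw [hW.2.1, hq]
    have h2 := lexLe_tail h hhead
    have h3 : shift (shift^[2*q+2] a) = theta (shift^[q+1] E) := by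
      rw [← Function.iterate_succ_apply' shift (2*q+2) a]
      show shift^[2*q+2+1] a = _
      rw [show 2*q+2+1 = 2*q+3 by ring]
      exact shift_big q
    rw [h3, shift_mirror] at h2
    exact theta_reflect h2

-- ===== the candidate minimal sequences =====

def one : ℕ → ℕ := fun _ => 1

def Bodd (m : ℕ) : ℕ → ℕ := fun n => if n % (2*m+1) = 0 ∨ (n % (2*m+1)) % 2 = 1 then 1 else 0

def BB : ℕ → ℕ → ℕ
  | k =>
    if h : 4 ≤ k ∧ k % 2 = 0 then Phi (BB (k/2))
    else if k = 2 then ten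
    else if k % 2 = 1 ∧ 3 ≤ k then Bodd (k/2)
    else one
termination_by k => k
decreasing_by omega

lemma BB_one : BB 1 = one := by rw [BB]; norm_num

lemma BB_two : BB 2 = ten := by rw [BB]; norm_num

lemma BB_odd {k : ℕ} (h1 : k % 2 = 1) (h2 : 3 ≤ k) : BB k = Bodd (k/2) := by
  rw [BB]
  rw [dif_neg (by omega), if_neg (by omega), if_pos ⟨h1, h2⟩]

lemma BB_even {k : ℕ} (h1 : k % 2 = 0) (h2 : 4 ≤ k) : BB k = Phi (BB (k/2)) := by
  rw [BB]
  rw [dif_pos ⟨h2, h1⟩]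

lemma Bodd_of_mod (m : ℕ) {n r : ℕ} (h : n % (2*m+1) = r) :
    Bodd m n = if r = 0 ∨ r % 2 = 1 then 1 else 0 := by
  show (if n % (2*m+1) = 0 ∨ (n % (2*m+1)) % 2 = 1 then 1 else 0) = _
  rw [h]

lemma isSeq_one : isSeq one := fun _ => le_refl 1
lemma isSeq_ten : isSeq ten := by intro n; show (if n % 2 = 0 then 1 else 0) ≤ 1; split <;> omega
lemma isSeq_Bodd (m : ℕ) : isSeq (Bodd m) := by
  intro n; show (if _ ∨ _ then 1 else 0) ≤ 1; split <;> omega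

lemma isSeq_BB (k : ℕ) : isSeq (BB k) := by
  induction k using Nat.strong_induction_on with
  | _ k ih =>
    by_cases h1 : 4 ≤ k ∧ k % 2 = 0
    · rw [BB_even h1.2 h1.1]; exact isSeq_Phi (ih (k/2) (by omega))
    · by_cases h2 : k = 2
      · rw [h2, BB_two]; exact isSeq_ten
      · by_cases h3 : k % 2 = 1 ∧ 3 ≤ k
        · rw [BB_odd h3.1 h3.2]; exact isSeq_Bodd _
        · have : k = 0 ∨ k = 1 := by omega
          rcases this with rfl | rfl
          · rw [BB]; norm_num; exact isSeq_one
          · rw [BB_one]; exact isSeq_one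

lemma BB_zero {k : ℕ} (hk : 1 ≤ k) : BB k 0 = 1 := by
  by_cases h1 : 4 ≤ k ∧ k % 2 = 0
  · rw [BB_even h1.2 h1.1]; rfl
  · by_cases h2 : k = 2
    · rw [h2, BB_two]; rfl
    · by_cases h3 : k % 2 = 1 ∧ 3 ≤ k
      · rw [BB_odd h3.1 h3.2, Bodd_of_mod _ (Nat.zero_mod _)]; norm_num
      · have : k = 1 := by omega
        rw [this, BB_one]; rfl

lemma BB_onetwo {k : ℕ} (hk : 3 ≤ k) : BB k 1 = 1 ∧ BB k 2 = 0 := by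
  by_cases h1 : 4 ≤ k ∧ k % 2 = 0
  · rw [BB_even h1.2 h1.1]
    constructor
    · rw [show (1:ℕ) = 2*0+1 by ring, Phi_odd]; exact BB_zero (by omega)
    · rw [show (2:ℕ) = 2*0+2 by ring, Phi_even]
      rw [BB_zero (by omega)]
  · have h3 : k % 2 = 1 ∧ 3 ≤ k := by
      constructor
      · omega
      · exact hk
    rw [BB_odd h3.1 h3.2]
    have hm : 1 ≤ k/2 := by omega
    have hK : 2*(k/2)+1 ≥ 3 := by omega
    constructor
    · rw [Bodd_of_mod _ (Nat.mod_eq_of_lt (by omega))]; norm_num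
    · rw [Bodd_of_mod _ (Nat.mod_eq_of_lt (by omega))]; norm_num

lemma BB_last {k : ℕ} (hk : 2 ≤ k) : BB k (k-1) = 0 := by
  induction k using Nat.strong_induction_on with
  | _ k ih =>
    by_cases h1 : 4 ≤ k ∧ k % 2 = 0
    · rw [BB_even h1.2 h1.1, show k-1 = 2*((k/2)-1)+1 by omega, Phi_odd]
      exact ih (k/2) (by omega) (by omega)
    · by_cases h2 : k = 2
      · subst h2; rw [BB_two]; rfl
      · have h3 : k % 2 = 1 ∧ 3 ≤ k := by omega
        rw [BB_odd h3.1 h3.2]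
        rw [Bodd_of_mod _ (Nat.mod_eq_of_lt (by omega))]
        rw [if_neg (by omega)]

-- ===== Gamma for the base sequences =====

lemma shift_one (j : ℕ) : shift^[j] one = one := by
  funext n; rw [shiftIter_apply]; rfl

lemma Gamma_one : Gamma one := by
  refine ⟨isSeq_one, fun k => ?_⟩
  rw [shift_one]
  exact ⟨Or.inl ⟨0, by omega, by show 1 - 1 < 1; omega⟩, lexLe_refl _⟩

lemma periodicSmallest_one : periodicSmallest 1 one :=
  ⟨le_refl 1, shift_one 1, fun j h1 h2 => by omega⟩

lemma ten_period : isPeriod 2 ten := by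
  intro n; show (if (n+2) % 2 = 0 then 1 else 0) = _
  rw [Nat.add_mod_right]
  rfl

lemma Gamma_ten : Gamma ten := by
  refine ⟨isSeq_ten, fun k => ?_⟩
  have hred : shift^[k] ten = shift^[k % 2] ten := by
    funext n
    rw [shiftIter_apply, shiftIter_apply]
    show (if (n + k) % 2 = 0 then 1 else 0) = (if (n + k % 2) % 2 = 0 then 1 else 0)
    have : (n + k) % 2 = (n + k % 2) % 2 := by omega
    rw [this]
  have hmirror : ∀ n, mirror ten n = (if n % 2 = 0 then 0 else 1) := by
    intro n; show 1 - (if n % 2 = 0 then 1 else 0) = _; split <;> rfl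
  rw [hred]
  have hk2 : k % 2 = 0 ∨ k % 2 = 1 := by omega
  rcases hk2 with h | h
  · rw [h]
    simp only [Function.iterate_zero, id_eq]
    constructor
    · refine Or.inl ⟨0, by omega, ?_⟩
      rw [hmirror]
      norm_num [ten]
    · exact lexLe_refl _
  · rw [h]
    constructor
    · right
      funext n
      rw [shiftIter_apply, hmirror]
      show _ = (if (n+1) % 2 = 0 then 1 else 0)
      by_cases hp : n % 2 = 0
      · rw [if_pos hp, if_neg (by omega)]
      · rw [if_neg hp, if_pos (by omega)]
    · refine Or.inl ⟨0, by omega, ?_⟩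
      rw [shiftIter_apply]
      show (if (0+1) % 2 = 0 then 1 else 0) < (if 0 % 2 = 0 then 1 else 0)
      norm_num

lemma periodicSmallest_ten : periodicSmallest 2 ten := by
  refine ⟨by omega, isPeriod_iff.mpr ten_period, ?_⟩
  intro j h1 h2
  have hj : j = 1 := by omega
  subst hj
  intro hcon
  have := congrFun hcon 0
  rw [shiftIter_apply] at this
  simp [ten] at this

-- ===== Gamma and period for Bodd =====

lemma Bodd_isPeriod (m : ℕ) : isPeriod (2*m+1) (Bodd m) := by
  intro n
  have : (n + (2*m+1)) % (2*m+1) = n % (2*m+1) := Nat.add_mod_right _ _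
  show (if _ ∨ _ then 1 else 0) = (if _ ∨ _ then 1 else 0)
  rw [this]

lemma shift_of_period {a : ℕ → ℕ} {p : ℕ} (h : isPeriod p a) (hp : 0 < p) (j : ℕ) :
    shift^[j] a = shift^[j % p] a := by
  funext n
  rw [shiftIter_apply, shiftIter_apply, h.mod_eq hp (n + j), h.mod_eq hp (n + j % p)]
  congr 1
  conv_lhs => rw [Nat.add_mod]
  conv_rhs => rw [Nat.add_mod]
  rw [Nat.mod_mod_of_dvd j (dvd_refl p)]

lemma Gamma_Bodd {m : ℕ} (hm : 1 ≤ m) : Gamma (Bodd m) := by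
  set K := 2*m+1 with hK
  have hK3 : 3 ≤ K := by omega
  have hper := Bodd_isPeriod m
  have hB0 : Bodd m 0 = 1 := by rw [Bodd_of_mod _ (Nat.zero_mod _)]; norm_num
  have hB1 : Bodd m 1 = 1 := by
    rw [Bodd_of_mod _ (Nat.mod_eq_of_lt (by omega))]; norm_num
  have hM0 : mirror (Bodd m) 0 = 0 := by show 1 - Bodd m 0 = 0; rw [hB0]
  have hM1 : mirror (Bodd m) 1 = 0 := by show 1 - Bodd m 1 = 0; rw [hB1]
  refine ⟨isSeq_Bodd m, fun j => ?_⟩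
  rw [shift_of_period hper (by omega) j]
  set r := j % K with hr
  have hrK : r < K := Nat.mod_lt _ (by omega)
  have hS0 : shift^[r] (Bodd m) 0 = Bodd m r := by rw [shiftIter_apply, Nat.zero_add]
  have hS1 : shift^[r] (Bodd m) 1 = Bodd m (1 + r) := by rw [shiftIter_apply]
  rcases Nat.eq_zero_or_pos r with hr0 | hrpos
  · rw [hr0]
    simp only [Function.iterate_zero, id_eq]
    constructor
    · exact Or.inl ⟨0, by omega, by rw [hM0, hB0]; omega⟩
    · exact lexLe_refl _
  · by_cases hodd : r % 2 = 1
    · -- r odd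
      have hBr : Bodd m r = 1 := by
        rw [Bodd_of_mod _ (Nat.mod_eq_of_lt hrK)]
        rw [if_pos (Or.inr hodd)]
      have hr1 : Bodd m (1 + r) = 0 := by
        have hle : 1 + r < K := by omega
        rw [Bodd_of_mod _ (Nat.mod_eq_of_lt hle), if_neg (by omega)]
      constructor
      · exact Or.inl ⟨0, by omega, by rw [hM0, hS0, hBr]; omega⟩
      · refine Or.inl ⟨1, ?_, ?_⟩
        · intro t ht
          have : t = 0 := by omega
          subst this
          rw [hS0, hBr, hB0]
        · rw [hS1, hr1, hB1]
          omega
    · -- r even, r ≥ 2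
      have hBr : Bodd m r = 0 := by
        rw [Bodd_of_mod _ (Nat.mod_eq_of_lt hrK), if_neg (by omega)]
      have hr1 : Bodd m (1 + r) = 1 := by
        rcases Nat.lt_or_ge (1+r) K with hlt | hge
        · rw [Bodd_of_mod _ (Nat.mod_eq_of_lt hlt), if_pos (Or.inr (by omega))]
        · have : (1 + r) % K = 0 := by
            have : 1 + r = K := by omega
            rw [this, Nat.mod_self]
          rw [Bodd_of_mod _ this]
          norm_num
      constructor
      · refine Or.inl ⟨1, ?_, ?_⟩
        · intro t ht
          have : t = 0 := by omega
          subst this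
          rw [hS0, hBr, hM0]
        · rw [hS1, hr1, hM1]
          omega
      · exact Or.inl ⟨0, by omega, by rw [hS0, hBr, hB0]; omega⟩

lemma periodicSmallest_Bodd {m : ℕ} (hm : 1 ≤ m) : periodicSmallest (2*m+1) (Bodd m) := by
  set K := 2*m+1 with hK
  refine ⟨by omega, isPeriod_iff.mpr (Bodd_isPeriod m), ?_⟩
  intro j h1 h2 hcon
  by_cases hodd : j % 2 = 1
  · have := congrFun hcon 1
    rw [shiftIter_apply] at this
    have hval : Bodd m (1 + j) = 0 := by
      have hlt : 1 + j < K := by omega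
      rw [Bodd_of_mod _ (Nat.mod_eq_of_lt hlt), if_neg (by omega)]
    have hB1 : Bodd m 1 = 1 := by
      rw [Bodd_of_mod _ (Nat.mod_eq_of_lt (by omega))]; norm_num
    rw [hval, hB1] at this
    omega
  · have := congrFun hcon 0
    rw [shiftIter_apply, Nat.zero_add] at this
    have hval : Bodd m j = 0 := by
      rw [Bodd_of_mod _ (Nat.mod_eq_of_lt (by omega)), if_neg (by omega)]
    have hB0 : Bodd m 0 = 1 := by rw [Bodd_of_mod _ (Nat.zero_mod _)]; norm_num
    rw [hval, hB0] at this
    omega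

-- ===== Phi preserves Gamma =====

lemma Phi_cons (X : ℕ → ℕ) : Phi X = cons 1 (theta X) := by
  funext n
  rcases parity_cases n with rfl | ⟨i, rfl⟩ | ⟨i, rfl⟩
  · rfl
  · rw [Phi_odd, cons_succ, theta_even]
  · rw [Phi_even, show 2*i+2 = (2*i+1)+1 by ring, cons_succ, theta_odd]

lemma mirror_Phi_cons {X : ℕ → ℕ} (hs : isSeq X) : mirror (Phi X) = cons 0 (theta (mirror X)) := by
  funext n
  rcases parity_cases n with rfl | ⟨i, rfl⟩ | ⟨i, rfl⟩
  · show 1 - Phi X 0 = 0; rw [Phi_zero]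
  · show 1 - Phi X (2*i+1) = cons 0 (theta (mirror X)) (2*i+1)
    rw [Phi_odd, cons_succ, theta_even]
    rfl
  · show 1 - Phi X (2*i+2) = cons 0 (theta (mirror X)) (2*i+2)
    rw [Phi_even, show 2*i+2 = (2*i+1)+1 by ring, cons_succ, theta_odd]
    show 1 - (1 - X i) = 1 - (1 - X i)
    rfl

lemma shift_Phi_odd (X : ℕ → ℕ) (t : ℕ) : shift^[2*t+1] (Phi X) = theta (shift^[t] X) := by
  funext n
  rw [shiftIter_apply]
  rcases parity_cases n with rfl | ⟨i, rfl⟩ | ⟨i, rfl⟩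
  · rw [show 0 + (2*t+1) = 2*t+1 by ring, Phi_odd, show (0:ℕ) = 2*0 from rfl, theta_even,
      shiftIter_apply, Nat.zero_add]
  · rw [show 2*i+1 + (2*t+1) = 2*(i+t)+2 by ring, Phi_even, theta_odd, shiftIter_apply]
  · rw [show 2*i+2 + (2*t+1) = 2*(i+t+1)+1 by ring, Phi_odd, show 2*i+2 = 2*(i+1) by ring,
      theta_even, shiftIter_apply]
    congr 1
    omega

lemma shift_Phi_even (X : ℕ → ℕ) (t : ℕ) :
    shift^[2*t+2] (Phi X) = cons (1 - X t) (theta (shift^[t+1] X)) := by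
  funext n
  rw [shiftIter_apply]
  rcases parity_cases n with rfl | ⟨i, rfl⟩ | ⟨i, rfl⟩
  · rw [show 0 + (2*t+2) = 2*t+2 by ring, Phi_even, cons_zero]
  · rw [show 2*i+1 + (2*t+2) = 2*(i+t+1)+1 by ring, Phi_odd, cons_succ, theta_even,
      shiftIter_apply]
    congr 1
  · rw [show 2*i+2 + (2*t+2) = 2*(i+t+1)+2 by ring, Phi_even, show 2*i+2 = (2*i+1)+1 by ring,
      cons_succ, theta_odd, shiftIter_apply]
    congr 2

lemma Phi_Gamma {X : ℕ → ℕ} (hG : Gamma X) : Gamma (Phi X) := by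
  have hs := hG.1
  have hX0 : X 0 = 1 := Gamma_zero hG
  refine ⟨isSeq_Phi hs, fun k => ?_⟩
  rcases parity_cases k with rfl | ⟨t, rfl⟩ | ⟨t, rfl⟩
  · simp only [Function.iterate_zero, id_eq]
    constructor
    · refine Or.inl ⟨0, by omega, ?_⟩
      show 1 - Phi X 0 < Phi X 0
      rw [Phi_zero]
      omega
    · exact lexLe_refl _
  · rw [shift_Phi_odd]
    have hv0 : theta (shift^[t] X) 0 = X t := by
      rw [show (0:ℕ) = 2*0 from rfl, theta_even, shiftIter_apply, Nat.zero_add]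
    have hv1 : theta (shift^[t] X) 1 = 1 - X t := by
      rw [show (1:ℕ) = 2*0+1 from rfl, theta_odd, shiftIter_apply, Nat.zero_add]
    have hp0 : Phi X 0 = 1 := Phi_zero X
    have hp1 : Phi X 1 = 1 := by rw [show (1:ℕ) = 2*0+1 from rfl, Phi_odd, hX0]
    have hm0 : mirror (Phi X) 0 = 0 := by show 1 - Phi X 0 = 0; rw [hp0]
    have hm1 : mirror (Phi X) 1 = 0 := by show 1 - Phi X 1 = 0; rw [hp1]
    rcases zero_or_one hs t with ht | ht
    · constructor
      · refine Or.inl ⟨1, ?_, ?_⟩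
        · intro j hj
          have : j = 0 := by omega
          subst this
          rw [hm0, hv0, ht]
        · rw [hm1, hv1, ht]
          omega
      · exact Or.inl ⟨0, by omega, by rw [hv0, hp0, ht]; omega⟩
    · constructor
      · exact Or.inl ⟨0, by omega, by rw [hm0, hv0, ht]; omega⟩
      · refine Or.inl ⟨1, ?_, ?_⟩
        · intro j hj
          have : j = 0 := by omega
          subst this
          rw [hv0, hp0, ht]
        · rw [hv1, hp1, ht]
          omega
  · rw [shift_Phi_even, mirror_Phi_cons hs, Phi_cons]
    rcases zero_or_one hs t with ht | ht
    · rw [ht]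
      constructor
      · refine Or.inl ⟨0, by omega, ?_⟩
        rw [cons_zero, cons_zero]
        omega
      · show lexLe (cons (1-0) (theta (shift^[t+1] X))) (cons 1 (theta X))
        show lexLe (cons 1 (theta (shift^[t+1] X))) (cons 1 (theta X))
        exact lexLe_cons 1 (theta_mono (hG.2 (t+1)).2)
    · rw [ht]
      constructor
      · show lexLe (cons 0 (theta (mirror X))) (cons (1-1) (theta (shift^[t+1] X)))
        show lexLe (cons 0 (theta (mirror X))) (cons 0 (theta (shift^[t+1] X)))
        exact lexLe_cons 0 (theta_mono (hG.2 (t+1)).1)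
      · refine Or.inl ⟨0, by omega, ?_⟩
        rw [cons_zero, cons_zero]
        omega

-- ===== Phi and periods =====

lemma Phi_isPeriod {e : ℕ → ℕ} {q : ℕ} (h : isPeriod q e) (hq : 1 ≤ q) (hlast : e (q-1) = 0) :
    isPeriod (2*q) (Phi e) := by
  intro n
  rcases parity_cases n with rfl | ⟨i, rfl⟩ | ⟨i, rfl⟩
  · rw [Nat.zero_add, show 2*q = 2*(q-1)+2 by omega, Phi_even, hlast, Phi_zero]
  · rw [show 2*i+1 + 2*q = 2*(i+q)+1 by ring, Phi_odd, Phi_odd, h i]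
  · rw [show 2*i+2 + 2*q = 2*(i+q)+2 by ring, Phi_even, Phi_even, h i]

lemma Phi_period_halve {e : ℕ → ℕ} {r : ℕ} (h : isPeriod (2*r) (Phi e)) : isPeriod r e := by
  intro i
  have h1 := h (2*i+1)
  rw [show 2*i+1 + 2*r = 2*(i+r)+1 by ring, Phi_odd, Phi_odd] at h1
  exact h1

lemma Phi_periodicSmallest {e : ℕ → ℕ} {q : ℕ} (hs : isSeq e) (h : periodicSmallest q e)
    (hlast : e (q-1) = 0) : periodicSmallest (2*q) (Phi e) := by
  obtain ⟨hq1, hper, hmin⟩ := h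
  refine ⟨by omega, isPeriod_iff.mpr (Phi_isPeriod (isPeriod_iff.mp hper) hq1 hlast), ?_⟩
  intro j h1 h2 hcon
  have hj := isPeriod_iff.mp hcon
  by_cases hodd : j % 2 = 1
  · exact Phi_no_odd_period hs (j/2) (by rwa [show 2*(j/2)+1 = j by omega])
  · have hr : isPeriod (j/2) e := Phi_period_halve (by rwa [show 2*(j/2) = j by omega])
    exact hmin (j/2) (by omega) (by omega) (isPeriod_iff.mpr hr)

-- ===== upper part : BB k is in Gamma with smallest period k =====

lemma upper (k : ℕ) (hk : 1 ≤ k) : Gamma (BB k) ∧ periodicSmallest k (BB k) := by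
  induction k using Nat.strong_induction_on with
  | _ k ih =>
    by_cases h1 : 4 ≤ k ∧ k % 2 = 0
    · rw [BB_even h1.2 h1.1]
      have hq := ih (k/2) (by omega) (by omega)
      have hps := Phi_periodicSmallest (isSeq_BB (k/2)) hq.2 (BB_last (by omega))
      rw [show 2*(k/2) = k by omega] at hps
      exact ⟨Phi_Gamma hq.1, hps⟩
    · by_cases h2 : k = 2
      · subst h2; rw [BB_two]; exact ⟨Gamma_ten, periodicSmallest_ten⟩
      · by_cases h3 : k % 2 = 1 ∧ 3 ≤ k
        · rw [BB_odd h3.1 h3.2]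
          have hm : 1 ≤ k/2 := by omega
          have hps := periodicSmallest_Bodd hm
          rw [show 2*(k/2)+1 = k by omega] at hps
          exact ⟨Gamma_Bodd hm, hps⟩
        · have : k = 1 := by omega
          subst this; rw [BB_one]; exact ⟨Gamma_one, periodicSmallest_one⟩

-- ===== gcd of periods =====

lemma isPeriod_gcd {a : ℕ → ℕ} : ∀ p q, isPeriod p a → isPeriod q a → isPeriod (Nat.gcd p q) a := by
  intro p
  induction p using Nat.strong_induction_on with
  | _ p ih =>
    intro q hp hq
    rcases Nat.eq_zero_or_pos p with rfl | hppos
    · rwa [Nat.gcd_zero_left]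
    · rw [Nat.gcd_rec]
      exact ih (q % p) (Nat.mod_lt _ hppos) p (isPeriod_mod hq hp hppos) hp

-- ===== main lower bound =====

lemma main_lower : ∀ k a, GammaW a → periodicSmallest k a → lexLe (BB k) a := by
  intro k
  induction k using Nat.strong_induction_on with
  | _ k ih =>
    intro a hW hps
    obtain ⟨hk1, hper, hmin⟩ := hps
    have hperiod : isPeriod k a := isPeriod_iff.mp hper
    have hs := hW.1
    have ha0 := hW.2.1
    by_cases hk_1 : k = 1
    · subst hk_1
      rw [BB_one]
      right
      funext n
      show 1 = a n
      rw [hperiod.mod_eq (by omega) n, Nat.mod_one, ha0]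
    by_cases hk_2 : k = 2
    · subst hk_2
      rw [BB_two]
      rcases zero_or_one hs 1 with ha1 | ha1
      · exact Or.inr (ten_char hW ha1).symm
      · refine Or.inl ⟨1, ?_, ?_⟩
        · intro t ht
          have : t = 0 := by omega
          subst this
          show ten 0 = a 0
          rw [ha0]; rfl
        · show ten 1 < a 1
          rw [ha1]; norm_num [ten]
    -- now k ≥ 3
    have hk3 : 3 ≤ k := by omega
    rcases zero_or_one hs 1 with ha1 | ha1
    · exfalso
      have hat := ten_char hW ha1
      subst hat
      exact hmin 2 (by omega) (by omega) (isPeriod_iff.mpr ten_period)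
    rcases zero_or_one hs 2 with ha2 | ha2
    swap
    · -- a 2 = 1 : BB k < a at index 2
      refine Or.inl ⟨2, ?_, ?_⟩
      · intro t ht
        interval_cases t
        · rw [BB_zero (by omega), ha0]
        · rw [(BB_onetwo hk3).1, ha1]
      · rw [(BB_onetwo hk3).2, ha2]
        omega
    · -- a 2 = 0
      by_cases hAlt : ∀ s, a (2*s+1) + a (2*s+2) = 1
      · -- a is a Phi-image
        obtain ⟨haPhi, hWE⟩ := desub hW ha1 hAlt
        have hseqE : isSeq (fun i => a (2*i+1)) := fun i => hs (2*i+1)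
        by_cases hodd : k % 2 = 1
        · exfalso
          refine Phi_no_odd_period hseqE (k/2) ?_
          rw [show 2*(k/2)+1 = k by omega, ← haPhi]
          exact hperiod
        · -- k even, k = 2q with q ≥ 2
          have hq2 : 2 ≤ k/2 := by omega
          have hEper : isPeriod (k/2) (fun i => a (2*i+1)) := by
            intro i
            show a (2*(i + k/2)+1) = a (2*i+1)
            rw [show 2*(i + k/2)+1 = (2*i+1) + k by omega]
            exact hperiod _
          have hElast : (fun i => a (2*i+1)) (k/2 - 1) = 0 := by
            show a (2*(k/2-1)+1) = 0
            have h1 : a k = 1 := by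
              have := hperiod 0
              rwa [Nat.zero_add, ha0] at this
            have h2 := hAlt (k/2-1)
            rw [show 2*(k/2-1)+2 = k by omega, h1] at h2
            omega
          have hEps : periodicSmallest (k/2) (fun i => a (2*i+1)) := by
            refine ⟨by omega, isPeriod_iff.mpr hEper, ?_⟩
            intro j hj1 hj2 hcon
            have hj : isPeriod j (fun i => a (2*i+1)) := isPeriod_iff.mp hcon
            have hd := isPeriod_gcd j (k/2) hj hEper
            set d := Nat.gcd j (k/2) with hddef
            have hdpos : 0 < d := Nat.gcd_pos_of_pos_left _ (by omega)
            have hdle : d ≤ j := Nat.gcd_le_left _ (by omega)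
            have hddvd : d ∣ k/2 := Nat.gcd_dvd_right _ _
            obtain ⟨c, hc⟩ := hddvd
            have hcpos : c ≠ 0 := by
              rintro rfl
              rw [Nat.mul_zero] at hc
              omega
            obtain ⟨c', rfl⟩ : ∃ c', c = c' + 1 := ⟨c - 1, by omega⟩
            have hc2 : k/2 = d*c' + d := by rw [hc]; ring
            have hstep : ∀ t, (fun i => a (2*i+1)) (d-1 + d*t) = (fun i => a (2*i+1)) (d-1) := by
              intro t
              induction t with
              | zero => simp
              | succ t iht =>
                have := hd (d-1 + d*t)
                rw [show d-1 + d*t + d = d-1 + d*(t+1) by ring] at this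
                rw [this, iht]
            have hdlast : (fun i => a (2*i+1)) (d-1) = 0 := by
              have h1 := hstep c'
              rw [show d-1 + d*c' = k/2 - 1 by omega] at h1
              rw [← h1, hElast]
            have h2d : isPeriod (2*d) a := by
              rw [haPhi]
              exact Phi_isPeriod hd (by omega) hdlast
            exact hmin (2*d) (by omega) (by omega) (isPeriod_iff.mpr h2d)
          have hBE := ih (k/2) (by omega) _ hWE hEps
          rw [BB_even (by omega) (by omega), haPhi]
          exact Phi_mono hBE
      · -- there is a pair violation
        push_neg at hAlt
        have hex : ∃ s, ¬ (a (2*s+1) + a (2*s+2) = 1) := hAlt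
        set i0 := Nat.find hex with hi0def
        have hv : ¬ (a (2*i0+1) + a (2*i0+2) = 1) := Nat.find_spec hex
        have halt : ∀ s, s < i0 → a (2*s+1) + a (2*s+2) = 1 := by
          intro s hsi
          by_contra hcon
          exact absurd (Nat.find_min hex hsi) (by simpa using hcon)
        have hi0 : 1 ≤ i0 := by
          rcases Nat.eq_zero_or_pos i0 with h0 | h
          · exfalso
            apply hv
            rw [h0]
            show a (2*0+1) + a (2*0+2) = 1
            norm_num [ha1, ha2]
          · exact h
        have hc : a (2*i0+1) = 1 ∧ a (2*i0+2) = 1 := by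
          rcases zero_or_one hs (2*i0+1) with h1 | h1 <;>
            rcases zero_or_one hs (2*i0+2) with h2 | h2
          · exact absurd (master_W2 hW ha1 hi0 halt h1 h2) (by simp)
          · omega
          · omega
          · exact ⟨h1, h2⟩
        have hpairs := master_W3 hW halt hc.1 hc.2
        have hfirst : ∀ w, w ≤ i0 → a (2*w+1) = 1 := by
          intro w hw
          rcases Nat.lt_or_ge w i0 with h | h
          · exact (hpairs w h).1
          · rw [show w = i0 by omega]
            exact hc.1
        by_cases hodd : k % 2 = 1
        · -- k odd, k = 2m+1 with m = k/2 ≥ 1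
          rw [BB_odd hodd hk3]
          set m := k/2 with hmdef
          have hkm : k = 2*m+1 := by omega
          have hm1 : 1 ≤ m := by omega
          rcases lt_trichotomy i0 m with hlt | heq | hgt
          · -- BB k < a at index 2*i0+2
            refine Or.inl ⟨2*i0+2, ?_, ?_⟩
            · intro t ht
              rcases parity_cases t with rfl | ⟨w, rfl⟩ | ⟨w, rfl⟩
              · rw [Bodd_of_mod _ (Nat.zero_mod _), if_pos (Or.inl rfl), ha0]
              · rw [Bodd_of_mod _ (Nat.mod_eq_of_lt (by omega)),
                  if_pos (Or.inr (by omega)), hfirst w (by omega)]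
              · rw [Bodd_of_mod _ (Nat.mod_eq_of_lt (by omega)), if_neg (by omega),
                  (hpairs w (by omega)).2]
            · rw [Bodd_of_mod _ (Nat.mod_eq_of_lt (by omega)), if_neg (by omega), hc.2]
              omega
          · -- a equals Bodd m
            right
            funext n
            rw [hperiod.mod_eq (by omega) n]
            have hr : n % k < k := Nat.mod_lt _ (by omega)
            rcases parity_cases (n % k) with hnk | ⟨w, hnk⟩ | ⟨w, hnk⟩
            · have hval : Bodd m n = 1 := by
                rw [Bodd_of_mod _ (show n % (2*m+1) = 0 by rw [← hkm]; exact hnk)]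
                norm_num
              rw [hval, hnk, ha0]
            · have hval : Bodd m n = 1 := by
                rw [Bodd_of_mod _ (show n % (2*m+1) = 2*w+1 by rw [← hkm]; exact hnk)]
                rw [if_pos (Or.inr (by omega))]
              rw [hval, hnk, hfirst w (by omega)]
            · have hval : Bodd m n = 0 := by
                rw [Bodd_of_mod _ (show n % (2*m+1) = 2*w+2 by rw [← hkm]; exact hnk)]
                rw [if_neg (by omega)]
              rw [hval, hnk, (hpairs w (by omega)).2]
          · -- i0 > m impossible
            exfalso
            have h1 : a (2*m+2) = 0 := (hpairs m (by omega)).2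
            have h2 : a (2*m+2) = a 1 := by
              rw [show 2*m+2 = 1 + k by omega]
              exact hperiod 1
            rw [h2, ha1] at h1
            omega
        · -- k even, k = 2q with q = k/2 ≥ 2
          rw [BB_even (by omega) (by omega)]
          have hq2 : 2 ≤ k/2 := by omega
          have hX0 : BB (k/2) 0 = 1 := BB_zero (by omega)
          have hP0 : Phi (BB (k/2)) 0 = 1 := Phi_zero _
          have hP1 : Phi (BB (k/2)) 1 = 1 := by
            rw [show (1:ℕ) = 2*0+1 from rfl, Phi_odd, hX0]
          have hP2 : Phi (BB (k/2)) 2 = 0 := by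
            rw [show (2:ℕ) = 2*0+2 from rfl, Phi_even, hX0]
          by_cases hq2' : k/2 = 2
          · -- q = 2 : P 3 = 0 < a 3
            have hP3 : Phi (BB (k/2)) 3 = 0 := by
              rw [show (3:ℕ) = 2*1+1 from rfl, Phi_odd, hq2', BB_two]
              rfl
            refine Or.inl ⟨3, ?_, ?_⟩
            · intro t ht
              interval_cases t
              · rw [hP0, ha0]
              · rw [hP1, ha1]
              · rw [hP2, ha2]
            · rw [hP3]
              have := hfirst 1 (by omega)
              rw [show 2*1+1 = 3 by ring] at this
              rw [this]
              omega
          · -- q ≥ 3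
            have hq3 : 3 ≤ k/2 := by omega
            have hX12 := BB_onetwo hq3
            have hP3 : Phi (BB (k/2)) 3 = 1 := by
              rw [show (3:ℕ) = 2*1+1 from rfl, Phi_odd, hX12.1]
            have hP4 : Phi (BB (k/2)) 4 = 0 := by
              rw [show (4:ℕ) = 2*1+2 from rfl, Phi_even, hX12.1]
            have hP5 : Phi (BB (k/2)) 5 = 0 := by
              rw [show (5:ℕ) = 2*2+1 from rfl, Phi_odd, hX12.2]
            have ha3 : a 3 = 1 := by
              have := hfirst 1 (by omega)
              rwa [show 2*1+1 = 3 by ring] at this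
            by_cases hi1 : i0 = 1
            · -- a 4 = 1 : difference at index 4
              have ha4 : a 4 = 1 := by
                have := hc.2
                rwa [hi1, show 2*1+2 = 4 by ring] at this
              refine Or.inl ⟨4, ?_, ?_⟩
              · intro t ht
                interval_cases t
                · rw [hP0, ha0]
                · rw [hP1, ha1]
                · rw [hP2, ha2]
                · rw [hP3, ha3]
              · rw [hP4, ha4]
                omega
            · -- i0 ≥ 2 : a 4 = 0, a 5 = 1 : difference at index 5
              have hi02 : 2 ≤ i0 := by omega
              have ha4 : a 4 = 0 := by
                have := (hpairs 1 (by omega)).2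
                rwa [show 2*1+2 = 4 by ring] at this
              have ha5 : a 5 = 1 := by
                have := hfirst 2 (by omega)
                rwa [show 2*2+1 = 5 by ring] at this
              refine Or.inl ⟨5, ?_, ?_⟩
              · intro t ht
                interval_cases t
                · rw [hP0, ha0]
                · rw [hP1, ha1]
                · rw [hP2, ha2]
                · rw [hP3, ha3]
                · rw [hP4, ha4]
              · rw [hP5, ha5]
                omega

-- ===== Thue-Morse =====


lemma thueMorse_zero : thueMorse 0 = 0 := by simp [thueMorse]

lemma thueMorse_even (n : ℕ) : thueMorse (2*n) = thueMorse n := by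
  rcases Nat.eq_zero_or_pos n with rfl | hn
  · rfl
  · show (Nat.digits 2 (2*n)).sum % 2 = _
    rw [Nat.digits_def' (by norm_num : 1 < 2) (by omega : 0 < 2*n)]
    rw [show 2*n % 2 = 0 by omega, show 2*n/2 = n by omega]
    show (0 + (Nat.digits 2 n).sum) % 2 = _
    rw [Nat.zero_add]
    rfl

lemma thueMorse_odd (n : ℕ) : thueMorse (2*n+1) = 1 - thueMorse n := by
  show (Nat.digits 2 (2*n+1)).sum % 2 = _
  rw [Nat.digits_def' (by norm_num : 1 < 2) (by omega : 0 < 2*n+1)]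
  rw [show (2*n+1) % 2 = 1 by omega, show (2*n+1)/2 = n by omega]
  show (1 + (Nat.digits 2 n).sum) % 2 = 1 - (Nat.digits 2 n).sum % 2
  omega

lemma thueMorse_one : thueMorse 1 = 1 := by
  have := thueMorse_odd 0
  rw [thueMorse_zero] at this
  simpa using this

lemma thueMorse_pow (n : ℕ) : thueMorse (2^n) = 1 := by
  induction n with
  | zero => exact thueMorse_one
  | succ n ih => rw [pow_succ, show 2^n*2 = 2*2^n by ring, thueMorse_even, ih]

lemma thueMorse_three : thueMorse 3 = 0 := by
  have := thueMorse_odd 1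
  rw [thueMorse_one] at this
  simpa using this

lemma thueMorse_3pow (n : ℕ) : thueMorse (3*2^n) = 0 := by
  induction n with
  | zero => simpa using thueMorse_three
  | succ n ih => rw [pow_succ, show 3*(2^n*2) = 2*(3*2^n) by ring, thueMorse_even, ih]

-- ===== the block formulas =====


lemma tmBlockPow_one : tmBlockPow 1 = ten := by
  funext i
  show (if i % 2^1 = 2^1 - 1 then 1 - thueMorse (2^1) else thueMorse (i % 2^1 + 1)) = ten i
  have h2 : thueMorse 2 = 1 := by
    have := thueMorse_pow 1
    norm_num at this
    exact this
  rw [pow_one]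
  by_cases h : i % 2 = 0
  · rw [if_neg (by omega), h, thueMorse_one]
    show 1 = ten i
    rw [show ten i = 1 by simp [ten, h]]
  · rw [if_pos (by omega), h2]
    show 1 - 1 = ten i
    rw [show ten i = 0 by simp [ten]; omega]

lemma Phi_tmBlockPow {n : ℕ} (hn : 1 ≤ n) : Phi (tmBlockPow n) = tmBlockPow (n+1) := by
  have hP2 : 2 ≤ 2^n := by
    calc 2 = 2^1 := by norm_num
    _ ≤ 2^n := Nat.pow_le_pow_right (by norm_num) hn
  set P := 2^n with hPdef
  have hQ : 2^(n+1) = 2*P := by rw [pow_succ]; ring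
  have htmP : thueMorse P = 1 := thueMorse_pow n
  funext i
  have hval : ∀ j, tmBlockPow n j =
      if j % P = P - 1 then 1 - thueMorse P else thueMorse (j % P + 1) := fun j => rfl
  have hval' : ∀ j, tmBlockPow (n+1) j =
      if j % (2*P) = 2*P - 1 then 1 - thueMorse (2*P) else thueMorse (j % (2*P) + 1) := by
    intro j
    show (if j % 2^(n+1) = 2^(n+1) - 1 then 1 - thueMorse (2^(n+1)) else thueMorse (j % 2^(n+1) + 1)) = _
    rw [hQ]
  rcases parity_cases i with rfl | ⟨j, rfl⟩ | ⟨j, rfl⟩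
  · rw [Phi_zero, hval' 0]
    rw [Nat.zero_mod, if_neg (by omega), thueMorse_one]
  · rw [Phi_odd, hval j, hval' (2*j+1)]
    set r := j % P with hrdef
    set q := j / P with hqdef
    have hj : P*q + r = j := Nat.div_add_mod j P
    have hrP : r < P := Nat.mod_lt _ (by omega)
    have hmod1 : (2*j+1) % (2*P) = 2*r+1 := by
      have h1 : 2*j+1 = (2*r+1) + (2*P)*q := by
        have e : (2*P)*q = 2*(P*q) := by ring
        omega
      rw [h1, Nat.add_mul_mod_self_left, Nat.mod_eq_of_lt (by omega)]
    rw [hmod1]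
    by_cases hr1 : r = P - 1
    · rw [if_pos hr1, if_pos (by omega), show 2*P = 2*P from rfl, thueMorse_even]
    · rw [if_neg hr1, if_neg (by omega), show 2*r+1+1 = 2*(r+1) by ring, thueMorse_even]
  · rw [Phi_even, hval j, hval' (2*j+2)]
    set r := j % P with hrdef
    set q := j / P with hqdef
    have hj : P*q + r = j := Nat.div_add_mod j P
    have hrP : r < P := Nat.mod_lt _ (by omega)
    by_cases hr1 : r = P - 1
    · have hmod2 : (2*j+2) % (2*P) = 0 := by
        have h1 : 2*j+2 = (2*P)*(q+1) := by
          have e : (2*P)*(q+1) = 2*(P*q) + 2*P := by ring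
          omega
        rw [h1, Nat.mul_mod_right]
      rw [hmod2, if_pos hr1, if_neg (by omega), thueMorse_one, htmP]
    · have hmod2 : (2*j+2) % (2*P) = 2*r+2 := by
        have h1 : 2*j+2 = (2*r+2) + (2*P)*q := by
          have e : (2*P)*q = 2*(P*q) := by ring
          omega
        rw [h1, Nat.add_mul_mod_self_left, Nat.mod_eq_of_lt (by omega)]
      rw [hmod2, if_neg hr1, if_neg (by omega), show 2*r+2+1 = 2*(r+1)+1 by ring, thueMorse_odd]

lemma BB_pow {n : ℕ} (hn : 1 ≤ n) : BB (2^n) = tmBlockPow n := by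
  induction n with
  | zero => omega
  | succ n ih =>
    rcases Nat.eq_zero_or_pos n with rfl | hnpos
    · rw [show 2^(0+1) = 2 by norm_num, BB_two, tmBlockPow_one]
    · have h4 : 4 ≤ 2^(n+1) := by
        calc 4 = 2^2 := by norm_num
        _ ≤ 2^(n+1) := Nat.pow_le_pow_right (by norm_num) (by omega)
      rw [BB_even (by rw [pow_succ]; omega) h4, show 2^(n+1)/2 = 2^n by rw [pow_succ]; omega,
        ih hnpos, Phi_tmBlockPow hnpos]

-- ===== generic halving lemmas for mod =====

lemma mod_double_odd {K j : ℕ} (hK : 0 < K) : (2*j+1) % (2*K) = 2*(j % K)+1 := by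
  have hj : K*(j/K) + j % K = j := Nat.div_add_mod j K
  have hlt : j % K < K := Nat.mod_lt _ hK
  have h1 : 2*j+1 = (2*(j % K)+1) + (2*K)*(j/K) := by
    have e : (2*K)*(j/K) = 2*(K*(j/K)) := by ring
    omega
  rw [h1, Nat.add_mul_mod_self_left, Nat.mod_eq_of_lt (by omega)]

lemma mod_double_even {K j : ℕ} (hK : 0 < K) (h : j % K < K - 1) :
    (2*j+2) % (2*K) = 2*(j % K)+2 := by
  have hj : K*(j/K) + j % K = j := Nat.div_add_mod j K
  have h1 : 2*j+2 = (2*(j % K)+2) + (2*K)*(j/K) := by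
    have e : (2*K)*(j/K) = 2*(K*(j/K)) := by ring
    omega
  rw [h1, Nat.add_mul_mod_self_left, Nat.mod_eq_of_lt (by omega)]

lemma mod_double_even_wrap {K j : ℕ} (hK : 0 < K) (h : j % K = K - 1) :
    (2*j+2) % (2*K) = 0 := by
  have hj : K*(j/K) + j % K = j := Nat.div_add_mod j K
  have h1 : 2*j+2 = (2*K)*(j/K + 1) := by
    have e : (2*K)*(j/K + 1) = 2*(K*(j/K)) + 2*K := by ring
    omega
  rw [h1, Nat.mul_mod_right]

lemma tmBlockOdd_apply (n m i : ℕ) : tmBlockOdd n m i =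
    if i % (2^n*(2*m+1)) < 3*2^n then thueMorse (i % (2^n*(2*m+1)) + 1)
    else if (i % (2^n*(2*m+1)) - 3*2^n) % 2^(n+1) = 2^(n+1)-1 then 1 - thueMorse (2^(n+1))
    else thueMorse ((i % (2^n*(2*m+1)) - 3*2^n) % 2^(n+1) + 1) := rfl

lemma tmBlockOdd_zero {m : ℕ} (hm : 1 ≤ m) : tmBlockOdd 0 m = Bodd m := by
  have htm2 : thueMorse 2 = 1 := by
    have := thueMorse_pow 1
    norm_num at this
    exact this
  funext i
  rw [tmBlockOdd_apply]
  have hK : (2:ℕ)^0*(2*m+1) = 2*m+1 := by norm_num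
  rw [hK]
  have hB : Bodd m i = if i % (2*m+1) = 0 ∨ (i % (2*m+1)) % 2 = 1 then 1 else 0 := rfl
  rw [hB]
  have h30 : 3*2^0 = 3 := by norm_num
  have h21 : (2:ℕ)^(0+1) = 2 := by norm_num
  rw [h30, h21]
  by_cases h3 : i % (2*m+1) < 3
  · rw [if_pos h3]
    interval_cases h : i % (2*m+1)
    · rw [thueMorse_one, if_pos (by omega)]
    · rw [htm2, if_pos (by omega)]
    · rw [show (2:ℕ)+1 = 3 from rfl, thueMorse_three, if_neg (by omega)]
  · rw [if_neg h3]
    by_cases hpar : (i % (2*m+1)) % 2 = 1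
    · rw [if_neg (by omega), if_pos (by omega)]
      rw [show (i % (2*m+1) - 3) % 2 = 0 by omega, thueMorse_one]
    · rw [if_pos (by omega), if_neg (by omega), htm2]

lemma Phi_tmBlockOdd (n : ℕ) {m : ℕ} (hm : 1 ≤ m) :
    Phi (tmBlockOdd n m) = tmBlockOdd (n+1) m := by
  obtain ⟨m', rfl⟩ : ∃ m', m = m'+1 := ⟨m-1, by omega⟩
  have hB1 : (1:ℕ) ≤ 2^n := Nat.one_le_two_pow
  have hKm : (2:ℕ)^n*(2*(m'+1)+1) = 2*(2^n*m') + 3*2^n := by ring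
  have hK1 : (0:ℕ) < 2^n*(2*(m'+1)+1) := by positivity
  have hKK : (2:ℕ)^(n+1)*(2*(m'+1)+1) = 2*(2^n*(2*(m'+1)+1)) := by rw [pow_succ]; ring
  have hQ : (2:ℕ)^(n+1) = 2*2^n := by rw [pow_succ]; ring
  have hQ2 : (2:ℕ)^(n+1+1) = 2*(2*2^n) := by rw [pow_succ, pow_succ]; ring
  have htm2P : thueMorse (2*2^n) = 1 := by
    rw [← hQ]; exact thueMorse_pow (n+1)
  have htm3P : thueMorse (3*2^n) = 0 := thueMorse_3pow n
  funext i
  rcases parity_cases i with rfl | ⟨j, rfl⟩ | ⟨j, rfl⟩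
  · rw [Phi_zero, tmBlockOdd_apply, hKK, Nat.zero_mod,
      if_pos (show (0:ℕ) < 3*2^(n+1) by positivity), Nat.zero_add, thueMorse_one]
  · rw [Phi_odd, tmBlockOdd_apply n _ j, tmBlockOdd_apply (n+1) _ (2*j+1), hKK,
      mod_double_odd hK1, hQ, hQ2]
    have hrKlt : j % (2^n*(2*(m'+1)+1)) < 2^n*(2*(m'+1)+1) := Nat.mod_lt _ hK1
    generalize hrg : j % (2^n*(2*(m'+1)+1)) = r at hrKlt ⊢
    by_cases h3 : r < 3*2^n
    · rw [if_pos h3, if_pos (show 2*r+1 < 3*(2*2^n) by omega),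
        show 2*r+1+1 = 2*(r+1) by ring, thueMorse_even (r+1)]
    · rw [if_neg h3, if_neg (show ¬(2*r+1 < 3*(2*2^n)) by omega),
        show 2*r+1 - 3*(2*2^n) = 2*(r - 3*2^n)+1 by omega,
        mod_double_odd (show (0:ℕ) < 2*2^n by positivity)]
      have hslt : (r - 3*2^n) % (2*2^n) < 2*2^n := Nat.mod_lt _ (by positivity)
      generalize hsg : (r - 3*2^n) % (2*2^n) = s at hslt ⊢
      by_cases hs : s = 2*2^n - 1
      · rw [if_pos hs, if_pos (show 2*s+1 = 2*(2*2^n)-1 by omega), thueMorse_even (2*2^n)]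
      · rw [if_neg hs, if_neg (show ¬(2*s+1 = 2*(2*2^n)-1) by omega),
          show 2*s+1+1 = 2*(s+1) by ring, thueMorse_even (s+1)]
  · rw [Phi_even, tmBlockOdd_apply n _ j, tmBlockOdd_apply (n+1) _ (2*j+2), hKK, hQ, hQ2]
    have hrKlt : j % (2^n*(2*(m'+1)+1)) < 2^n*(2*(m'+1)+1) := Nat.mod_lt _ hK1
    by_cases hw : j % (2^n*(2*(m'+1)+1)) = 2^n*(2*(m'+1)+1) - 1
    · rw [mod_double_even_wrap hK1 hw, if_pos (show (0:ℕ) < 3*(2*2^n) by positivity),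
        Nat.zero_add, thueMorse_one]
      generalize hrg : j % (2^n*(2*(m'+1)+1)) = r at hw hrKlt ⊢
      by_cases h3 : r < 3*2^n
      · rw [if_pos h3, show r + 1 = 3*2^n by omega, htm3P]
      · rw [if_neg h3]
        have hC1 : 1 ≤ 2^n*m' := by omega
        have hm'pos : 0 < m' := by
          rcases Nat.eq_zero_or_pos m' with rfl | h
          · rw [Nat.mul_zero] at hC1; omega
          · exact h
        obtain ⟨m'', rfl⟩ : ∃ m'', m' = m''+1 := ⟨m'-1, by omega⟩
        have e2 : (2:ℕ)^n*(m''+1) = 2^n*m'' + 2^n := by ring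
        have hsval : r - 3*2^n = (2*2^n - 1) + (2*2^n)*m'' := by
          have e3 : (2*2^n)*m'' = 2*(2^n*m'') := by ring
          omega
        rw [hsval, Nat.add_mul_mod_self_left,
          Nat.mod_eq_of_lt (show 2*2^n - 1 < 2*2^n by omega), if_pos rfl, htm2P]
    · rw [mod_double_even hK1 (by omega)]
      generalize hrg : j % (2^n*(2*(m'+1)+1)) = r at hw hrKlt ⊢
      by_cases h3 : r + 1 < 3*2^n
      · rw [if_pos (show r < 3*2^n by omega), if_pos (show 2*r+2 < 3*(2*2^n) by omega),
          show 2*r+2+1 = 2*(r+1)+1 by ring, thueMorse_odd (r+1)]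
      · by_cases h3' : r < 3*2^n
        · rw [if_pos h3', show r+1 = 3*2^n by omega, htm3P,
            if_neg (show ¬(2*r+2 < 3*(2*2^n)) by omega),
            show 2*r+2 - 3*(2*2^n) = 0 by omega, Nat.zero_mod,
            if_neg (show ¬((0:ℕ) = 2*(2*2^n)-1) by omega), Nat.zero_add, thueMorse_one]
        · rw [if_neg h3', if_neg (show ¬(2*r+2 < 3*(2*2^n)) by omega)]
          have hx : (2*2^n)*((r - 3*2^n)/(2*2^n)) + (r - 3*2^n) % (2*2^n) = r - 3*2^n :=
            Nat.div_add_mod _ _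
          have hslt : (r - 3*2^n) % (2*2^n) < 2*2^n := Nat.mod_lt _ (by positivity)
          by_cases hs : (r - 3*2^n) % (2*2^n) = 2*2^n - 1
          · rw [if_pos hs]
            have h1 : 2*r+2 - 3*(2*2^n) = (2*(2*2^n))*((r - 3*2^n)/(2*2^n) + 1) := by
              have e : (2*(2*2^n))*((r - 3*2^n)/(2*2^n) + 1)
                  = 2*((2*2^n)*((r - 3*2^n)/(2*2^n))) + 2*(2*2^n) := by ring
              omega
            rw [h1, Nat.mul_mod_right, if_neg (show ¬((0:ℕ) = 2*(2*2^n)-1) by omega),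
              Nat.zero_add, thueMorse_one, htm2P]
          · rw [if_neg hs]
            have h1 : 2*r+2 - 3*(2*2^n)
                = (2*((r - 3*2^n) % (2*2^n))+2) + (2*(2*2^n))*((r - 3*2^n)/(2*2^n)) := by
              have e : (2*(2*2^n))*((r - 3*2^n)/(2*2^n))
                  = 2*((2*2^n)*((r - 3*2^n)/(2*2^n))) := by ring
              omega
            rw [h1, Nat.add_mul_mod_self_left,
              Nat.mod_eq_of_lt (show 2*((r - 3*2^n) % (2*2^n))+2 < 2*(2*2^n) by omega),
              if_neg (show ¬(2*((r - 3*2^n) % (2*2^n))+2 = 2*(2*2^n)-1) by omega),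
              show 2*((r - 3*2^n) % (2*2^n))+2+1 = 2*(((r - 3*2^n) % (2*2^n))+1)+1 by ring,
              thueMorse_odd (((r - 3*2^n) % (2*2^n))+1)]

lemma BB_oddpow (n : ℕ) {m : ℕ} (hm : 1 ≤ m) : BB (2^n*(2*m+1)) = tmBlockOdd n m := by
  induction n with
  | zero =>
    rw [show 2^0*(2*m+1) = 2*m+1 by norm_num, BB_odd (by omega) (by omega),
      show (2*m+1)/2 = m by omega]
    exact (tmBlockOdd_zero hm).symm
  | succ n ih =>
    have hKK : (2:ℕ)^(n+1)*(2*m+1) = 2*(2^n*(2*m+1)) := by rw [pow_succ]; ring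
    have h3 : 3 ≤ 2^n*(2*m+1) := by
      calc (3:ℕ) = 1*3 := by norm_num
      _ ≤ 2^n*(2*m+1) := Nat.mul_le_mul Nat.one_le_two_pow (by omega)
    rw [BB_even (by rw [hKK]; omega) (by omega), show (2^(n+1)*(2*m+1))/2 = 2^n*(2*m+1) by
      rw [hKK]; omega, ih, Phi_tmBlockOdd n hm]


/-- Explicit formula for a_k via fragments of the Thue–Morse sequence, where
k = 2^n(2m+1). -/
theorem stmt16 (n m : ℕ) (a : ℕ → ℕ) (ha : minGamma (2 ^ n * (2 * m + 1)) a) :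
    (n = 0 ∧ m = 0 → a = fun _ => thueMorse 1) ∧
    (m = 0 → 1 ≤ n → a = tmBlockPow n) ∧
    (1 ≤ m → a = tmBlockOdd n m) := by
  have hk1 : 1 ≤ 2^n*(2*m+1) := by
    have : (0:ℕ) < 2^n*(2*m+1) := by positivity
    omega
  have hup := upper _ hk1
  have hle1 : lexLe a (BB (2^n*(2*m+1))) := ha.2 _ hup.1 hup.2
  have hle2 : lexLe (BB (2^n*(2*m+1))) a := main_lower _ a ha.1.1.toW ha.1.2
  have haB : a = BB (2^n*(2*m+1)) := lexLe_antisymm hle1 hle2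
  refine ⟨?_, ?_, ?_⟩
  · rintro ⟨rfl, rfl⟩
    rw [haB, show (2:ℕ)^0*(2*0+1) = 1 by norm_num, BB_one]
    funext x
    show 1 = thueMorse 1
    rw [thueMorse_one]
  · rintro rfl hn
    rw [haB, show (2:ℕ)^n*(2*0+1) = 2^n by ring, BB_pow hn]
  · intro hm
    rw [haB, BB_oddpow n hm]
end

section
/- Let β_4 be the unique root in (1,2) of x³ = 2x² − x + 1 (numerically β_4 ≈ 1.75488), and let β ∈ (β_4, 2). Then every continuous map S : I_β → I_β such that S(x) = F_β(x) for all x ∈ X_β and such that S is monotone on the interval [0, 1/β] has, for every integer k ≥ 1, a periodic point of smallest period k (i.e., a point x ∈ I_β with S^k(x) = x and S^j(x) ≠ x for 1 ≤ j < k). -/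
/-- π_β(ε) = Σ_{k≥1} ε_k β^{-k}. -/
noncomputable def piB (β : ℝ) (ε : ℕ → ℕ) : ℝ := ∑' k : ℕ, (ε k : ℝ) / β ^ (k + 1)

/-- ε is a unique β-expansion. -/
def memSigma (β : ℝ) (ε : ℕ → ℕ) : Prop :=
  isSeq ε ∧ ∀ ε', isSeq ε' → piB β ε' = piB β ε → ε' = ε

/-- U_n: the set of β ∈ (1,2) such that Σ_β contains a periodic sequence of
smallest period n. -/
def U (n : ℕ) : Set ℝ :=
  {β | 1 < β ∧ β < 2 ∧ ∃ ε, memSigma β ε ∧ periodicSmallest n ε}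

/-- The interval I_β = [0, 1/(β-1)]. -/
def Iset (β : ℝ) : Set ℝ := Set.Icc 0 (1 / (β - 1))

/-- X_β: the points of I_β having a unique β-expansion. -/
def Xset (β : ℝ) : Set ℝ := {x ∈ Iset β | ∃! ε : ℕ → ℕ, isSeq ε ∧ piB β ε = x}

/-- The map F_β (X_β misses the middle interval [1/β, 1/(β(β-1))]). -/
noncomputable def Fmap (β : ℝ) : ℝ → ℝ := fun x => if x < 1 / β then β * x else β * x - 1

/-! For `β > β₄` the point `c = 1 / ((β - 1) (β² + 1)) = π_β((0011)^∞)` has the `F_β`-orbit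
`c < β c < β³ c - 1 < β² c` of period 4; the inequality `β³ > 2 β² - β + 1` is exactly what keeps
it off the switch region `[1/β, 1/(β(β-1))]`. Hence these four points have unique expansions and
`S` agrees with `F_β` on them. For `K = [c, β c]` and `J = [β c, β³ c - 1]` continuity gives
`S(K) ⊇ J` and `S(J) ⊇ K ∪ J`, and following the loop `K → J → ⋯ → J → K` produces a point of
every minimal period, as in the proof that period three implies all periods. -/

open Set Function Filter Topology

section BetaExpansions

variable {β : ℝ} {ε : ℕ → ℕ}

lemma isSeq_shift (hε : isSeq ε) : isSeq (shift ε) := fun k => hε (k + 1)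

lemma shift_iterate_apply (ε : ℕ → ℕ) (n m : ℕ) : shift^[n] ε m = ε (m + n) := by
  induction n generalizing ε with
  | zero => rfl
  | succ n ih => rw [iterate_succ_apply, ih]; rfl

lemma isSeq_shift_iterate (hε : isSeq ε) (n : ℕ) : isSeq (shift^[n] ε) := fun m => by
  rw [shift_iterate_apply]; exact hε _

lemma hasSum_one_div_pow_succ (h1 : 1 < β) :
    HasSum (fun k : ℕ => 1 / β ^ (k + 1)) (1 / (β - 1)) := by
  have hβ : 0 < β := by linarith
  have hterm : (fun k : ℕ => 1 / β ^ (k + 1)) = fun k => β⁻¹ ^ k * β⁻¹ := by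
    ext k; rw [pow_succ, inv_pow, one_div, mul_inv]
  have hsum : 1 / (β - 1) = (1 - β⁻¹)⁻¹ * β⁻¹ := by
    field_simp
  rw [hterm, hsum]
  exact (hasSum_geometric_of_lt_one (inv_nonneg.2 hβ.le) (inv_lt_one_of_one_lt₀ h1)).mul_right _

lemma div_pow_succ_le_one_div (hβ : 0 < β) (hε : isSeq ε) (k : ℕ) :
    (ε k : ℝ) / β ^ (k + 1) ≤ 1 / β ^ (k + 1) := by
  gcongr; exact_mod_cast hε k

lemma summable_piB (h1 : 1 < β) (hε : isSeq ε) :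
    Summable (fun k : ℕ => (ε k : ℝ) / β ^ (k + 1)) :=
  (hasSum_one_div_pow_succ h1).summable.of_nonneg_of_le (fun _ => by positivity)
    (div_pow_succ_le_one_div (by linarith) hε)

lemma piB_mem_Iset (h1 : 1 < β) (hε : isSeq ε) : piB β ε ∈ Iset β :=
  ⟨tsum_nonneg fun _ => by positivity,
    hasSum_le (div_pow_succ_le_one_div (by linarith) hε) (summable_piB h1 hε).hasSum
      (hasSum_one_div_pow_succ h1)⟩

lemma piB_eq_head_add (h1 : 1 < β) (hε : isSeq ε) :
    piB β ε = ε 0 / β + piB β (shift ε) / β := by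
  rw [piB, (summable_piB h1 hε).tsum_eq_zero_add, piB, ← tsum_div_const]
  congr 1
  · simp
  · congr 1; ext k; rw [shift, pow_succ _ (k + 1)]; ring

/-- The difference `z n` between `π_β(σⁿ ε)` and `y n` is bounded but gets multiplied by `β` at
each step. -/
lemma piB_eq_of_recursion (h1 : 1 < β) (hε : isSeq ε) (y : ℕ → ℝ) (hy : ∀ n, y n ∈ Iset β)
    (hrec : ∀ n, y n = ε n / β + y (n + 1) / β) : piB β ε = y 0 := by
  have hβ : 0 < β := by linarith
  set z : ℕ → ℝ := fun n => piB β (shift^[n] ε) - y n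
  have hz : ∀ n, z 0 = z n / β ^ n := by
    intro n
    induction n with
    | zero => simp
    | succ n ih =>
      have h := piB_eq_head_add h1 (isSeq_shift_iterate hε n)
      rw [shift_iterate_apply, zero_add, ← iterate_succ_apply' shift] at h
      rw [ih, pow_succ, ← div_div]
      simp only [z]
      rw [h, hrec n]
      ring
  have hbound : ∀ n, |z 0| ≤ 1 / (β - 1) * (1 / β) ^ n := by
    intro n
    obtain ⟨hp0, hp1⟩ := piB_mem_Iset h1 (isSeq_shift_iterate hε n)
    obtain ⟨hy0, hy1⟩ := hy n
    rw [hz n, abs_div, abs_of_pos (pow_pos hβ n), div_pow, one_pow, mul_one_div]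
    gcongr
    exact abs_sub_le_iff.2 ⟨by linarith, by linarith⟩
  have hlim : Tendsto (fun n : ℕ => 1 / (β - 1) * (1 / β) ^ n) atTop (𝓝 0) := by
    simpa using (tendsto_pow_atTop_nhds_zero_of_lt_one (by positivity)
      ((div_lt_one hβ).2 h1)).const_mul (1 / (β - 1))
  have hz0 : z 0 = 0 := abs_nonpos_iff.1 (ge_of_tendsto' hlim hbound)
  simpa [z, sub_eq_zero] using hz0

def switchRegion (β : ℝ) : Set ℝ := Icc (1 / β) (1 / (β * (β - 1)))

noncomputable def digit (β x : ℝ) : ℕ := if x < 1 / β then 0 else 1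

lemma digit_le_one (β x : ℝ) : digit β x ≤ 1 := by
  unfold digit; split <;> omega

lemma Fmap_eq_sub_digit (β x : ℝ) : Fmap β x = β * x - digit β x := by
  unfold Fmap digit; split <;> simp

lemma head_eq_digit (h1 : 1 < β) (hε : isSeq ε) (h : piB β ε ∉ switchRegion β) :
    ε 0 = digit β (piB β ε) := by
  have hβ : 0 < β := by linarith
  have hsplit := piB_eq_head_add h1 hε
  obtain ⟨htail0, htail1⟩ := piB_mem_Iset h1 (isSeq_shift hε)
  unfold digit
  rcases Nat.le_one_iff_eq_zero_or_eq_one.1 (hε 0) with h0 | h0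
  · have hle : piB β ε ≤ 1 / (β * (β - 1)) := by
      rw [hsplit, h0, Nat.cast_zero, zero_div, zero_add, mul_comm, ← div_div]
      exact div_le_div_of_nonneg_right htail1 hβ.le
    rw [h0, if_pos]
    by_contra hlt
    exact h ⟨not_lt.1 hlt, hle⟩
  · have hge : 1 / β ≤ piB β ε := by
      rw [hsplit, h0, Nat.cast_one]
      exact le_add_of_nonneg_right (div_nonneg htail0 hβ.le)
    rw [h0, if_neg (not_lt.2 hge)]

lemma piB_shift_eq_Fmap (h1 : 1 < β) (hε : isSeq ε) (h : piB β ε ∉ switchRegion β) :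
    piB β (shift ε) = Fmap β (piB β ε) := by
  have hβ : β ≠ 0 := by positivity
  rw [Fmap_eq_sub_digit, ← head_eq_digit h1 hε h, piB_eq_head_add h1 hε]
  field_simp
  ring

/-- The digits of a point are read off along its `F_β`-orbit. -/
lemma subset_Xset_of_mapsTo (h1 : 1 < β) {A : Set ℝ} (hA : A ⊆ Iset β \ switchRegion β)
    (hF : MapsTo (Fmap β) A A) : A ⊆ Xset β := by
  intro x hx
  have horbit : ∀ n, (Fmap β)^[n] x ∈ Iset β \ switchRegion β := fun n => hA (hF.iterate n hx)
  refine ⟨(horbit 0).1, fun n => digit β ((Fmap β)^[n] x), ⟨fun n => digit_le_one _ _, ?_⟩, ?_⟩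
  · refine piB_eq_of_recursion h1 (fun n => digit_le_one _ _) _ (fun n => (horbit n).1) fun n => ?_
    rw [iterate_succ_apply', Fmap_eq_sub_digit]
    field_simp
    ring
  · rintro ε' ⟨hε', rfl⟩
    have hshift : ∀ n, piB β (shift^[n] ε') = (Fmap β)^[n] (piB β ε') := by
      intro n
      induction n with
      | zero => rfl
      | succ n ih =>
        rw [iterate_succ_apply', iterate_succ_apply', ← ih,
          piB_shift_eq_Fmap h1 (isSeq_shift_iterate hε' n) (ih ▸ (horbit n).2)]
    funext n
    rw [← hshift, ← head_eq_digit h1 (isSeq_shift_iterate hε' n) (hshift n ▸ (horbit n).2),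
      shift_iterate_apply, zero_add]

end BetaExpansions

section IntervalMaps

variable {f : ℝ → ℝ}

/-- Take the first point `v` after `s` where `f v = f t`, then the last point `u` before `v` where
`f u = f s`; by the intermediate value theorem `f` stays in `[f s, f t]` between them. -/
lemma exists_Icc_subset_image_eq_Icc {s t : ℝ} (hst : s ≤ t) (hf : ContinuousOn f (Icc s t))
    (hfst : f s ≤ f t) : ∃ u v, Icc u v ⊆ Icc s t ∧ f '' Icc u v = Icc (f s) (f t) := by
  have hcompact : ∀ {a b : ℝ} (y : ℝ), Icc a b ⊆ Icc s t → IsCompact (Icc a b ∩ f ⁻¹' {y}) :=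
    fun y hab => isCompact_Icc.of_isClosed_subset
      ((hf.mono hab).preimage_isClosed_of_isClosed isClosed_Icc isClosed_singleton)
      inter_subset_left
  obtain ⟨v, ⟨hv, hfv⟩, hvleast⟩ :=
    (hcompact (f t) subset_rfl).exists_isLeast ⟨t, ⟨⟨hst, le_rfl⟩, rfl⟩⟩
  obtain ⟨u, ⟨hu, hfu⟩, hugreatest⟩ :=
    (hcompact (f s) (Icc_subset_Icc_right hv.2)).exists_isGreatest ⟨s, ⟨⟨le_rfl, hv.1⟩, rfl⟩⟩
  have huv : Icc u v ⊆ Icc s t := Icc_subset_Icc hu.1 hv.2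
  refine ⟨u, v, huv, subset_antisymm ?_ ?_⟩
  · rintro _ ⟨x, hx, rfl⟩
    constructor
    · by_contra! hlt
      obtain ⟨y, hy, hfy⟩ := intermediate_value_Icc hx.2 (hf.mono (Icc_subset_Icc (hu.1.trans hx.1)
        hv.2)) ⟨hlt.le, hfv.symm ▸ hfst⟩
      have hyu : y ≤ u := hugreatest ⟨⟨(hu.1.trans hx.1).trans hy.1, hy.2⟩, hfy⟩
      have hxy : x = y := le_antisymm hy.1 (hyu.trans hx.1)
      exact hlt.ne (hxy ▸ hfy)
    · by_contra! hlt
      obtain ⟨y, hy, hfy⟩ := intermediate_value_Icc hx.1 (hf.mono (Icc_subset_Icc hu.1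
        (hx.2.trans hv.2))) ⟨hfu.symm ▸ hfst, hlt.le⟩
      have hvy : v ≤ y := hvleast ⟨⟨hu.1.trans hy.1, hy.2.trans (hx.2.trans hv.2)⟩, hfy⟩
      have hxy : x = y := le_antisymm (hx.2.trans hvy) hy.2
      exact hlt.ne' (hxy ▸ hfy)
  · have h := intermediate_value_Icc hu.2 (hf.mono huv)
    rwa [show f u = f s from hfu, show f v = f t from hfv] at h

lemma exists_Icc_subset_image_eq_of_surjOn {a b p q : ℝ} (hf : ContinuousOn f (Icc a b))
    (hpq : p ≤ q) (hsurj : SurjOn f (Icc a b) (Icc p q)) :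
    ∃ u v, Icc u v ⊆ Icc a b ∧ f '' Icc u v = Icc p q := by
  obtain ⟨s, hs, rfl⟩ := hsurj (left_mem_Icc.2 hpq)
  obtain ⟨t, ht, rfl⟩ := hsurj (right_mem_Icc.2 hpq)
  rcases le_total s t with hst | hts
  · obtain ⟨u, v, huv, himage⟩ :=
      exists_Icc_subset_image_eq_Icc hst (hf.mono (Icc_subset_Icc hs.1 ht.2)) hpq
    exact ⟨u, v, huv.trans (Icc_subset_Icc hs.1 ht.2), himage⟩
  · obtain ⟨u, v, huv, himage⟩ := exists_Icc_subset_image_eq_Icc (f := fun x => -f x) hts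
      (hf.mono (Icc_subset_Icc ht.1 hs.2)).neg (neg_le_neg hpq)
    refine ⟨u, v, huv.trans (Icc_subset_Icc ht.1 hs.2), ?_⟩
    -- the opposite orientation is the first case for `-f`
    have hneg : f '' Icc u v = -((fun x => -f x) '' Icc u v) := by
      rw [← image_neg_eq_neg, image_image]; simp
    rw [hneg, himage, neg_Icc, neg_neg, neg_neg]

lemma exists_Icc_iterate_image_eq (lo hi : ℕ → ℝ) (hle : ∀ j, lo j ≤ hi j)
    (hf : ∀ j, ContinuousOn f (Icc (lo j) (hi j)))
    (hsurj : ∀ j, SurjOn f (Icc (lo j) (hi j)) (Icc (lo (j + 1)) (hi (j + 1)))) (n : ℕ) :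
    ∃ u v, ContinuousOn f^[n] (Icc u v) ∧
      (∀ j ≤ n, MapsTo f^[j] (Icc u v) (Icc (lo j) (hi j))) ∧
      f^[n] '' Icc u v = Icc (lo n) (hi n) := by
  induction n with
  | zero =>
    refine ⟨lo 0, hi 0, continuousOn_id, fun j hj => ?_, image_id _⟩
    rw [Nat.le_zero.1 hj]
    exact mapsTo_id _
  | succ n ih =>
    obtain ⟨u, v, hcont, hmaps, himage⟩ := ih
    have hcont' : ContinuousOn f^[n + 1] (Icc u v) := by
      rw [iterate_succ']
      exact (hf n).comp hcont (hmaps n le_rfl)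
    have hsurj' : SurjOn f^[n + 1] (Icc u v) (Icc (lo (n + 1)) (hi (n + 1))) := by
      rw [iterate_succ', SurjOn, image_comp, himage]
      exact hsurj n
    obtain ⟨u', v', hsub, himage'⟩ :=
      exists_Icc_subset_image_eq_of_surjOn hcont' (hle (n + 1)) hsurj'
    refine ⟨u', v', hcont'.mono hsub, fun j hj => ?_, himage'⟩
    rcases Nat.lt_succ_iff_lt_or_eq.1 (Nat.lt_succ_of_le hj) with hj | rfl
    · exact (hmaps j (Nat.le_of_lt_succ hj)).mono_left hsub
    · exact himage' ▸ mapsTo_image _ _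

lemma exists_isPeriodicPt_of_surjOn (lo hi : ℕ → ℝ) (hle : ∀ j, lo j ≤ hi j)
    (hf : ∀ j, ContinuousOn f (Icc (lo j) (hi j)))
    (hsurj : ∀ j, SurjOn f (Icc (lo j) (hi j)) (Icc (lo (j + 1)) (hi (j + 1))))
    {k : ℕ} (hk : lo k = lo 0 ∧ hi k = hi 0) :
    ∃ x, (∀ j ≤ k, f^[j] x ∈ Icc (lo j) (hi j)) ∧ IsPeriodicPt f k x := by
  obtain ⟨u, v, hcont, hmaps, himage⟩ := exists_Icc_iterate_image_eq lo hi hle hf hsurj k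
  have huv : u ≤ v := nonempty_Icc.1 (image_nonempty.1 (himage ▸ nonempty_Icc.2 (hle k)))
  have hself : SurjOn f^[k] (Icc u v) (Icc u v) := by
    rw [SurjOn, himage, hk.1, hk.2]
    exact hmaps 0 (Nat.zero_le k)
  obtain ⟨x, hx, hfix⟩ := exists_mem_Icc_isFixedPt_of_surjOn hcont huv hself
  exact ⟨x, fun j hj => hmaps j hj hx, hfix⟩

/-- Following the loop `[a, b] → [b, c] → ⋯ → [b, c] → [a, b]` of length `k` gives a point of
period `k`; it cannot return earlier, since it could only do so through the common endpoint `b`,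
which is not mapped into `[b, c]`. -/
theorem exists_minimal_period_of_surjOn {a b c : ℝ} (hab : a ≤ b) (hbc : b ≤ c)
    (hf : ContinuousOn f (Icc a c)) (hK : SurjOn f (Icc a b) (Icc b c))
    (hJ : SurjOn f (Icc b c) (Icc a c)) (hb : f b ∉ Icc b c) {k : ℕ} (hk : 1 ≤ k) :
    ∃ x ∈ Icc a c, f^[k] x = x ∧ ∀ j, 1 ≤ j → j < k → f^[j] x ≠ x := by
  have hKac : Icc a b ⊆ Icc a c := Icc_subset_Icc_right hbc
  have hJac : Icc b c ⊆ Icc a c := Icc_subset_Icc_left hab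
  have hJJ : SurjOn f (Icc b c) (Icc b c) := hJ.mono subset_rfl hJac
  rcases hk.eq_or_lt with rfl | hk2
  · obtain ⟨x, hx, hfix⟩ := exists_mem_Icc_isFixedPt_of_surjOn (hf.mono hJac) hbc hJJ
    exact ⟨x, hJac hx, hfix, fun j hj hjk => absurd hjk (by omega)⟩
  set lo : ℕ → ℝ := fun j => if j % k = 0 then a else b
  set hi : ℕ → ℝ := fun j => if j % k = 0 then b else c
  have hsucc : ∀ j, j % k = 0 → (j + 1) % k ≠ 0 := fun j hj => by
    rw [Nat.add_mod, hj, zero_add, Nat.mod_mod, Nat.mod_eq_of_lt hk2]; exact one_ne_zero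
  have hle : ∀ j, lo j ≤ hi j := fun j => by simp only [lo, hi]; split <;> assumption
  have hcont : ∀ j, ContinuousOn f (Icc (lo j) (hi j)) := fun j => by
    simp only [lo, hi]; split
    exacts [hf.mono hKac, hf.mono hJac]
  have hsurj : ∀ j, SurjOn f (Icc (lo j) (hi j)) (Icc (lo (j + 1)) (hi (j + 1))) := fun j => by
    by_cases hj : j % k = 0
    · simp only [lo, hi, if_pos hj, if_neg (hsucc j hj)]; exact hK
    · simp only [lo, hi, if_neg hj]
      split
      exacts [hJ.mono subset_rfl hKac, hJJ]
  obtain ⟨x, hitin, hper⟩ := exists_isPeriodicPt_of_surjOn lo hi hle hcont hsurj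
    (k := k) (by simp [lo, hi])
  have hinJ : ∀ j, 1 ≤ j → j < k → f^[j] x ∈ Icc b c := fun j hj hjk => by
    simpa [lo, hi, Nat.mod_eq_of_lt hjk, Nat.one_le_iff_ne_zero.1 hj] using hitin j hjk.le
  have hxK : x ∈ Icc a b := by simpa [lo, hi] using hitin 0 (Nat.zero_le k)
  refine ⟨x, hKac hxK, hper, fun j hj hjk hret => hb ?_⟩
  have hxb : x = b := le_antisymm hxK.2 (hret ▸ hinJ j hj hjk).1
  simpa [hxb] using hinJ 1 le_rfl hk2

theorem exists_minimal_period_of_cycle_pattern {a b c d : ℝ} (hab : a ≤ b) (hbc : b ≤ c)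
    (hcd : c < d) (hf : ContinuousOn f (Icc a c)) (ha : f a = b) (hb : f b = d) (hc : f c = a)
    {k : ℕ} (hk : 1 ≤ k) : ∃ x ∈ Icc a c, f^[k] x = x ∧ ∀ j, 1 ≤ j → j < k → f^[j] x ≠ x := by
  have hK : SurjOn f (Icc a b) (Icc b c) := by
    have hivt := intermediate_value_Icc hab (hf.mono (Icc_subset_Icc_right hbc))
    rw [ha, hb] at hivt
    exact (Icc_subset_Icc_right hcd.le).trans hivt
  have hJ : SurjOn f (Icc b c) (Icc a c) := by
    have hivt := intermediate_value_Icc' hbc (hf.mono (Icc_subset_Icc_left hab))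
    rw [hb, hc] at hivt
    exact (Icc_subset_Icc_right hcd.le).trans hivt
  exact exists_minimal_period_of_surjOn hab hbc hf hK hJ (hb ▸ notMem_Icc_of_gt hcd) hk

end IntervalMaps

section FourCycle

variable {β : ℝ}

/-- `π_β((0011)^∞)`, the solution of `β⁴ c - β - 1 = c`. -/
noncomputable def cyclePt (β : ℝ) : ℝ := 1 / ((β - 1) * (β ^ 2 + 1))

lemma cube_gt_of_root_lt {b₄ : ℝ} (hb₄ : 1 < b₄) (hroot : b₄ ^ 3 = 2 * b₄ ^ 2 - b₄ + 1)
    (hβ : b₄ < β) : 2 * β ^ 2 - β + 1 < β ^ 3 := by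
  have hfactor : 0 < (β - b₄) * ((β - 1) ^ 2 + (b₄ - 1) ^ 2 + (β * b₄ - 1)) := by
    apply mul_pos (by linarith)
    nlinarith
  nlinarith

lemma cyclePt_chain (h1 : 1 < β) (h2 : β ≤ 2) (hβ : 2 * β ^ 2 - β + 1 < β ^ 3) :
    0 < cyclePt β ∧ cyclePt β < β * cyclePt β ∧ β * cyclePt β < 1 / β ∧
      1 / β ≤ 1 / (β * (β - 1)) ∧ 1 / (β * (β - 1)) < β ^ 3 * cyclePt β - 1 ∧
      β ^ 3 * cyclePt β - 1 < β ^ 2 * cyclePt β ∧ β ^ 2 * cyclePt β ≤ 1 / (β - 1) := by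
  have hb : 0 < β - 1 := by linarith
  have hD : 0 < (β - 1) * (β ^ 2 + 1) := by positivity
  unfold cyclePt
  refine ⟨by positivity, ?_, ?_, ?_, ?_, ?_, ?_⟩
  · rw [lt_mul_iff_one_lt_left (by positivity)]; exact h1
  · rw [mul_one_div, div_lt_div_iff₀ hD (by linarith)]; nlinarith
  · rw [div_le_div_iff₀ (by positivity) (by positivity)]; nlinarith
  · rw [mul_one_div, lt_sub_iff_add_lt, div_add_one (by positivity),
      div_lt_div_iff₀ (by positivity) hD]
    nlinarith [mul_lt_mul_of_pos_left hβ hb]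
  · rw [mul_one_div, mul_one_div, sub_lt_iff_lt_add, div_lt_iff₀ hD, add_mul,
      div_mul_cancel₀ _ hD.ne']
    nlinarith
  · rw [mul_one_div, div_le_div_iff₀ hD hb]; nlinarith

lemma Fmap_of_lt {x : ℝ} (h : x < 1 / β) : Fmap β x = β * x := if_pos h

lemma Fmap_of_ge {x : ℝ} (h : 1 / β ≤ x) : Fmap β x = β * x - 1 := if_neg (not_lt.2 h)

lemma Fmap_cyclePt (h1 : 1 < β) (h2 : β ≤ 2) (hβ : 2 * β ^ 2 - β + 1 < β ^ 3) :
    Fmap β (cyclePt β) = β * cyclePt β ∧ Fmap β (β * cyclePt β) = β ^ 2 * cyclePt β ∧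
      Fmap β (β ^ 2 * cyclePt β) = β ^ 3 * cyclePt β - 1 ∧
      Fmap β (β ^ 3 * cyclePt β - 1) = cyclePt β := by
  obtain ⟨hc0, hc01, hc1, hsw, hc3, hc32, -⟩ := cyclePt_chain h1 h2 hβ
  refine ⟨Fmap_of_lt (by linarith), by rw [Fmap_of_lt hc1]; ring, by
    rw [Fmap_of_ge (by linarith)]; ring, ?_⟩
  rw [Fmap_of_ge (by linarith), cyclePt]
  have hb : β - 1 ≠ 0 := by linarith
  have hq : β ^ 2 + 1 ≠ 0 := by positivity
  field_simp
  ring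

lemma cyclePt_orbit_subset_Xset (h1 : 1 < β) (h2 : β ≤ 2) (hβ : 2 * β ^ 2 - β + 1 < β ^ 3) :
    {cyclePt β, β * cyclePt β, β ^ 2 * cyclePt β, β ^ 3 * cyclePt β - 1} ⊆ Xset β := by
  obtain ⟨hc0, hc01, hc1, hsw, hc3, hc32, hc2⟩ := cyclePt_chain h1 h2 hβ
  obtain ⟨hF0, hF1, hF2, hF3⟩ := Fmap_cyclePt h1 h2 hβ
  refine subset_Xset_of_mapsTo h1 ?_ ?_
  · rintro x (rfl | rfl | rfl | rfl) <;> refine ⟨⟨by linarith, by linarith⟩, ?_⟩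
    exacts [notMem_Icc_of_lt (by linarith), notMem_Icc_of_lt hc1,
      notMem_Icc_of_gt (by linarith), notMem_Icc_of_gt hc3]
  · rintro x (rfl | rfl | rfl | rfl) <;> simp [hF0, hF1, hF2, hF3]

end FourCycle

theorem stmt17_general (b4 β : ℝ) (hb4 : b4 ∈ Set.Ioo (1 : ℝ) 2)
    (hroot : b4 ^ 3 = 2 * b4 ^ 2 - b4 + 1) (hβ : β ∈ Set.Ioo b4 2)
    (S : ℝ → ℝ) (hcont : ContinuousOn S (Iset β))
    (hext : ∀ x ∈ Xset β, S x = Fmap β x) :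
    ∀ k : ℕ, 1 ≤ k → ∃ x ∈ Iset β, S^[k] x = x ∧ ∀ j, 1 ≤ j → j < k → S^[j] x ≠ x := by
  intro k hk
  obtain ⟨hb4β, hβ2⟩ := hβ
  have h1 : 1 < β := hb4.1.trans hb4β
  have hcube := cube_gt_of_root_lt hb4.1 hroot hb4β
  obtain ⟨hc0, hc01, hc1, hsw, hc3, hc32, hc2⟩ := cyclePt_chain h1 hβ2.le hcube
  obtain ⟨hF0, hF1, -, hF3⟩ := Fmap_cyclePt h1 hβ2.le hcube
  have hX := cyclePt_orbit_subset_Xset h1 hβ2.le hcube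
  have hS0 := (hext _ (hX (by simp))).trans hF0
  have hS1 := (hext _ (hX (by simp))).trans hF1
  have hS3 := (hext _ (hX (by simp))).trans hF3
  set c := cyclePt β
  have hsub : Icc c (β ^ 3 * c - 1) ⊆ Iset β := Icc_subset_Icc hc0.le (by linarith)
  obtain ⟨x, hx, hper⟩ := exists_minimal_period_of_cycle_pattern hc01.le (by linarith) hc32
    (hcont.mono hsub) hS0 hS1 hS3 hk
  exact ⟨x, hsub hx, hper⟩

/-- If β > β_4 (the root of x³ = 2x² - x + 1 in (1,2)), then any continuous
self-map S of I_β extending F_β and monotone on [0, 1/β] has a point of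
smallest period k for every k ≥ 1. -/
theorem stmt17 (b4 β : ℝ) (hb4 : b4 ∈ Set.Ioo (1 : ℝ) 2)
    (hroot : b4 ^ 3 = 2 * b4 ^ 2 - b4 + 1) (hβ : β ∈ Set.Ioo b4 2)
    (S : ℝ → ℝ) (hcont : ContinuousOn S (Iset β))
    (hmaps : Set.MapsTo S (Iset β) (Iset β))
    (hext : ∀ x ∈ Xset β, S x = Fmap β x)
    (hmono : MonotoneOn S (Set.Icc 0 (1 / β)) ∨ AntitoneOn S (Set.Icc 0 (1 / β))) :
    ∀ k : ℕ, 1 ≤ k → ∃ x ∈ Iset β, S^[k] x = x ∧ ∀ j, 1 ≤ j → j < k → S^[j] x ≠ x :=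
  stmt17_general b4 β hb4 hroot hβ S hcont hext
end
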